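/- arXiv:1001.3838 — 6 statements merged into one kernel-verified Lean document; each statement's English description precedes it below -/
import Mathlib

section
/- If Y = (Y₁,…,Y_r) ∈ ℂʳ satisfies |Y_i| < C for every i, then Σ_{β ∈ ℕʳ∖{0}} |γ(β)|·|Y₁^{β₁}⋯Y_r^{β_r}| < ∞, every factor 1 − Y₁^{β₁}⋯Y_r^{β_r} is nonzero, the infinite product ∏_{β ∈ ℕʳ∖{0}} (1 − Y₁^{β₁}⋯Y_r^{β_r})^{γ(β)} converges absolutely, and it equals 1 + a₁Y₁ + ⋯ + a_rY_r. -/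
open Finset Filter Complex Topology


/-- norm bound for `exp u - 1`. -/
lemma norm_cexp_sub_one_le (u : ℂ) : ‖Complex.exp u - 1‖ ≤ ‖u‖ * Real.exp ‖u‖ := by
  have hsC : Summable (fun n : ℕ => u ^ n / n.factorial) := by
    simpa using NormedSpace.expSeries_div_summable u
  have hexp : Complex.exp u = ∑' n : ℕ, u ^ n / n.factorial := by
    rw [Complex.exp_eq_exp_ℂ, NormedSpace.exp_eq_tsum_div]
  have hshift : Complex.exp u - 1 = ∑' n : ℕ, u ^ (n + 1) / (n + 1).factorial := by
    rw [hexp, Summable.tsum_eq_zero_add hsC]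
    simp
  rw [hshift]
  have hsR : Summable (fun n : ℕ => ‖u‖ ^ n / n.factorial) := by
    simpa using NormedSpace.expSeries_div_summable ‖u‖
  have hsR' : Summable (fun n : ℕ => ‖u‖ * (‖u‖ ^ n / n.factorial)) := hsR.mul_left _
  calc ‖∑' n : ℕ, u ^ (n + 1) / (n + 1).factorial‖
      ≤ ∑' n : ℕ, ‖u ^ (n + 1) / (n + 1).factorial‖ := by
        apply norm_tsum_le_tsum_norm
        apply Summable.of_nonneg_of_le (fun n => norm_nonneg _)
          (fun n => ?_) hsR'
        rw [norm_div, norm_pow, pow_succ]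
        have h1 : (0:ℝ) ≤ ‖u‖ ^ n * ‖u‖ := by positivity
        rw [Complex.norm_natCast]
        calc ‖u‖ ^ n * ‖u‖ / ((n+1).factorial : ℝ)
            ≤ ‖u‖ ^ n * ‖u‖ / (n.factorial : ℝ) := by
              apply div_le_div_of_nonneg_left h1 (by positivity)
              exact_mod_cast Nat.factorial_le (Nat.le_succ n)
          _ = ‖u‖ * (‖u‖ ^ n / n.factorial) := by ring
    _ ≤ ∑' n : ℕ, ‖u‖ * (‖u‖ ^ n / n.factorial) := by
        apply Summable.tsum_le_tsum _ _ hsR'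
        · intro n
          rw [norm_div, norm_pow, Complex.norm_natCast, pow_succ]
          calc ‖u‖ ^ n * ‖u‖ / ((n+1).factorial : ℝ)
              ≤ ‖u‖ ^ n * ‖u‖ / (n.factorial : ℝ) := by
                apply div_le_div_of_nonneg_left (by positivity) (by positivity)
                exact_mod_cast Nat.factorial_le (Nat.le_succ n)
            _ = ‖u‖ * (‖u‖ ^ n / n.factorial) := by ring
        · apply Summable.of_nonneg_of_le (fun n => norm_nonneg _) (fun n => ?_) hsR'
          rw [norm_div, norm_pow, Complex.norm_natCast, pow_succ]
          calc ‖u‖ ^ n * ‖u‖ / ((n+1).factorial : ℝ)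
              ≤ ‖u‖ ^ n * ‖u‖ / (n.factorial : ℝ) := by
                apply div_le_div_of_nonneg_left (by positivity) (by positivity)
                exact_mod_cast Nat.factorial_le (Nat.le_succ n)
            _ = ‖u‖ * (‖u‖ ^ n / n.factorial) := by ring
    _ = ‖u‖ * ∑' n : ℕ, ‖u‖ ^ n / n.factorial := tsum_mul_left
    _ = ‖u‖ * Real.exp ‖u‖ := by
        rw [Real.exp_eq_exp_ℝ, NormedSpace.exp_eq_tsum_div]


lemma hasSum_eq_of_tendsto {ι : Type*} {M : Type*} [AddCommGroup M] [TopologicalSpace M]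
    [IsTopologicalAddGroup M] [T2Space M] {f : ι → M} {a S : M} (hf : HasSum f a)
    {T : ℕ → Finset ι} (hmono : Monotone T) (hmem : ∀ i, f i ≠ 0 → ∃ N, i ∈ T N)
    (hlim : Filter.Tendsto (fun N => ∑ i ∈ T N, f i) atTop (𝓝 S)) : a = S := by
  classical
  set u : Set ι := ⋃ N, ↑(T N) with hu
  have hsupp : Function.support f ⊆ u := by
    intro i hi
    obtain ⟨N, hN⟩ := hmem i hi
    exact Set.mem_iUnion.2 ⟨N, hN⟩
  have h1 : HasSum (f ∘ Subtype.val : u → M) a :=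
    (hasSum_subtype_iff_of_support_subset hsupp).2 hf
  have hinj : ∀ N : ℕ, Set.InjOn (Subtype.val : u → ι) (Subtype.val ⁻¹' ↑(T N)) :=
    fun N => Subtype.val_injective.injOn
  set T' : ℕ → Finset u := fun N => (T N).preimage Subtype.val (hinj N) with hT'
  have hmono' : Monotone T' := by
    intro N M hNM
    intro x hx
    rw [Finset.mem_preimage] at hx ⊢
    exact hmono hNM hx
  have hten : Filter.Tendsto T' atTop atTop := by
    apply Filter.tendsto_atTop_finset_of_monotone hmono'
    rintro ⟨x, hx⟩
    obtain ⟨s, ⟨N, rfl⟩, hxs⟩ := hx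
    exact ⟨N, Finset.mem_preimage.2 hxs⟩
  have h2 : Filter.Tendsto (fun N => ∑ i ∈ T' N, f i.1) atTop (𝓝 a) := h1.comp hten
  have heq : ∀ N, ∑ i ∈ T' N, f i.1 = ∑ i ∈ T N, f i := by
    intro N
    apply Finset.sum_preimage
    intro x hx hxr
    exfalso
    exact hxr ⟨⟨x, Set.mem_iUnion.2 ⟨N, hx⟩⟩, rfl⟩
  rw [funext heq] at h2
  exact tendsto_nhds_unique h2 hlim

lemma hasSum_fiber_finset {ι κ M : Type*} [AddCommMonoid M] [TopologicalSpace M]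
    (G : ι → κ) (f : ι → M) (y : κ) (F : Finset ι)
    (hF : ∀ i ∈ F, G i = y) (hsupp : ∀ i, G i = y → f i ≠ 0 → i ∈ F) :
    HasSum (fun i : {i // G i = y} => f i.1) (∑ i ∈ F, f i) := by
  classical
  have hz : ∀ b : {i // G i = y}, b ∉ F.subtype (fun i => G i = y) → f b.1 = 0 := by
    intro b hb
    by_contra hfb
    exact hb (Finset.mem_subtype.2 (hsupp b.1 b.2 hfb))
  have h : HasSum (fun b : {i // G i = y} => f b.1) _ := hasSum_sum_of_ne_finset_zero hz
  have hval : ∑ b ∈ F.subtype (fun i => G i = y), f b.1 = ∑ i ∈ F, f i := by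
    rw [Finset.sum_subtype_eq_sum_filter]
    exact Finset.sum_filter_of_ne (fun x hx _ => hF x hx)
  rwa [hval] at h

lemma hasSum_fiberwise' {ι κ E : Type*} [AddCommMonoid E] [TopologicalSpace E]
    [ContinuousAdd E] [RegularSpace E]
    (G : ι → κ) {f : ι → E} {a : E} (hf : HasSum f a) {g : κ → E}
    (hg : ∀ y, HasSum (fun i : {i // G i = y} => f i.1) (g y)) : HasSum g a :=
  HasSum.sigma ((Equiv.sigmaFiberEquiv G).hasSum_iff.2 hf) hg

lemma multinomial_sum_div {K : Type*} [Field K] [CharZero K] (r : ℕ) (x : Fin r → K)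
    {n : ℕ} (hn : 1 ≤ n) :
    ∑ b ∈ Finset.piAntidiag (univ : Finset (Fin r)) n,
      (((n-1).factorial : K) / (∏ j, ((b j).factorial : K))) * ∏ j, x j ^ b j
      = (∑ j, x j) ^ n / n := by
  rw [Finset.sum_pow_eq_sum_piAntidiag, Finset.sum_div]
  refine Finset.sum_congr rfl fun b hb => ?_
  have hsum : ∑ j, b j = n := (Finset.mem_piAntidiag.1 hb).1
  have hne : (∏ j, ((b j).factorial : K)) ≠ 0 := by
    apply Finset.prod_ne_zero_iff.2
    intro j _
    exact_mod_cast (Nat.factorial_pos (b j)).ne'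
  have hmult : (Nat.multinomial univ b : K) * (∏ j, ((b j).factorial : K)) = (n.factorial : K) := by
    have := Nat.multinomial_spec univ b
    rw [hsum] at this
    push_cast [← this]
    ring
  have hfac : (n.factorial : K) = (n : K) * ((n-1).factorial : K) := by
    rw [← Nat.mul_factorial_pred (Nat.one_le_iff_ne_zero.1 hn)]
    push_cast
    ring
  have hn0 : (n : K) ≠ 0 := by exact_mod_cast Nat.one_le_iff_ne_zero.1 hn
  field_simp
  have h2 : ((Nat.multinomial univ b : K) * ∏ i, x i ^ b i) * ∏ j, ((b j).factorial : K)
      = (n.factorial : K) * ∏ i, x i ^ b i := by rw [← hmult]; ring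
  linear_combination (∏ j, x j ^ b j) * (hfac.symm.trans hmult.symm)

lemma sum_moebius_divAnti (n : ℕ) :
    ∑ p ∈ n.divisorsAntidiagonal, (ArithmeticFunction.moebius p.1 : ℤ)
      = if n = 1 then 1 else 0 := by
  have h := congrArg (fun f : ArithmeticFunction ℤ => f n)
    ArithmeticFunction.moebius_mul_coe_zeta
  simp only [ArithmeticFunction.mul_apply, ArithmeticFunction.one_apply] at h
  rw [← h]
  refine Finset.sum_congr rfl fun p hp => ?_
  rw [Nat.mem_divisorsAntidiagonal] at hp
  have h2 : p.2 ≠ 0 := by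
    rintro h0
    rw [h0, mul_zero] at hp
    exact hp.2 hp.1.symm
  simp [ArithmeticFunction.natCoe_apply, ArithmeticFunction.zeta_apply, h2]

lemma fiber_hasSum {r : ℕ} {M : Type*} [AddCommMonoid M] [TopologicalSpace M]
    (W : (Fin r → ℕ) × ℕ × ℕ → M)
    (hW : ∀ b m k, (b = 0 ∨ m = 0 ∨ k = 0) → W (b, m, k) = 0)
    (β : Fin r → ℕ) (k : ℕ) :
    HasSum (fun i : {i : (Fin r → ℕ) × ℕ × ℕ //
        (fun i : (Fin r → ℕ) × ℕ × ℕ => ((fun j => i.2.1 * i.1 j : Fin r → ℕ), i.2.2)) i = (β, k)}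
        => W i.1)
      (∑ m ∈ (Finset.Icc 1 (∑ j, β j)).filter (fun m => ∀ j, m ∣ β j),
        W ((fun j => β j / m : Fin r → ℕ), m, k)) := by
  classical
  set Dy := (Finset.Icc 1 (∑ j, β j)).filter (fun m => ∀ j, m ∣ β j) with hDy
  have hinj : ∀ x ∈ Dy, ∀ x' ∈ Dy,
      (((fun j => β j / x : Fin r → ℕ), x, k) : (Fin r → ℕ) × ℕ × ℕ)
        = ((fun j => β j / x' : Fin r → ℕ), x', k) → x = x' := by
    intro x _ x' _ h
    simpa using congrArg (fun p : (Fin r → ℕ) × ℕ × ℕ => p.2.1) h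
  have key := hasSum_fiber_finset
    (G := fun i : (Fin r → ℕ) × ℕ × ℕ => ((fun j => i.2.1 * i.1 j : Fin r → ℕ), i.2.2))
    (f := W) (y := (β, k))
    (F := Dy.image (fun m => (((fun j => β j / m : Fin r → ℕ), m, k) : (Fin r → ℕ) × ℕ × ℕ)))
    ?_ ?_
  · rwa [Finset.sum_image hinj] at key
  · -- all elements of F are in the fiber
    intro i hi
    rw [Finset.mem_image] at hi
    obtain ⟨m, hm, rfl⟩ := hi
    rw [hDy, Finset.mem_filter, Finset.mem_Icc] at hm
    simp only
    have h1 : (fun j => m * (β j / m)) = β :=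
      funext fun j => Nat.mul_div_cancel' (hm.2 j)
    rw [h1]
  · -- support is inside F
    rintro ⟨b, m, k'⟩ hG hne
    have hj : ¬(b = 0 ∨ m = 0 ∨ k' = 0) := fun h => hne (hW b m k' h)
    push_neg at hj
    obtain ⟨hb, hm, hk'⟩ := hj
    simp only [Prod.mk.injEq] at hG
    obtain ⟨hβ, hkk⟩ := hG
    obtain ⟨j₁, hj₁⟩ : ∃ j, b j ≠ 0 := by
      by_contra h
      push_neg at h
      exact hb (funext h)
    have hmem : m ∈ Dy := by
      rw [hDy, Finset.mem_filter, Finset.mem_Icc]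
      refine ⟨⟨Nat.one_le_iff_ne_zero.2 hm, ?_⟩, fun j => ?_⟩
      · calc m ≤ m * b j₁ := Nat.le_mul_of_pos_right m (Nat.pos_of_ne_zero hj₁)
          _ = β j₁ := by rw [← hβ]
          _ ≤ ∑ j, β j :=
            Finset.single_le_sum (f := fun j => β j) (fun i _ => Nat.zero_le _)
              (Finset.mem_univ j₁)
      · rw [← hβ]
        exact dvd_mul_right m (b j)
    rw [Finset.mem_image]
    refine ⟨m, hmem, ?_⟩
    have h2 : (fun j => β j / m) = b := by
      funext j
      rw [← hβ]
      exact Nat.mul_div_cancel_left (b j) (Nat.pos_of_ne_zero hm)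
    rw [h2, hkk]

/-- `γ(β)`. -/
noncomputable def gammaCoef (r : ℕ) (a : Fin r → ℤ) (β : Fin r → ℕ) : ℚ :=
  ∑ m ∈ (Finset.Icc 1 (∑ j, β j)).filter (fun m => ∀ j, m ∣ β j),
    (-1 : ℚ) ^ (∑ j, β j / m) * ((ArithmeticFunction.moebius m : ℤ) : ℚ) / (m : ℚ) *
      (((∑ j, β j / m) - 1).factorial : ℚ) / ((∏ j, (β j / m).factorial : ℕ) : ℚ) *
      ∏ j, (a j : ℚ) ^ (β j / m)

set_option maxHeartbeats 2000000 in
/-- if `|Y_i| < C = 1/(|a₁|+⋯+|a_r|)` for every `i`, then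
`Σ_{β ∈ ℕʳ∖{0}} |γ(β)|·|Y^β| < ∞`, every factor `1 − Y^β` is nonzero, the product
`∏_{β ∈ ℕʳ∖{0}} (1 − Y^β)^{γ(β)}` converges absolutely, and it equals
`1 + a₁Y₁ + ⋯ + a_rY_r`. -/
theorem stmt_4 (r : ℕ) (hr : 1 ≤ r) (a : Fin r → ℤ)
    (γint : (Fin r → ℕ) → ℤ)
    (hγ : ∀ β : Fin r → ℕ, (γint β : ℚ) = gammaCoef r a β)
    (Y : Fin r → ℂ) (hY : ∀ i, ‖Y i‖ < (∑ j, |(a j : ℝ)|)⁻¹) :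
    Summable (fun β : {β : Fin r → ℕ // β ≠ 0} =>
      ((|gammaCoef r a β.1| : ℚ) : ℝ) * ‖∏ j, Y j ^ β.1 j‖) ∧
    (∀ β : Fin r → ℕ, β ≠ 0 → (1 : ℂ) - ∏ j, Y j ^ β j ≠ 0) ∧
    Summable (fun β : {β : Fin r → ℕ // β ≠ 0} =>
      ‖((1 : ℂ) - ∏ j, Y j ^ β.1 j) ^ (γint β.1) - 1‖) ∧
    ∏' β : {β : Fin r → ℕ // β ≠ 0}, ((1 : ℂ) - ∏ j, Y j ^ β.1 j) ^ (γint β.1)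
      = 1 + ∑ j, (a j : ℂ) * Y j := by
  classical
  set P : (Fin r → ℕ) → ℂ := fun b => ∏ j, Y j ^ b j with hP
  have hPa : ∀ b, P b = ∏ j, Y j ^ b j := fun b => by rw [hP]
  set c : (Fin r → ℕ) → ℚ := fun b =>
    (-1 : ℚ) ^ (∑ j, b j) * (((∑ j, b j) - 1).factorial : ℚ)
      / ((∏ j, (b j).factorial : ℕ) : ℚ) * ∏ j, (a j : ℚ) ^ (b j) with hc
  set D : (Fin r → ℕ) → Finset ℕ :=
    fun β => (Finset.Icc 1 (∑ j, β j)).filter (fun m => ∀ j, m ∣ β j) with hD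
  have hfin0 : (Finset.univ : Finset (Fin r)).Nonempty := ⟨⟨0, hr⟩, Finset.mem_univ _⟩
  obtain ⟨j₀, hj₀⟩ : ∃ j, a j ≠ 0 := by
    by_contra h
    push_neg at h
    have hA0 : (∑ j, |(a j : ℝ)|) = 0 := by simp [h]
    have := hY ⟨0, hr⟩
    rw [hA0, inv_zero] at this
    exact absurd this (not_lt.2 (norm_nonneg _))
  have hA1 : (1:ℝ) ≤ ∑ j, |(a j : ℝ)| := by
    have h1 : (1:ℝ) ≤ |(a j₀ : ℝ)| := by
      have := Int.one_le_abs hj₀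
      calc (1:ℝ) ≤ ((|a j₀| : ℤ) : ℝ) := by exact_mod_cast this
        _ = |(a j₀ : ℝ)| := by push_cast; ring
    exact le_trans h1 (Finset.single_le_sum (f := fun j => |(a j : ℝ)|) (fun i _ => abs_nonneg _) (Finset.mem_univ j₀))
  have hYlt1 : ∀ i, ‖Y i‖ < 1 := fun i =>
    lt_of_lt_of_le (hY i) (inv_le_one_of_one_le₀ hA1)
  set q : ℝ := Finset.univ.sup' hfin0 (fun j => ‖Y j‖) with hq
  have hqj : ∀ j, ‖Y j‖ ≤ q := fun j => Finset.le_sup' (f := fun j => ‖Y j‖) (Finset.mem_univ j)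
  have hq0 : 0 ≤ q := le_trans (norm_nonneg (Y j₀)) (hqj j₀)
  have hq1 : q < 1 := (Finset.sup'_lt_iff hfin0).2 fun j _ => hYlt1 j
  set t : ℝ := ∑ j, |(a j : ℝ)| * ‖Y j‖ with ht
  have ht0 : 0 ≤ t := Finset.sum_nonneg fun j _ => mul_nonneg (abs_nonneg _) (norm_nonneg _)
  have ht1 : t < 1 := by
    have hstep : t < ∑ j, |(a j : ℝ)| * (∑ j, |(a j : ℝ)|)⁻¹ := by
      apply Finset.sum_lt_sum
      · exact fun j _ => mul_le_mul_of_nonneg_left (hY j).le (abs_nonneg _)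
      · refine ⟨j₀, Finset.mem_univ _, ?_⟩
        apply mul_lt_mul_of_pos_left (hY j₀)
        rw [abs_pos]
        exact_mod_cast hj₀
    calc t < ∑ j, |(a j : ℝ)| * (∑ j, |(a j : ℝ)|)⁻¹ := hstep
      _ = (∑ j, |(a j : ℝ)|) * (∑ j, |(a j : ℝ)|)⁻¹ := by rw [← Finset.sum_mul]
      _ = 1 := mul_inv_cancel₀ (by linarith)
  set w : ℂ := ∑ j, (a j : ℂ) * Y j with hw
  have hwt : ‖w‖ ≤ t := by
    calc ‖w‖ ≤ ∑ j, ‖(a j : ℂ) * Y j‖ := norm_sum_le _ _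
      _ = t := by
        refine Finset.sum_congr rfl fun j _ => ?_
        rw [norm_mul]
        congr 1
        have h1 : ((a j : ℤ) : ℂ) = (((a j : ℝ)) : ℂ) := by push_cast; ring
        rw [h1, Complex.norm_real, Real.norm_eq_abs]
  have hw1 : ‖w‖ < 1 := lt_of_le_of_lt hwt ht1
  have h1w : (1 : ℂ) + w ≠ 0 := by
    intro h
    have hwm : w = -1 := by linear_combination h
    rw [hwm] at hw1
    simp at hw1
  have hNP : ∀ b, ‖P b‖ = ∏ j, ‖Y j‖ ^ b j := by
    intro b
    rw [hP]
    simp [norm_prod, norm_pow]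
  have hsum1 : ∀ b : Fin r → ℕ, b ≠ 0 → 1 ≤ ∑ j, b j := by
    intro b hb
    obtain ⟨j, hj⟩ : ∃ j, b j ≠ 0 := by
      by_contra h
      push_neg at h
      exact hb (funext h)
    calc 1 ≤ b j := Nat.one_le_iff_ne_zero.2 hj
      _ ≤ ∑ j, b j := Finset.single_le_sum (fun i _ => Nat.zero_le _) (Finset.mem_univ j)
  have hPq : ∀ b : Fin r → ℕ, ‖P b‖ ≤ q ^ (∑ j, b j) := by
    intro b
    rw [hNP, ← Finset.prod_pow_eq_pow_sum]
    exact Finset.prod_le_prod (fun j _ => by positivity)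
      (fun j _ => pow_le_pow_left₀ (norm_nonneg _) (hqj j) _)
  have hPble : ∀ b : Fin r → ℕ, b ≠ 0 → ‖P b‖ ≤ q := by
    intro b hb
    calc ‖P b‖ ≤ q ^ (∑ j, b j) := hPq b
      _ ≤ q ^ 1 := pow_le_pow_of_le_one hq0 hq1.le (hsum1 b hb)
      _ = q := pow_one q
  have hPlt : ∀ b : Fin r → ℕ, b ≠ 0 → ‖P b‖ < 1 := fun b hb =>
    lt_of_le_of_lt (hPble b hb) hq1
  have part2 : ∀ β : Fin r → ℕ, β ≠ 0 → (1 : ℂ) - P β ≠ 0 := by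
    intro β hβ h
    have h1 : P β = 1 := by linear_combination -h
    have := hPlt β hβ
    rw [h1] at this
    simp at this

  -- γint 0 = 0
  have hγ0 : γint 0 = 0 := by
    have h0 : gammaCoef r a (0 : Fin r → ℕ) = 0 := by
      unfold gammaCoef
      have : (∑ j, (0 : Fin r → ℕ) j) = 0 := by simp
      rw [this]
      simp
    have h1 := hγ 0
    rw [h0] at h1
    exact_mod_cast h1
  -- decomposition of gammaCoef
  have hγdec : ∀ β : Fin r → ℕ, gammaCoef r a β
      = ∑ m ∈ D β, ((ArithmeticFunction.moebius m : ℤ) : ℚ) / m * c (fun j => β j / m) := by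
    intro β
    unfold gammaCoef
    rw [hD]
    refine Finset.sum_congr rfl fun m hm => ?_
    simp only [hc]
    ring
  -- norm of c
  have hcabs : ∀ b : Fin r → ℕ, ‖((c b : ℚ) : ℂ)‖
      = ((((∑ j, b j) - 1).factorial : ℝ) / ((∏ j, (b j).factorial : ℕ) : ℝ))
        * ∏ j, |(a j : ℝ)| ^ b j := by
    intro b
    have hcR : ((c b : ℚ) : ℝ) = (-1 : ℝ) ^ (∑ j, b j) * (((∑ j, b j) - 1).factorial : ℝ)
        / ((∏ j, (b j).factorial : ℕ) : ℝ) * ∏ j, (a j : ℝ) ^ b j := by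
      rw [hc]; push_cast; ring
    rw [Complex.norm_ratCast, hcR, abs_mul, abs_div, abs_mul, _root_.abs_pow, _root_.abs_neg,
      _root_.abs_one, one_pow, one_mul, Finset.abs_prod]
    rw [_root_.abs_of_nonneg (show (0:ℝ) ≤ (((∑ j, b j) - 1).factorial : ℝ) by positivity),
      _root_.abs_of_nonneg (show (0:ℝ) ≤ ((∏ j, (b j).factorial : ℕ) : ℝ) by positivity)]
    congr 1
    exact Finset.prod_congr rfl fun j _ => by rw [_root_.abs_pow]
  -- per-degree bound
  have hCn : ∀ n : ℕ, 1 ≤ n → ∑ b ∈ Finset.piAntidiag (univ : Finset (Fin r)) n,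
      ‖((c b : ℚ) : ℂ)‖ * ‖P b‖ ≤ t ^ n := by
    intro n hn
    have key := multinomial_sum_div (K := ℝ) r (fun j => |(a j : ℝ)| * ‖Y j‖) hn
    have heq : ∑ b ∈ Finset.piAntidiag (univ : Finset (Fin r)) n, ‖((c b : ℚ):ℂ)‖ * ‖P b‖
        = ∑ b ∈ Finset.piAntidiag (univ : Finset (Fin r)) n,
            (((n-1).factorial : ℝ) / (∏ j, ((b j).factorial : ℝ)))
            * ∏ j, (|(a j : ℝ)| * ‖Y j‖) ^ b j := by
      refine Finset.sum_congr rfl fun b hb => ?_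
      have hsb : ∑ j, b j = n := (Finset.mem_piAntidiag.1 hb).1
      rw [hcabs b, hNP b, hsb]
      simp only [mul_pow, Finset.prod_mul_distrib]
      push_cast
      ring
    rw [heq, key, ← ht]
    apply div_le_self (pow_nonneg ht0 n)
    exact_mod_cast hn
  -- the basic summable majorant
  set EE : (Fin r → ℕ) → ℝ := fun b => if b = 0 then 0 else ‖((c b : ℚ) : ℂ)‖ * ‖P b‖ with hEE
  have hEE0 : ∀ b, 0 ≤ EE b := by
    intro b
    rw [hEE]
    dsimp only
    split
    · exact le_refl 0
    · positivity
  set TT : ℕ → Finset (Fin r → ℕ) :=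
    fun N => (Finset.range (N+1)).biUnion (fun n => Finset.piAntidiag univ n) with hTT
  have hTTdisj : ∀ N : ℕ, (↑(Finset.range (N+1)) : Set ℕ).PairwiseDisjoint
      (fun n => Finset.piAntidiag (univ : Finset (Fin r)) n) := by
    intro N n₁ _ n₂ _ hne
    apply Finset.disjoint_left.2
    intro b hb1 hb2
    exact hne ((Finset.mem_piAntidiag.1 hb1).1.symm.trans (Finset.mem_piAntidiag.1 hb2).1)
  have hmemTT : ∀ (b : Fin r → ℕ) (N : ℕ), (∑ j, b j) ≤ N → b ∈ TT N := by
    intro b N hN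
    rw [hTT]
    apply Finset.mem_biUnion.2
    exact ⟨∑ j, b j, Finset.mem_range.2 (Nat.lt_succ_of_le hN),
      Finset.mem_piAntidiag.2 ⟨rfl, fun i _ => Finset.mem_univ i⟩⟩
  have hinnerEE : ∀ n : ℕ, ∑ b ∈ Finset.piAntidiag (univ : Finset (Fin r)) n, EE b ≤ t ^ n := by
    intro n
    rcases Nat.eq_zero_or_pos n with rfl | hn
    · rw [Finset.piAntidiag_zero, Finset.sum_singleton]
      rw [hEE]
      simp
    · have heq : ∑ b ∈ Finset.piAntidiag (univ : Finset (Fin r)) n, EE b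
          = ∑ b ∈ Finset.piAntidiag (univ : Finset (Fin r)) n, ‖((c b : ℚ):ℂ)‖ * ‖P b‖ := by
        refine Finset.sum_congr rfl fun b hb => ?_
        have hsb := (Finset.mem_piAntidiag.1 hb).1
        have hb0 : b ≠ 0 := by
          intro h
          rw [h] at hsb
          simp at hsb
          omega
        rw [hEE]
        simp only
        rw [if_neg hb0]
      rw [heq]
      exact hCn n hn
  have hsumEE : Summable EE := by
    apply summable_of_sum_le (c := (1-t)⁻¹) (fun b => hEE0 b)
    intro u
    set N := u.sup (fun b => ∑ j, b j) with hN
    calc ∑ b ∈ u, EE b ≤ ∑ b ∈ TT N, EE b := by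
          apply Finset.sum_le_sum_of_subset_of_nonneg
          · intro b hb
            exact hmemTT b N (Finset.le_sup (f := fun b => ∑ j, b j) hb)
          · intro i _ _
            exact hEE0 i
      _ = ∑ n ∈ Finset.range (N+1), ∑ b ∈ Finset.piAntidiag (univ : Finset (Fin r)) n, EE b := by
          rw [hTT]
          exact Finset.sum_biUnion (hTTdisj N)
      _ ≤ ∑ n ∈ Finset.range (N+1), t ^ n := Finset.sum_le_sum fun n _ => hinnerEE n
      _ ≤ ∑' n : ℕ, t ^ n := Summable.sum_le_tsum _ (fun n _ => pow_nonneg ht0 n)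
          (summable_geometric_of_lt_one ht0 ht1)
      _ = (1-t)⁻¹ := tsum_geometric_of_lt_one ht0 ht1
  -- the master triple family
  set Φ : (Fin r → ℕ) × ℕ × ℕ → ℂ := fun i =>
    if i.1 = 0 ∨ i.2.1 = 0 ∨ i.2.2 = 0 then 0 else
      ((ArithmeticFunction.moebius i.2.1 : ℤ) : ℂ) / ((i.2.1 : ℂ) * (i.2.2 : ℂ))
        * ((c i.1 : ℚ) : ℂ) * ∏ j, Y j ^ (i.2.1 * i.2.2 * i.1 j) with hΦ
  have hΦjunk : ∀ b m k, (b = 0 ∨ m = 0 ∨ k = 0) → Φ (b, m, k) = 0 := by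
    intro b m k h
    rw [hΦ]
    exact if_pos h
  set gq : ℕ → ℝ := fun n => if n = 0 then 0 else q ^ (n - 1) with hgq
  have hgq0 : ∀ n, 0 ≤ gq n := by
    intro n
    rw [hgq]
    dsimp only
    split
    · exact le_refl 0
    · positivity
  have hgqs : Summable gq := by
    apply (summable_nat_add_iff 1).1
    have : (fun n : ℕ => gq (n + 1)) = fun n : ℕ => q ^ n := by
      funext n
      rw [hgq]
      simp
    rw [this]
    exact summable_geometric_of_lt_one hq0 hq1
  have hΦnorm : ∀ b m k, ‖Φ (b, m, k)‖ ≤ EE b * (gq m * gq k) := by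
    intro b m k
    by_cases hj : b = 0 ∨ m = 0 ∨ k = 0
    · rw [hΦjunk b m k hj]
      simp only [norm_zero]
      positivity
    push_neg at hj
    obtain ⟨hb, hm, hk⟩ := hj
    rw [hΦ]
    simp only
    rw [if_neg (by push_neg; exact ⟨hb, hm, hk⟩)]
    rw [norm_mul, norm_mul, norm_div]
    have e1 : ‖((ArithmeticFunction.moebius m : ℤ) : ℂ)‖ ≤ 1 := by
      rw [Complex.norm_intCast]
      have := ArithmeticFunction.abs_moebius_le_one (n := m)
      calc |((ArithmeticFunction.moebius m : ℤ) : ℝ)| = ((|ArithmeticFunction.moebius m| : ℤ) : ℝ) := by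
            push_cast; ring
        _ ≤ 1 := by exact_mod_cast this
    have e2 : (1:ℝ) ≤ ‖((m:ℂ) * (k:ℂ))‖ := by
      rw [norm_mul, Complex.norm_natCast, Complex.norm_natCast]
      have h1 : (1:ℝ) ≤ (m:ℝ) := by exact_mod_cast Nat.one_le_iff_ne_zero.2 hm
      have h2 : (1:ℝ) ≤ (k:ℝ) := by exact_mod_cast Nat.one_le_iff_ne_zero.2 hk
      nlinarith
    have ediv : ‖((ArithmeticFunction.moebius m : ℤ) : ℂ)‖ / ‖((m:ℂ) * (k:ℂ))‖ ≤ 1 :=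
      div_le_one_of_le₀ (le_trans e1 e2) (by linarith)
    have e3 : ‖∏ j, Y j ^ (m * k * b j)‖ ≤ ‖P b‖ * (q ^ (m-1) * q ^ (k-1)) := by
      have s1 : ‖∏ j, Y j ^ (m * k * b j)‖ = (∏ j, ‖Y j‖ ^ b j) ^ (m * k) := by
        rw [norm_prod]
        rw [← Finset.prod_pow]
        refine Finset.prod_congr rfl fun j _ => ?_
        rw [norm_pow, ← pow_mul]
        congr 1
        ring
      rw [s1, ← hNP b]
      have hmk1 : 1 ≤ m * k := Nat.one_le_iff_ne_zero.2 (Nat.mul_ne_zero hm hk)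
      have s2 : ‖P b‖ ^ (m * k) = ‖P b‖ * ‖P b‖ ^ (m * k - 1) := by
        conv_lhs => rw [show m * k = (m * k - 1) + 1 by omega]
        rw [pow_succ']
      rw [s2]
      apply mul_le_mul_of_nonneg_left _ (norm_nonneg _)
      calc ‖P b‖ ^ (m * k - 1) ≤ q ^ (m * k - 1) :=
            pow_le_pow_left₀ (norm_nonneg _) (hPble b hb) _
        _ ≤ q ^ ((m - 1) + (k - 1)) := by
            apply pow_le_pow_of_le_one hq0 hq1.le
            obtain ⟨m', rfl⟩ := Nat.exists_eq_succ_of_ne_zero hm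
            obtain ⟨k', rfl⟩ := Nat.exists_eq_succ_of_ne_zero hk
            have h5 : m'.succ * k'.succ = m' * k' + m' + k' + 1 := by
              simp [Nat.succ_eq_add_one]; ring
            omega
        _ = q ^ (m-1) * q ^ (k-1) := pow_add q _ _
    calc ‖((ArithmeticFunction.moebius m : ℤ) : ℂ)‖ / ‖((m:ℂ) * (k:ℂ))‖ * ‖((c b : ℚ) : ℂ)‖
          * ‖∏ j, Y j ^ (m * k * b j)‖
        ≤ 1 * ‖((c b : ℚ) : ℂ)‖ * (‖P b‖ * (q ^ (m-1) * q ^ (k-1))) := by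
          apply mul_le_mul _ e3 (norm_nonneg _) (by positivity)
          exact mul_le_mul_of_nonneg_right ediv (norm_nonneg _)
      _ = EE b * (gq m * gq k) := by
          rw [hEE, hgq]
          simp only
          rw [if_neg hb, if_neg hm, if_neg hk]
          ring
  have hgg : Summable (fun p : ℕ × ℕ => gq p.1 * gq p.2) := hgqs.mul_of_nonneg hgqs hgq0 hgq0
  have hinnerΦ : ∀ b : Fin r → ℕ, Summable (fun p : ℕ × ℕ => ‖Φ (b, p)‖) := fun b =>
    Summable.of_nonneg_of_le (fun p => norm_nonneg _) (fun p => hΦnorm b p.1 p.2)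
      (hgg.mul_left (EE b))
  have houterΦ : Summable (fun b : Fin r → ℕ => ∑' p : ℕ × ℕ, ‖Φ (b, p)‖) := by
    apply Summable.of_nonneg_of_le (fun b => tsum_nonneg fun p => norm_nonneg _) (fun b => ?_)
      (hsumEE.mul_right (∑' p : ℕ × ℕ, (gq p.1 * gq p.2)))
    calc ∑' p : ℕ × ℕ, ‖Φ (b, p)‖ ≤ ∑' p : ℕ × ℕ, EE b * (gq p.1 * gq p.2) :=
        Summable.tsum_le_tsum (fun p => hΦnorm b p.1 p.2) (hinnerΦ b) (hgg.mul_left (EE b))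
      _ = EE b * ∑' p : ℕ × ℕ, (gq p.1 * gq p.2) := tsum_mul_left
  have hSnorm : Summable (fun i : (Fin r → ℕ) × ℕ × ℕ => ‖Φ i‖) :=
    (summable_prod_of_nonneg (fun i => norm_nonneg _)).2 ⟨hinnerΦ, houterΦ⟩
  have hSPhi : Summable Φ := Summable.of_norm hSnorm

  -- ============ fiberwise: grouping the triple sum by (β, k) ============
  set Ψ : (Fin r → ℕ) × ℕ → ℂ :=
    fun y => ∑ m ∈ D y.1, Φ ((fun j => y.1 j / m : Fin r → ℕ), m, y.2) with hΨdef
  have hΨsum : HasSum Ψ (∑' i, Φ i) := by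
    apply hasSum_fiberwise'
      (fun i : (Fin r → ℕ) × ℕ × ℕ => ((fun j => i.2.1 * i.1 j : Fin r → ℕ), i.2.2))
      hSPhi.hasSum
    intro y
    simpa only [hΨdef, hD] using fiber_hasSum Φ hΦjunk y.1 y.2
  set NΨ : (Fin r → ℕ) × ℕ → ℝ :=
    fun y => ∑ m ∈ D y.1, ‖Φ ((fun j => y.1 j / m : Fin r → ℕ), m, y.2)‖ with hNΨdef
  have hNΨsum : HasSum NΨ (∑' i, ‖Φ i‖) := by
    apply hasSum_fiberwise'
      (fun i : (Fin r → ℕ) × ℕ × ℕ => ((fun j => i.2.1 * i.1 j : Fin r → ℕ), i.2.2))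
      hSnorm.hasSum
    intro y
    simpa only [hNΨdef, hD] using fiber_hasSum (fun i => ‖Φ i‖)
      (fun b m k h => by show ‖Φ (b, m, k)‖ = 0; rw [hΦjunk b m k h, norm_zero]) y.1 y.2
  -- ============ the generic fiber term ============
  have hstepPhi : ∀ (β : Fin r → ℕ), β ≠ 0 → ∀ (k : ℕ), k ≠ 0 → ∀ m ∈ D β,
      Φ ((fun j => β j / m : Fin r → ℕ), m, k)
        = ((ArithmeticFunction.moebius m : ℤ) : ℂ) / (m : ℂ)
            * ((c (fun j => β j / m) : ℚ) : ℂ) * ((P β) ^ k / (k : ℂ)) := by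
    intro β hβ k hk m hm
    have hm' := hm
    rw [hD, Finset.mem_filter, Finset.mem_Icc] at hm'
    obtain ⟨⟨hm1, _⟩, hmdvd⟩ := hm'
    have hm0 : m ≠ 0 := by omega
    obtain ⟨j₁, hj₁⟩ : ∃ j, β j ≠ 0 := by
      by_contra h
      push_neg at h
      exact hβ (funext h)
    have hbm : (fun j => β j / m) ≠ (0 : Fin r → ℕ) := by
      intro h
      have h2 := congrFun h j₁
      simp only [Pi.zero_apply] at h2
      have h3 := Nat.mul_div_cancel' (hmdvd j₁)
      rw [h2, mul_zero] at h3
      exact hj₁ h3.symm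
    rw [hΦ]
    simp only
    rw [if_neg (by push_neg; exact ⟨hbm, hm0, hk⟩)]
    have hprodY : ∏ j, Y j ^ (m * k * (β j / m)) = (P β) ^ k := by
      rw [hP]
      simp only
      rw [← Finset.prod_pow]
      refine Finset.prod_congr rfl fun j _ => ?_
      rw [← pow_mul]
      congr 1
      rw [mul_comm (β j) k]
      rw [mul_comm m k, mul_assoc, Nat.mul_div_cancel' (hmdvd j)]
    rw [hprodY]
    have hmC : (m : ℂ) ≠ 0 := Nat.cast_ne_zero.2 hm0
    have hkC : (k : ℂ) ≠ 0 := Nat.cast_ne_zero.2 hk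
    first
    | (field_simp; ring)
    | field_simp
  -- ============ evaluation of Ψ ============
  have hPsival : ∀ y : (Fin r → ℕ) × ℕ,
      Ψ y = (γint y.1 : ℂ) * ((P y.1) ^ y.2 / (y.2 : ℂ)) := by
    rintro ⟨β, k⟩
    by_cases hk : k = 0
    · subst hk
      have h1 : Ψ (β, 0) = 0 := by
        rw [hΨdef]
        apply Finset.sum_eq_zero
        intro m _
        exact hΦjunk _ m 0 (Or.inr (Or.inr rfl))
      rw [h1]
      simp
    by_cases hβ : β = 0
    · subst hβ
      have hD0 : D (0 : Fin r → ℕ) = ∅ := by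
        rw [hD]
        simp
      have h1 : Ψ (0, k) = 0 := by
        rw [hΨdef]
        simp only
        rw [hD0, Finset.sum_empty]
      rw [h1, hγ0]
      simp
    -- main case
    have step1 : ∀ m ∈ D β, Φ ((fun j => β j / m : Fin r → ℕ), m, k)
        = ((ArithmeticFunction.moebius m : ℤ) : ℂ) / (m : ℂ)
            * ((c (fun j => β j / m) : ℚ) : ℂ) * ((P β) ^ k / (k : ℂ)) :=
      fun m hm => hstepPhi β hβ k hk m hm
    have hcast : ((gammaCoef r a β : ℚ) : ℂ)
        = ∑ m ∈ D β, ((ArithmeticFunction.moebius m : ℤ) : ℂ) / (m : ℂ)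
            * ((c (fun j => β j / m) : ℚ) : ℂ) := by
      rw [hγdec β]
      push_cast
      rfl
    calc Ψ (β, k) = ∑ m ∈ D β, ((ArithmeticFunction.moebius m : ℤ) : ℂ) / (m : ℂ)
            * ((c (fun j => β j / m) : ℚ) : ℂ) * ((P β) ^ k / (k : ℂ)) := by
          rw [hΨdef]
          exact Finset.sum_congr rfl step1
      _ = (∑ m ∈ D β, ((ArithmeticFunction.moebius m : ℤ) : ℂ) / (m : ℂ)
            * ((c (fun j => β j / m) : ℚ) : ℂ)) * ((P β) ^ k / (k : ℂ)) := by
          rw [Finset.sum_mul]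
      _ = ((gammaCoef r a β : ℚ) : ℂ) * ((P β) ^ k / (k : ℂ)) := by rw [hcast]
      _ = (γint β : ℂ) * ((P β) ^ k / (k : ℂ)) := by
          rw [← hγ β]
          push_cast
          ring
  have hΨsum' : HasSum (fun y : (Fin r → ℕ) × ℕ =>
      (γint y.1 : ℂ) * ((P y.1) ^ y.2 / (y.2 : ℂ))) (∑' i, Φ i) := by
    rwa [funext hPsival] at hΨsum
  -- ============ route A: sum over β of γ β * (-log(1 - P β)) ============
  have hA : HasSum (fun β : Fin r → ℕ => (γint β : ℂ) * -(Complex.log (1 - P β)))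
      (∑' i, Φ i) := by
    apply HasSum.prod_fiberwise hΨsum'
    intro β
    by_cases hβ : β = 0
    · subst hβ
      have hz : (fun k' : ℕ => (γint (0 : Fin r → ℕ) : ℂ)
          * ((P (0 : Fin r → ℕ)) ^ k' / (k' : ℂ))) = fun _ => (0 : ℂ) := by
        funext k'
        rw [hγ0]
        simp
      have hz2 : (γint (0 : Fin r → ℕ) : ℂ) * -(Complex.log (1 - P (0 : Fin r → ℕ))) = 0 := by
        rw [hγ0]
        simp
      rw [hz, hz2]
      exact hasSum_zero
    · exact (Complex.hasSum_taylorSeries_neg_log (hPlt β hβ)).mul_left ((γint β : ℂ))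
  -- ============ route B: sum over b of c b * P b ============
  have hB : HasSum (fun b : Fin r → ℕ => if b = 0 then 0 else ((c b : ℚ) : ℂ) * P b)
      (∑' i, Φ i) := by
    apply HasSum.prod_fiberwise hSPhi.hasSum
    intro b
    by_cases hb : b = 0
    · subst hb
      rw [if_pos rfl]
      have hz : (fun p : ℕ × ℕ => Φ (0, p)) = fun _ => 0 :=
        funext fun p => hΦjunk 0 p.1 p.2 (Or.inl rfl)
      rw [hz]
      exact hasSum_zero
    rw [if_neg hb]
    have hsb : Summable (fun p : ℕ × ℕ => Φ (b, p)) := Summable.of_norm (hinnerΦ b)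
    have hval : ∀ n : ℕ, (∑ p ∈ n.divisorsAntidiagonal, Φ (b, p))
        = if n = 1 then ((c b : ℚ) : ℂ) * P b else 0 := by
      intro n
      by_cases hn : n = 0
      · subst hn
        rw [Nat.divisorsAntidiagonal_zero]
        simp
      have step : ∀ p ∈ n.divisorsAntidiagonal,
          Φ (b, p) = ((ArithmeticFunction.moebius p.1 : ℤ) : ℂ)
            * (((c b : ℚ) : ℂ) * (∏ j, Y j ^ (n * b j)) / (n : ℂ)) := by
        intro p hp
        rw [Nat.mem_divisorsAntidiagonal] at hp
        obtain ⟨hpn, _⟩ := hp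
        have hp1 : p.1 ≠ 0 := by
          intro h
          rw [h, zero_mul] at hpn
          exact hn hpn.symm
        have hp2 : p.2 ≠ 0 := by
          intro h
          rw [h, mul_zero] at hpn
          exact hn hpn.symm
        rw [hΦ]
        simp only
        rw [if_neg (by push_neg; exact ⟨hb, hp1, hp2⟩)]
        have hc1 : (p.1 : ℂ) * (p.2 : ℂ) = (n : ℂ) := by
          rw [← Nat.cast_mul, hpn]
        have hc2 : (∏ j, Y j ^ (p.1 * p.2 * b j)) = ∏ j, Y j ^ (n * b j) :=
          Finset.prod_congr rfl fun j _ => by rw [hpn]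
        rw [hc2, hc1]
        ring
      rw [Finset.sum_congr rfl step, ← Finset.sum_mul]
      have hmoeb : (∑ p ∈ n.divisorsAntidiagonal, ((ArithmeticFunction.moebius p.1 : ℤ) : ℂ))
          = if n = 1 then 1 else 0 := by
        have h := sum_moebius_divAnti n
        calc (∑ p ∈ n.divisorsAntidiagonal, ((ArithmeticFunction.moebius p.1 : ℤ) : ℂ))
            = (((∑ p ∈ n.divisorsAntidiagonal, ArithmeticFunction.moebius p.1) : ℤ) : ℂ) := by
              push_cast
              rfl
          _ = (((if n = 1 then 1 else 0) : ℤ) : ℂ) := by rw [h]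
          _ = if n = 1 then 1 else 0 := by split <;> simp
      rw [hmoeb]
      by_cases hn1 : n = 1
      · subst hn1
        rw [if_pos rfl, if_pos rfl, one_mul, hP]
        simp
      · rw [if_neg hn1, if_neg hn1, zero_mul]
    have hfib : ∀ n : ℕ, HasSum (fun i : {p : ℕ × ℕ //
        (fun p : ℕ × ℕ => p.1 * p.2) p = n} => Φ (b, i.1))
        (if n = 1 then ((c b : ℚ) : ℂ) * P b else 0) := by
      intro n
      rw [← hval n]
      apply hasSum_fiber_finset (G := fun p : ℕ × ℕ => p.1 * p.2)
        (f := fun p => Φ (b, p)) (y := n) (F := n.divisorsAntidiagonal)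
      · intro p hp
        exact (Nat.mem_divisorsAntidiagonal.1 hp).1
      · intro p hpn hne
        apply Nat.mem_divisorsAntidiagonal.2
        refine ⟨hpn, ?_⟩
        intro h0
        apply hne
        rcases Nat.mul_eq_zero.1 (hpn.trans h0) with h | h
        · exact hΦjunk b p.1 p.2 (Or.inr (Or.inl h))
        · exact hΦjunk b p.1 p.2 (Or.inr (Or.inr h))
    have h1 := hasSum_fiberwise' (fun p : ℕ × ℕ => p.1 * p.2) hsb.hasSum hfib
    have h2 : HasSum (fun n : ℕ => if n = 1 then ((c b : ℚ) : ℂ) * P b else 0)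
        (((c b : ℚ) : ℂ) * P b) := hasSum_ite_eq 1 _
    have h3 : (∑' p : ℕ × ℕ, Φ (b, p)) = ((c b : ℚ) : ℂ) * P b := h1.unique h2
    rw [← h3]
    exact hsb.hasSum
  -- ============ value of the triple sum via route B ============
  have hBval : (∑' i, Φ i) = -Complex.log (1 + w) := by
    apply hasSum_eq_of_tendsto hB (T := TT)
    · intro N M hNM
      intro b hb
      rw [hTT] at hb ⊢
      rw [Finset.mem_biUnion] at hb ⊢
      obtain ⟨n, hn, hbn⟩ := hb
      refine ⟨n, ?_, hbn⟩
      rw [Finset.mem_range] at hn ⊢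
      omega
    · intro b _
      exact ⟨∑ j, b j, hmemTT b _ le_rfl⟩
    · have hps : ∀ N, ∑ b ∈ TT N, (if b = 0 then 0 else ((c b : ℚ) : ℂ) * P b)
          = ∑ n ∈ Finset.range (N+1), (-w) ^ n / (n : ℂ) := by
        intro N
        rw [hTT]
        simp only
        rw [Finset.sum_biUnion (hTTdisj N)]
        refine Finset.sum_congr rfl fun n hn => ?_
        rcases Nat.eq_zero_or_pos n with rfl | hn1
        · rw [Finset.piAntidiag_zero, Finset.sum_singleton, if_pos rfl]
          simp
        · have key := multinomial_sum_div (K := ℂ) r (fun j => (a j : ℂ) * Y j) hn1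
          have heq : ∑ b ∈ Finset.piAntidiag (univ : Finset (Fin r)) n,
                (if b = 0 then 0 else ((c b : ℚ) : ℂ) * P b)
              = ∑ b ∈ Finset.piAntidiag (univ : Finset (Fin r)) n, (-1 : ℂ) ^ n
                  * (((((n : ℕ)-1).factorial : ℂ) / (∏ j, ((b j).factorial : ℂ)))
                      * ∏ j, ((a j : ℂ) * Y j) ^ b j) := by
            refine Finset.sum_congr rfl fun b hb => ?_
            have hsb := (Finset.mem_piAntidiag.1 hb).1
            have hb0 : b ≠ 0 := by
              intro h
              rw [h] at hsb
              simp at hsb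
              omega
            rw [if_neg hb0]
            have hcC : ((c b : ℚ) : ℂ) = (-1 : ℂ) ^ (∑ j, b j)
                * (((∑ j, b j) - 1).factorial : ℂ) / ((∏ j, (b j).factorial : ℕ) : ℂ)
                * ∏ j, (a j : ℂ) ^ b j := by
              rw [hc]
              push_cast
              ring
            rw [hcC, hP, hsb]
            simp only [mul_pow, Finset.prod_mul_distrib]
            push_cast
            ring
          rw [heq, ← Finset.mul_sum, key, ← hw, neg_pow]
          ring
      rw [funext hps]
      have h0 := (Complex.hasSum_taylorSeries_neg_log (z := -w)
        (by rwa [norm_neg])).tendsto_sum_nat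
      rw [sub_neg_eq_add] at h0
      exact h0.comp (tendsto_add_atTop_nat 1)
  -- ============ the product ============
  have hL : HasSum (fun β : Fin r → ℕ => (γint β : ℂ) * -(Complex.log (1 - P β)))
      (-Complex.log (1 + w)) := hBval ▸ hA
  have hsupp : Function.support (fun β : Fin r → ℕ => (γint β : ℂ) * -(Complex.log (1 - P β)))
      ⊆ {β : Fin r → ℕ | β ≠ 0} := by
    intro β hβ
    simp only [Function.mem_support] at hβ
    intro h0
    apply hβ
    rw [h0, hγ0]
    simp
  have hsubB : HasSum ((fun β : Fin r → ℕ => (γint β : ℂ) * -(Complex.log (1 - P β)))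
      ∘ (Subtype.val : {β : Fin r → ℕ // β ≠ 0} → (Fin r → ℕ))) (-Complex.log (1 + w)) :=
    (hasSum_subtype_iff_of_support_subset hsupp).2 hL
  have hsub2 : HasSum (fun β : {β : Fin r → ℕ // β ≠ 0} =>
      (γint β.1 : ℂ) * Complex.log (1 - P β.1)) (Complex.log (1 + w)) := by
    have heqf : (fun β : {β : Fin r → ℕ // β ≠ 0} =>
        (γint β.1 : ℂ) * Complex.log (1 - P β.1))
        = fun β : {β : Fin r → ℕ // β ≠ 0} =>
            -(((fun β : Fin r → ℕ => (γint β : ℂ) * -(Complex.log (1 - P β)))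
              ∘ (Subtype.val : {β : Fin r → ℕ // β ≠ 0} → (Fin r → ℕ))) β) := by
      funext β
      simp
    rw [heqf, show Complex.log (1 + w) = -(-Complex.log (1 + w)) by ring]
    exact hsubB.neg
  have hprodB : HasProd (fun β : {β : Fin r → ℕ // β ≠ 0} =>
      ((1 : ℂ) - P β.1) ^ (γint β.1)) (1 + w) := by
    have h := hsub2.cexp
    rw [Complex.exp_log h1w] at h
    have h2 : (Complex.exp ∘ fun β : {β : Fin r → ℕ // β ≠ 0} =>
        (γint β.1 : ℂ) * Complex.log (1 - P β.1))
        = fun β : {β : Fin r → ℕ // β ≠ 0} => ((1 : ℂ) - P β.1) ^ (γint β.1) := by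
      funext β
      simp only [Function.comp_apply]
      rw [Complex.exp_int_mul, Complex.exp_log (part2 β.1 β.2)]
    rw [h2] at h
    exact h
  -- ============ part 1 machinery ============
  have htermN : ∀ (β : Fin r → ℕ), β ≠ 0 → ∀ m ∈ D β,
      ‖Φ ((fun j => β j / m : Fin r → ℕ), m, 1)‖
        = ((|((ArithmeticFunction.moebius m : ℤ) : ℚ) / m * c (fun j => β j / m)| : ℚ) : ℝ)
            * ‖P β‖ := by
    intro β hβ m hm
    rw [hstepPhi β hβ 1 one_ne_zero m hm]
    rw [pow_one, Nat.cast_one, div_one, norm_mul]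
    congr 1
    have hcast2 : ((((ArithmeticFunction.moebius m : ℤ) : ℚ) / m
          * c (fun j => β j / m) : ℚ) : ℂ)
        = ((ArithmeticFunction.moebius m : ℤ) : ℂ) / (m : ℂ)
            * ((c (fun j => β j / m) : ℚ) : ℂ) := by
      push_cast
      ring
    rw [← hcast2, Complex.norm_ratCast, Rat.cast_abs]
  have part1chain : ∀ (β : Fin r → ℕ), β ≠ 0 →
      ((|gammaCoef r a β| : ℚ) : ℝ) * ‖P β‖ ≤ NΨ (β, 1) := by
    intro β hβ
    have h1 : |gammaCoef r a β| ≤ ∑ m ∈ D β,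
        |((ArithmeticFunction.moebius m : ℤ) : ℚ) / m * c (fun j => β j / m)| := by
      rw [hγdec β]
      exact Finset.abs_sum_le_sum_abs _ _
    have h2 : ((|gammaCoef r a β| : ℚ) : ℝ)
        ≤ ∑ m ∈ D β, ((|((ArithmeticFunction.moebius m : ℤ) : ℚ) / m
            * c (fun j => β j / m)| : ℚ) : ℝ) := by
      calc ((|gammaCoef r a β| : ℚ) : ℝ)
          ≤ ((∑ m ∈ D β, |((ArithmeticFunction.moebius m : ℤ) : ℚ) / m
              * c (fun j => β j / m)| : ℚ) : ℝ) := by exact_mod_cast h1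
        _ = ∑ m ∈ D β, ((|((ArithmeticFunction.moebius m : ℤ) : ℚ) / m
              * c (fun j => β j / m)| : ℚ) : ℝ) := by push_cast; rfl
    calc ((|gammaCoef r a β| : ℚ) : ℝ) * ‖P β‖
        ≤ (∑ m ∈ D β, ((|((ArithmeticFunction.moebius m : ℤ) : ℚ) / m
            * c (fun j => β j / m)| : ℚ) : ℝ)) * ‖P β‖ :=
          mul_le_mul_of_nonneg_right h2 (norm_nonneg _)
      _ = ∑ m ∈ D β, ((|((ArithmeticFunction.moebius m : ℤ) : ℚ) / m
            * c (fun j => β j / m)| : ℚ) : ℝ) * ‖P β‖ := by rw [Finset.sum_mul]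
      _ = NΨ (β, 1) := by
          simp only [hNΨdef]
          exact (Finset.sum_congr rfl fun m hm => (htermN β hβ m hm)).symm
  have hinjB : Function.Injective
      (fun β : {β : Fin r → ℕ // β ≠ 0} => ((β.1, 1) : (Fin r → ℕ) × ℕ)) :=
    fun x y hxy => Subtype.ext (congrArg Prod.fst hxy)
  have hfamNs : Summable (fun β : {β : Fin r → ℕ // β ≠ 0} => NΨ (β.1, 1)) :=
    hNΨsum.summable.comp_injective hinjB
  have hNΨ0 : ∀ y, 0 ≤ NΨ y := by
    intro y
    simp only [hNΨdef]
    exact Finset.sum_nonneg fun m _ => norm_nonneg _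
  have habsγ : ∀ β : Fin r → ℕ, ((|gammaCoef r a β| : ℚ) : ℝ) = |(γint β : ℝ)| := by
    intro β
    rw [← hγ β, Rat.cast_abs]
    norm_cast
  refine ⟨?_, ?_, ?_, ?_⟩
  · -- part 1
    apply Summable.of_nonneg_of_le _ _ hfamNs
    · intro β
      positivity
    · intro β
      rw [← hPa β.1]
      exact part1chain β.1 β.2
  · -- part 2
    intro β hβ
    have := part2 β hβ
    rw [hP] at this
    simpa using this
  · -- part 3
    set M : ℝ := ∑' β : {β : Fin r → ℕ // β ≠ 0}, NΨ (β.1, 1) with hMdef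
    have hM0 : 0 ≤ M := tsum_nonneg fun β => hNΨ0 _
    have hMle : ∀ β : {β : Fin r → ℕ // β ≠ 0}, |(γint β.1 : ℝ)| * ‖P β.1‖ ≤ M := by
      intro β
      calc |(γint β.1 : ℝ)| * ‖P β.1‖ = ((|gammaCoef r a β.1| : ℚ) : ℝ) * ‖P β.1‖ := by
            rw [habsγ]
        _ ≤ NΨ (β.1, 1) := part1chain β.1 β.2
        _ ≤ M := Summable.le_tsum hfamNs β fun b' _ => hNΨ0 _
    obtain ⟨N₀, hN₀⟩ : ∃ N₀ : ℕ, q ^ N₀ < 1/2 :=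
      exists_pow_lt_of_lt_one (by norm_num) hq1
    have hfinset : {β : {β : Fin r → ℕ // β ≠ 0} | ∑ j, β.1 j < N₀}.Finite := by
      have h1 : Set.Finite {b : Fin r → ℕ | ∑ j, b j < N₀} := by
        apply Set.Finite.subset (Finset.finite_toSet (TT N₀))
        intro b hb
        exact hmemTT b N₀ (le_of_lt hb)
      exact Set.Finite.preimage (Subtype.val_injective.injOn) h1
    rw [← Finset.summable_compl_iff hfinset.toFinset]
    apply Summable.of_nonneg_of_le (fun β => norm_nonneg _) _
      (((hfamNs.mul_left (2 * Real.exp (2*M))).subtype _))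
    rintro ⟨⟨β', hβ'⟩, hns⟩
    have hz2 : ‖P β'‖ ≤ 1/2 := by
      have hge : N₀ ≤ ∑ j, β' j := by
        by_contra h
        push_neg at h
        exact hns (hfinset.mem_toFinset.2 h)
      calc ‖P β'‖ ≤ q ^ (∑ j, β' j) := hPq β'
        _ ≤ q ^ N₀ := pow_le_pow_of_le_one hq0 hq1.le hge
        _ ≤ 1/2 := hN₀.le
    have hz1 : ‖P β'‖ < 1 := hPlt β' hβ'
    have hlog : ‖Complex.log (1 - P β')‖ ≤ 2 * ‖P β'‖ := by
      have h1 := Complex.norm_log_one_add_sub_self_le (z := -(P β')) (by rwa [norm_neg])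
      rw [← sub_eq_add_neg, sub_neg_eq_add, norm_neg] at h1
      have h2 : ‖Complex.log (1 - P β')‖
          ≤ ‖Complex.log (1 - P β') + P β'‖ + ‖P β'‖ := by
        calc ‖Complex.log (1 - P β')‖ = ‖(Complex.log (1 - P β') + P β') - P β'‖ := by
              rw [add_sub_cancel_right]
          _ ≤ ‖Complex.log (1 - P β') + P β'‖ + ‖P β'‖ := norm_sub_le _ _
      have h30 : (0:ℝ) < 1 - ‖P β'‖ := by linarith
      have h3 : (1 - ‖P β'‖)⁻¹ ≤ 2 := by
        have h31 : (1:ℝ)/2 ≤ 1 - ‖P β'‖ := by linarith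
        calc (1 - ‖P β'‖)⁻¹ ≤ ((1:ℝ)/2)⁻¹ := by
              first
              | (gcongr; norm_num)
              | gcongr
          _ = 2 := by norm_num
      nlinarith [norm_nonneg (P β'), sq_nonneg (‖P β'‖)]
    have hMb : |(γint β' : ℝ)| * ‖P β'‖ ≤ M := hMle ⟨β', hβ'⟩
    have hexp : ((1:ℂ) - P β') ^ (γint β')
        = Complex.exp ((γint β' : ℂ) * Complex.log (1 - P β')) := by
      rw [Complex.exp_int_mul, Complex.exp_log (part2 β' hβ')]
    have hu : ‖(γint β' : ℂ) * Complex.log (1 - P β')‖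
        ≤ 2 * (|(γint β' : ℝ)| * ‖P β'‖) := by
      rw [norm_mul, Complex.norm_intCast]
      calc |(γint β' : ℝ)| * ‖Complex.log (1 - P β')‖
          ≤ |(γint β' : ℝ)| * (2 * ‖P β'‖) :=
            mul_le_mul_of_nonneg_left hlog (abs_nonneg _)
        _ = 2 * (|(γint β' : ℝ)| * ‖P β'‖) := by ring
    have habs0 : (0:ℝ) ≤ |(γint β' : ℝ)| * ‖P β'‖ :=
      mul_nonneg (abs_nonneg _) (norm_nonneg _)
    calc ‖((1:ℂ) - ∏ j, Y j ^ β' j) ^ (γint β') - 1‖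
        = ‖Complex.exp ((γint β' : ℂ) * Complex.log (1 - P β')) - 1‖ := by
          rw [← hPa β', hexp]
      _ ≤ ‖(γint β' : ℂ) * Complex.log (1 - P β')‖
            * Real.exp ‖(γint β' : ℂ) * Complex.log (1 - P β')‖ :=
          norm_cexp_sub_one_le _
      _ ≤ (2 * (|(γint β' : ℝ)| * ‖P β'‖)) * Real.exp (2 * M) := by
          apply mul_le_mul hu (Real.exp_le_exp.2 (le_trans hu (by linarith)))
            (Real.exp_pos _).le (by positivity)
      _ ≤ (2 * (NΨ (β', 1))) * Real.exp (2 * M) := by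
          have hle : |(γint β' : ℝ)| * ‖P β'‖ ≤ NΨ (β', 1) := by
            calc |(γint β' : ℝ)| * ‖P β'‖
                = ((|gammaCoef r a β'| : ℚ) : ℝ) * ‖P β'‖ := by rw [habsγ]
              _ ≤ NΨ (β', 1) := part1chain β' hβ'
          have he0 : (0:ℝ) ≤ Real.exp (2 * M) := (Real.exp_pos _).le
          nlinarith
      _ = 2 * Real.exp (2 * M) * NΨ (β', 1) := by ring
  · -- part 4
    have h4 := hprodB.tprod_eq
    rw [hP] at h4
    simpa using h4
end

section
/- For every β ∈ ℕʳ∖{0}, the rational number γ(β) = Σ_{(m,b): m ∈ ℕ≥1, b ∈ ℕʳ∖{0}, m·b = β} (−1)^{‖b‖} (μ(m)/m) ((‖b‖−1)!/(b₁!⋯b_r!)) a₁^{b₁}⋯a_r^{b_r} is an integer. -/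
open Finset

section AuxLemmas

open MvPolynomial

noncomputable def toF {r : ℕ} (b : Fin r → ℕ) : Fin r →₀ ℕ := Finsupp.equivFunOnFinite.symm b

lemma toF_apply {r : ℕ} (b : Fin r → ℕ) (j : Fin r) : toF b j = b j := rfl

lemma monomial_eq_prod {r : ℕ} (k : Fin r → ℕ) (v : ℤ) :
    (monomial (toF k) v : MvPolynomial (Fin r) ℤ) = C v * ∏ j, (X j : MvPolynomial (Fin r) ℤ) ^ k j := by
  rw [monomial_eq]
  congr 1
  rw [Finsupp.prod_fintype]
  · rfl
  · intro j; exact pow_zero _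

lemma coeff_linear_pow {r : ℕ} (c : Fin r → ℤ) (N : ℕ) (b : Fin r → ℕ) (hb : ∑ j, b j = N) :
    MvPolynomial.coeff (toF b) ((∑ j, (C (c j) * X j : MvPolynomial (Fin r) ℤ)) ^ N)
      = (Nat.multinomial Finset.univ b : ℤ) * ∏ j, c j ^ b j := by
  rw [Finset.sum_pow_eq_sum_piAntidiag, MvPolynomial.coeff_sum]
  have hterm : ∀ k : Fin r → ℕ,
      (Nat.multinomial Finset.univ k : MvPolynomial (Fin r) ℤ) * ∏ j, (C (c j) * X j) ^ k j
        = monomial (toF k) ((Nat.multinomial Finset.univ k : ℤ) * ∏ j, c j ^ k j) := by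
    intro k
    rw [monomial_eq_prod]
    simp only [mul_pow, Finset.prod_mul_distrib, ← map_pow, ← map_prod]
    rw [(map_natCast (C : ℤ →+* MvPolynomial (Fin r) ℤ) _).symm, ← mul_assoc, ← C_mul, mul_comm]
  simp only [hterm, MvPolynomial.coeff_monomial]
  rw [Finset.sum_eq_single b]
  · simp
  · intro k hk hne
    rw [if_neg]
    intro h
    exact hne (Finsupp.equivFunOnFinite.symm.injective h)
  · intro hbmem
    exact absurd (by simp [Finset.mem_piAntidiag, hb]) hbmem

lemma coeff_expand_smul {σ : Type*} {R : Type*} [CommSemiring R] {p : ℕ} (hp : 0 < p)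
    (g : MvPolynomial σ R) (d : σ →₀ ℕ) :
    MvPolynomial.coeff (p • d) (MvPolynomial.expand p g) = MvPolynomial.coeff d g := by
  have hmono : ∀ (v : σ →₀ ℕ) (r : R), expand p (monomial v r) = monomial (p • v) r := by
    intro v r
    rw [expand_monomial, monomial_eq]
  classical
  conv_lhs => rw [g.as_sum]
  rw [map_sum, MvPolynomial.coeff_sum]
  simp only [hmono]
  simp only [MvPolynomial.coeff_monomial]
  rw [Finset.sum_eq_single d]
  · simp
  · intro v hv hne
    rw [if_neg]
    intro h
    apply hne
    ext x
    have := DFunLike.congr_fun h x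
    simp only [Finsupp.smul_apply, smul_eq_mul] at this
    exact Nat.eq_of_mul_eq_mul_left hp this
  · intro hd
    simp [MvPolynomial.notMem_support_iff.mp hd]
lemma key_congruence {r : ℕ} (p : ℕ) (hp : p.Prime) (c : Fin r → ℤ) (b : Fin r → ℕ)
    (hpb : ∀ j, p ∣ b j) :
    (p : ℤ) ^ ((∑ j, b j).factorization p) ∣
      (Nat.multinomial Finset.univ b : ℤ) * ∏ j, c j ^ b j
        - (Nat.multinomial Finset.univ (fun j => b j / p) : ℤ) * ∏ j, c j ^ (b j / p) := by
  set N := ∑ j, b j with hN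
  set e := N.factorization p with he
  rcases Nat.eq_zero_or_pos e with he0 | hepos
  · rw [he0, pow_zero]; exact one_dvd _
  have hN0 : N ≠ 0 := by
    intro h
    rw [h] at he
    simp [Nat.factorization_zero] at he
    omega
  set M := N / p ^ e with hM
  have hNM : N = p ^ e * M := (Nat.ordProj_mul_ordCompl_eq_self N p).symm
  set f : MvPolynomial (Fin r) ℤ := ∑ j, C (c j) * X j with hf
  -- step 1 : p ∣ f^p - expand p f
  have h1 : ((p : ℕ) : MvPolynomial (Fin r) ℤ) ∣ f ^ p - expand p f := by
    haveI : Fact p.Prime := ⟨hp⟩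
    have hmap : MvPolynomial.map (Int.castRingHom (ZMod p)) (f ^ p - expand p f) = 0 := by
      rw [map_sub, map_pow, map_expand]
      have hg : MvPolynomial.map (Int.castRingHom (ZMod p)) f
          = ∑ j, (C ((c j : ZMod p)) * X j : MvPolynomial (Fin r) (ZMod p)) := by
        rw [hf, map_sum]
        refine Finset.sum_congr rfl fun j _ => ?_
        rw [map_mul, map_C, map_X]
        rfl
      rw [hg, sum_pow_char, map_sum]
      rw [sub_eq_zero]
      refine Finset.sum_congr rfl fun j _ => ?_
      rw [mul_pow, ← map_pow, ZMod.pow_card, map_mul, expand_C, expand_X]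
    rw [show ((p : ℕ) : MvPolynomial (Fin r) ℤ) = C ((p : ℕ) : ℤ) from (map_natCast C p).symm,
      C_dvd_iff_dvd_coeff]
    intro i
    have h0 := congrArg (MvPolynomial.coeff i) hmap
    rw [MvPolynomial.coeff_map, MvPolynomial.coeff_zero] at h0
    exact (ZMod.intCast_zmod_eq_zero_iff_dvd _ p).mp h0
  -- step 2
  have h2 : ((p : ℕ) : MvPolynomial (Fin r) ℤ) ^ e ∣
      (f ^ p) ^ (p ^ (e - 1)) - (expand p f) ^ (p ^ (e - 1)) := by
    have := dvd_sub_pow_of_dvd_sub h1 (e - 1)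
    rwa [Nat.sub_add_cancel hepos] at this
  -- step 3
  have hNp : N / p = p ^ (e - 1) * M := by
    have hh : N = p * (p ^ (e - 1) * M) := by
      rw [hNM]
      have : p ^ e = p ^ (e - 1) * p := by
        conv_lhs => rw [← Nat.sub_add_cancel hepos]
        rw [pow_succ]
      rw [this]; ring
    rw [hh, Nat.mul_div_cancel_left _ hp.pos]
  have h3 : ((p : ℕ) : MvPolynomial (Fin r) ℤ) ^ e ∣ f ^ N - expand p (f ^ (N / p)) := by
    have e1 : f ^ N = ((f ^ p) ^ (p ^ (e - 1))) ^ M := by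
      rw [← pow_mul, ← pow_mul]
      congr 1
      rw [hNM]
      conv_lhs => rw [← Nat.sub_add_cancel hepos]
      rw [pow_succ]; ring
    have e2 : expand p (f ^ (N / p)) = ((expand p f) ^ (p ^ (e - 1))) ^ M := by
      rw [map_pow, hNp, pow_mul]
    rw [e1, e2]
    exact h2.trans (Commute.sub_dvd_pow_sub_pow (Commute.all _ _) M)
  -- coefficient extraction
  have h4 : C ((p : ℤ) ^ e) ∣ f ^ N - expand p (f ^ (N / p)) := by
    rwa [show (C ((p : ℤ) ^ e) : MvPolynomial (Fin r) ℤ)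
        = ((p : ℕ) : MvPolynomial (Fin r) ℤ) ^ e by rw [map_pow, map_natCast C p]]
  have h5 := (C_dvd_iff_dvd_coeff _ _).mp h4 (toF b)
  rw [MvPolynomial.coeff_sub] at h5
  have hsum : ∑ j, b j / p = N / p := by
    have hh : N = (∑ j, b j / p) * p := by
      rw [hN, Finset.sum_mul]
      exact Finset.sum_congr rfl fun j _ => (Nat.div_mul_cancel (hpb j)).symm
    exact (Nat.div_eq_of_eq_mul_left hp.pos hh).symm
  have hc1 : MvPolynomial.coeff (toF b) (f ^ N) =
      (Nat.multinomial Finset.univ b : ℤ) * ∏ j, c j ^ b j :=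
    coeff_linear_pow c N b hN.symm
  have hbp : toF b = p • toF (fun j => b j / p) := by
    ext j
    rw [Finsupp.smul_apply, toF_apply, toF_apply, smul_eq_mul]
    exact (Nat.mul_div_cancel' (hpb j)).symm
  have hc2 : MvPolynomial.coeff (toF b) (expand p (f ^ (N / p))) =
      (Nat.multinomial Finset.univ (fun j => b j / p) : ℤ) * ∏ j, c j ^ (b j / p) := by
    rw [hbp, coeff_expand_smul hp.pos]
    exact coeff_linear_pow c (N / p) (fun j => b j / p) hsum
  rwa [hc1, hc2] at h5

lemma sum_dvd_mul_multinomial {r : ℕ} (b : Fin r → ℕ) (j : Fin r) :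
    (∑ i, b i) ∣ b j * Nat.multinomial Finset.univ b := by
  rcases Nat.eq_zero_or_pos (b j) with hbj | hbj
  · rw [hbj, zero_mul]; exact dvd_zero _
  set b' := Function.update b j (b j - 1) with hb'
  have hsum' : ∑ i, b' i = (∑ i, b i) - 1 := by
    rw [hb', Finset.sum_update_of_mem (Finset.mem_univ j)]
    have : ∑ i, b i = b j + ∑ i ∈ Finset.univ \ {j}, b i := by
      rw [← Finset.erase_eq, Finset.add_sum_erase _ _ (Finset.mem_univ j)]
    omega
  have hP : ∏ i, (b i).factorial = b j * ∏ i, (b' i).factorial := by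
    have hfun : (fun i => (b' i).factorial) = Function.update (fun i => (b i).factorial) j ((b j - 1).factorial) := by
      ext i
      rcases eq_or_ne i j with rfl | hij
      · simp [hb']
      · simp [hb', Function.update_of_ne hij]
    calc ∏ i, (b i).factorial
        = (b j).factorial * ∏ i ∈ Finset.univ.erase j, (b i).factorial := by
          exact (Finset.mul_prod_erase _ _ (Finset.mem_univ j)).symm
      _ = b j * ((b j - 1).factorial * ∏ i ∈ Finset.univ.erase j, (b i).factorial) := by
          rw [← mul_assoc, Nat.mul_factorial_pred hbj.ne']
      _ = b j * ∏ i, (b' i).factorial := by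
          rw [show (∏ i, (b' i).factorial) = ∏ i, Function.update (fun i => (b i).factorial) j ((b j - 1).factorial) i from by rw [← hfun]]
          rw [Finset.prod_update_of_mem (Finset.mem_univ j), Finset.erase_eq]
  have hpos : 0 < ∑ i, b i :=
    lt_of_lt_of_le hbj (Finset.single_le_sum (fun i _ => Nat.zero_le _) (Finset.mem_univ j))
  have key : b j * Nat.multinomial Finset.univ b
      = (∑ i, b i) * Nat.multinomial Finset.univ b' := by
    have hP'pos : 0 < ∏ i, (b' i).factorial := Finset.prod_pos fun i _ => Nat.factorial_pos _
    apply Nat.eq_of_mul_eq_mul_left hP'pos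
    calc (∏ i, (b' i).factorial) * (b j * Nat.multinomial Finset.univ b)
        = b j * ((∏ i, (b' i).factorial) * Nat.multinomial Finset.univ b) := by ring
      _ = b j * (((∏ i, (b i).factorial) / b j) * Nat.multinomial Finset.univ b) := by
          rw [hP, Nat.mul_div_cancel_left _ hbj]
      _ = (∏ i, (b i).factorial) * Nat.multinomial Finset.univ b := by
          rw [hP, Nat.mul_div_cancel_left _ hbj]; ring
      _ = (∑ i, b i).factorial := Nat.multinomial_spec _ _
      _ = (∑ i, b i) * ((∑ i, b i) - 1).factorial := (Nat.mul_factorial_pred hpos.ne').symm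
      _ = (∑ i, b i) * ((∑ i, b' i).factorial) := by rw [hsum']
      _ = (∑ i, b i) * ((∏ i, (b' i).factorial) * Nat.multinomial Finset.univ b') := by
          rw [Nat.multinomial_spec]
      _ = (∏ i, (b' i).factorial) * ((∑ i, b i) * Nat.multinomial Finset.univ b') := by ring
  rw [key]
  exact Dvd.intro _ rfl

lemma pow_dvd_multinomial {r : ℕ} (p : ℕ) (hp : p.Prime) (b : Fin r → ℕ) (j : Fin r)
    (hj : ¬ p ∣ b j) (k : ℕ) (hk : p ^ k ∣ ∑ i, b i) :
    p ^ k ∣ Nat.multinomial Finset.univ b := by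
  have h1 : p ^ k ∣ b j * Nat.multinomial Finset.univ b :=
    hk.trans (sum_dvd_mul_multinomial b j)
  have hcop : Nat.Coprime (p ^ k) (b j) :=
    Nat.Coprime.pow_left _ ((Nat.Prime.coprime_iff_not_dvd hp).mpr hj)
  exact hcop.dvd_of_dvd_mul_left h1

end AuxLemmas

/-- for every `β ∈ ℕʳ∖{0}`, the rational number `γ(β)` is an integer. -/
theorem stmt_5 (r : ℕ) (hr : 1 ≤ r) (a : Fin r → ℤ)
    (β : Fin r → ℕ) (hβ : β ≠ 0) :
    ∃ z : ℤ, gammaCoef r a β = (z : ℚ) := by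
  classical
  set n := ∑ j, β j with hn
  have hn0 : 0 < n := by
    obtain ⟨j, hj⟩ : ∃ j, β j ≠ 0 := by
      by_contra h; push_neg at h; exact hβ (funext h)
    exact lt_of_lt_of_le (Nat.pos_of_ne_zero hj)
      (Finset.single_le_sum (fun i _ => Nat.zero_le _) (Finset.mem_univ j))
  set Ms := (Finset.Icc 1 n).filter (fun m => ∀ j, m ∣ β j) with hMs
  set T : ℕ → ℤ := fun m =>
    (Nat.multinomial Finset.univ (fun j => β j / m) : ℤ) * ∏ j, (-(a j)) ^ (β j / m) with hT
  set S : ℤ := ∑ m ∈ Ms, ((ArithmeticFunction.moebius m : ℤ)) * T m with hS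
  have hmem : ∀ m ∈ Ms, 1 ≤ m ∧ m ≤ n ∧ (∀ j, m ∣ β j) ∧ m ∣ n := by
    intro m hm
    rw [hMs, Finset.mem_filter, Finset.mem_Icc] at hm
    exact ⟨hm.1.1, hm.1.2, hm.2, Finset.dvd_sum fun j _ => hm.2 j⟩
  have hdivsum : ∀ m : ℕ, (∀ j, m ∣ β j) → (∑ j, β j / m) * m = n := by
    intro m hm
    rw [hn, Finset.sum_mul]
    exact Finset.sum_congr rfl fun j _ => Nat.div_mul_cancel (hm j)
  -- STEP A : gammaCoef = S / n
  have hA : gammaCoef r a β = (S : ℚ) / (n : ℚ) := by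
    rw [gammaCoef, hS]
    simp only [hT]
    push_cast
    rw [Finset.sum_div]
    refine Finset.sum_congr rfl fun m hm => ?_
    obtain ⟨hm1, hmle, hm2, hmn⟩ := hmem m hm
    have hkm : (∑ j, β j / m) * m = n := hdivsum m hm2
    set k := ∑ j, β j / m with hk
    have hk0 : 0 < k := by
      rcases Nat.eq_zero_or_pos k with h | h
      · rw [h, zero_mul] at hkm; omega
      · exact h
    have hfact : (∏ j, ((β j / m).factorial : ℚ))
        * ((Nat.multinomial Finset.univ (fun j => β j / m) : ℕ) : ℚ) = (k.factorial : ℚ) := by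
      exact_mod_cast congrArg (Nat.cast (R := ℚ)) (Nat.multinomial_spec Finset.univ (fun j => β j / m))
    have hkfac : (k.factorial : ℚ) = (k : ℚ) * ((k - 1).factorial : ℚ) := by
      exact_mod_cast (Nat.mul_factorial_pred hk0.ne').symm
    have hsign : ∏ j, (-(a j : ℚ)) ^ (β j / m) = (-1 : ℚ) ^ k * ∏ j, (a j : ℚ) ^ (β j / m) := by
      rw [hk, ← Finset.prod_pow_eq_pow_sum, ← Finset.prod_mul_distrib]
      exact Finset.prod_congr rfl fun j _ => by rw [neg_pow]
    have hm0 : (m : ℚ) ≠ 0 := Nat.cast_ne_zero.mpr (by omega)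
    have hF0 : (∏ j, ((β j / m).factorial : ℚ)) ≠ 0 :=
      (Finset.prod_pos fun j _ => by exact_mod_cast Nat.factorial_pos _).ne'
    have hn0' : (n : ℚ) ≠ 0 := Nat.cast_ne_zero.mpr hn0.ne'
    have hkmQ : (k : ℚ) * (m : ℚ) = (n : ℚ) := by exact_mod_cast hkm
    rw [hsign]
    field_simp
    ring_nf
    linear_combination
      -(((ArithmeticFunction.moebius m : ℤ) : ℚ) * (((k - 1).factorial : ℕ) : ℚ)
          * (∏ x, (a x : ℚ) ^ (β x / m))) * hkmQ
        - (((ArithmeticFunction.moebius m : ℤ) : ℚ) * (∏ x, (a x : ℚ) ^ (β x / m)) * (m : ℚ)) * hkfac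
        - (((ArithmeticFunction.moebius m : ℤ) : ℚ) * (∏ x, (a x : ℚ) ^ (β x / m)) * (m : ℚ)) * hfact
  -- STEP B : (n : ℤ) ∣ S
  have key : ∀ p : ℕ, p.Prime → (p : ℤ) ^ (n.factorization p) ∣ S := by
    intro p hp
    by_cases hall : ∀ j, p ∣ β j
    · -- pairing case
      set v := n.factorization p with hv
      have hSq : S = ∑ m ∈ Ms.filter Squarefree, (ArithmeticFunction.moebius m : ℤ) * T m := by
        rw [hS]
        refine (Finset.sum_filter_of_ne ?_).symm
        intro m hm hne
        by_contra hsq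
        apply hne
        rw [ArithmeticFunction.moebius_eq_zero_of_not_squarefree hsq]
        simp
      set A := (Ms.filter Squarefree).filter (fun m => ¬ p ∣ m) with hA
      set B := (Ms.filter Squarefree).filter (fun m => p ∣ m) with hB
      have hmemA : ∀ m ∈ A, m ∈ Ms ∧ Squarefree m ∧ ¬ p ∣ m := by
        intro m hm
        rw [hA, Finset.mem_filter, Finset.mem_filter] at hm
        exact ⟨hm.1.1, hm.1.2, hm.2⟩
      have hsplit : S = (∑ m ∈ B, (ArithmeticFunction.moebius m : ℤ) * T m)
          + ∑ m ∈ A, (ArithmeticFunction.moebius m : ℤ) * T m := by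
        rw [hSq, hA, hB, Finset.sum_filter_add_sum_filter_not]
      have hBA : ∑ m ∈ B, (ArithmeticFunction.moebius m : ℤ) * T m
          = ∑ m ∈ A, (ArithmeticFunction.moebius (p * m) : ℤ) * T (p * m) := by
        refine Finset.sum_nbij' (fun m => m / p) (fun m => p * m) ?_ ?_ ?_ ?_ ?_
        · -- B → A
          intro m hm
          rw [hB, Finset.mem_filter] at hm
          obtain ⟨hmMs, hpm⟩ := hm
          rw [Finset.mem_filter] at hmMs
          obtain ⟨hmMs, hsq⟩ := hmMs
          obtain ⟨h1, h2, h3, h4⟩ := hmem m hmMs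
          have hd : m / p ∣ m := Nat.div_dvd_of_dvd hpm
          rw [hA, Finset.mem_filter, Finset.mem_filter, hMs, Finset.mem_filter, Finset.mem_Icc]
          refine ⟨⟨⟨⟨?_, le_trans (Nat.div_le_self _ _) h2⟩, fun j => hd.trans (h3 j)⟩,
            hsq.squarefree_of_dvd hd⟩, ?_⟩
          · have := Nat.le_of_dvd (by omega) hpm
            exact Nat.one_le_div_iff hp.pos |>.mpr this
          · intro hcon
            have : p * p ∣ m := by
              rwa [Nat.dvd_div_iff_mul_dvd hpm] at hcon
            exact hp.one_lt.ne' (Nat.isUnit_iff.mp (hsq p this))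
        · -- A → B
          intro m hm
          obtain ⟨hmMs, hsq, hpm⟩ := hmemA m hm
          obtain ⟨h1, h2, h3, h4⟩ := hmem m hmMs
          have hcop : Nat.Coprime p m := (Nat.Prime.coprime_iff_not_dvd hp).mpr hpm
          have hdvd : ∀ j, p * m ∣ β j := fun j => hcop.mul_dvd_of_dvd_of_dvd (hall j) (h3 j)
          have hpmn : p * m ∣ n := Finset.dvd_sum fun j _ => hdvd j
          rw [hB, Finset.mem_filter, Finset.mem_filter, hMs, Finset.mem_filter, Finset.mem_Icc]
          exact ⟨⟨⟨⟨Nat.one_le_iff_ne_zero.mpr (Nat.mul_ne_zero hp.pos.ne' (by omega)), Nat.le_of_dvd hn0 hpmn⟩, hdvd⟩,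
            (Nat.squarefree_mul hcop).mpr ⟨hp.squarefree, hsq⟩⟩, dvd_mul_right p m⟩
        · intro m hm
          rw [hB, Finset.mem_filter] at hm
          exact Nat.mul_div_cancel' hm.2
        · intro m hm
          exact Nat.mul_div_cancel_left m hp.pos
        · intro m hm
          rw [hB, Finset.mem_filter] at hm
          rw [Nat.mul_div_cancel' hm.2]
      rw [hsplit, hBA, ← Finset.sum_add_distrib]
      refine Finset.dvd_sum fun m hm => ?_
      obtain ⟨hmMs, hsq, hpm⟩ := hmemA m hm
      obtain ⟨h1, h2, h3, h4⟩ := hmem m hmMs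
      have hcop : Nat.Coprime p m := (Nat.Prime.coprime_iff_not_dvd hp).mpr hpm
      have hmoe : (ArithmeticFunction.moebius (p * m) : ℤ) = -(ArithmeticFunction.moebius m : ℤ) := by
        rw [ArithmeticFunction.isMultiplicative_moebius.map_mul_of_coprime hcop,
          ArithmeticFunction.moebius_apply_prime hp]
        ring
      have hpb : ∀ j, p ∣ β j / m := by
        intro j
        rw [Nat.dvd_div_iff_mul_dvd (h3 j)]
        exact (hcop.symm.mul_dvd_of_dvd_of_dvd (h3 j) (hall j))
      have hTpm : T (p * m) = (Nat.multinomial Finset.univ (fun j => (β j / m) / p) : ℤ)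
          * ∏ j, (-(a j)) ^ ((β j / m) / p) := by
        have harg : ∀ j, β j / (p * m) = β j / m / p := fun j => by
          rw [Nat.div_div_eq_div_mul, mul_comm]
        rw [hT]
        simp only [harg]
      have hfac : (∑ j, β j / m).factorization p = v := by
        have hsm : (∑ j, β j / m) * m = n := hdivsum m h3
        have hs0 : (∑ j, β j / m) ≠ 0 := by
          intro h0
          rw [h0, zero_mul] at hsm
          omega
        have := Nat.factorization_mul hs0 (by omega : m ≠ 0)
        rw [hsm] at this
        rw [hv, this]
        simp [Nat.factorization_eq_zero_of_not_dvd hpm]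
      have hkey := key_congruence p hp (fun j => -(a j)) (fun j => β j / m) hpb
      rw [hfac] at hkey
      have heq : (ArithmeticFunction.moebius (p * m) : ℤ) * T (p * m)
          + (ArithmeticFunction.moebius m : ℤ) * T m
          = (ArithmeticFunction.moebius m : ℤ) * (T m - T (p * m)) := by
        rw [hmoe]; ring
      rw [heq]
      refine Dvd.dvd.mul_left ?_ _
      rw [hTpm]
      simp only [hT]
      simpa using hkey
    · -- non-pairing case
      push_neg at hall
      obtain ⟨j0, hj0⟩ := hall
      rw [hS]
      refine Finset.dvd_sum fun m hm => ?_
      obtain ⟨h1, h2, h3, h4⟩ := hmem m hm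
      have hpm : ¬ p ∣ m := fun h => hj0 (h.trans (h3 j0))
      have hvd : p ^ (n.factorization p) ∣ ∑ j, β j / m := by
        have hd1 : p ^ n.factorization p ∣ n := Nat.ordProj_dvd n p
        have hcop : Nat.Coprime (p ^ n.factorization p) m :=
          Nat.Coprime.pow_left _ ((Nat.Prime.coprime_iff_not_dvd hp).mpr hpm)
        have hsm : (∑ j, β j / m) * m = n := hdivsum m h3
        refine hcop.dvd_of_dvd_mul_right ?_
        rw [hsm]
        exact hd1
      have hj0' : ¬ p ∣ β j0 / m := fun h => hj0 (h.trans (Nat.div_dvd_of_dvd (h3 j0)))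
      have hmd : p ^ n.factorization p ∣ Nat.multinomial Finset.univ (fun j => β j / m) :=
        pow_dvd_multinomial p hp (fun j => β j / m) j0 hj0' _ hvd
      have hmdz : (p : ℤ) ^ n.factorization p
          ∣ (Nat.multinomial Finset.univ (fun j => β j / m) : ℤ) := by
        exact_mod_cast Int.natCast_dvd_natCast.mpr hmd
      exact Dvd.dvd.mul_left (Dvd.dvd.mul_right hmdz _) _
  -- assemble
  have hB : (n : ℤ) ∣ S := by
    have hnat : n ∣ S.natAbs := by
      rw [Nat.dvd_iff_prime_pow_dvd_dvd]
      intro p k hp hpk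
      have hk : k ≤ n.factorization p :=
        (Nat.Prime.pow_dvd_iff_le_factorization hp hn0.ne').mp hpk
      have hdvd : ((p ^ k : ℕ) : ℤ) ∣ S := by
        push_cast
        exact (pow_dvd_pow (p : ℤ) hk).trans (key p hp)
      exact Int.natCast_dvd.mp hdvd
    exact Int.natCast_dvd.mpr hnat
  obtain ⟨z, hz⟩ := hB
  refine ⟨z, ?_⟩
  rw [hA, hz]
  push_cast
  rw [mul_comm, mul_div_assoc, div_self (by exact_mod_cast hn0.ne' : (n : ℚ) ≠ 0), mul_one]
end

section
/- For every β ∈ ℕʳ∖{0} one has |γ(β)| ≤ (τ(‖β‖)/‖β‖)·C^{−‖β‖}, where τ(k) denotes the number of positive divisors of k; in particular |γ(β)| = O(C^{−‖β‖}) uniformly in β. -/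
open Finset

set_option maxHeartbeats 1000000

/-- Multinomial bound: `multinomial(b) * ∏ x^{b j} ≤ (∑ x)^{∑ b}` for nonneg `x`. -/
lemma multinomial_mul_prod_pow_le {r : ℕ} (x : Fin r → ℚ) (hx : ∀ j, 0 ≤ x j)
    (b : Fin r → ℕ) :
    (Nat.multinomial Finset.univ b : ℚ) * ∏ j, x j ^ b j ≤ (∑ j, x j) ^ (∑ j, b j) := by
  rw [Finset.sum_pow_eq_sum_piAntidiag Finset.univ x (∑ j, b j)]
  refine Finset.single_le_sum (f := fun k => (Nat.multinomial Finset.univ k : ℚ) * ∏ j, x j ^ k j)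
    (fun k _ => ?_) ?_
  · exact mul_nonneg (Nat.cast_nonneg _)
      (Finset.prod_nonneg fun j _ => pow_nonneg (hx j) _)
  · simp [Finset.mem_piAntidiag]

lemma key_bound (r : ℕ) (hr : 1 ≤ r) (a : Fin r → ℤ) (ha : ∀ j, a j ≠ 0)
    (β : Fin r → ℕ) (hβ : β ≠ 0) :
    |gammaCoef r a β| ≤
      ((∑ j, β j).divisors.card : ℚ) / ((∑ j, β j : ℕ) : ℚ) *
        ((∑ j, |a j| : ℤ) : ℚ) ^ (∑ j, β j) := by
  unfold gammaCoef
  obtain ⟨n, hn⟩ : ∃ n, n = ∑ j, β j := ⟨_, rfl⟩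
  rw [← hn]
  have hn0 : 0 < n := by
    rcases Function.ne_iff.1 hβ with ⟨j, hj⟩
    rw [hn]
    exact Finset.sum_pos' (fun _ _ => Nat.zero_le _) ⟨j, Finset.mem_univ j, Nat.pos_of_ne_zero hj⟩
  obtain ⟨S, hS⟩ : ∃ S : ℚ, S = ((∑ j, |a j| : ℤ) : ℚ) := ⟨_, rfl⟩
  rw [← hS]
  have hSeq : S = ∑ j, (|a j| : ℚ) := by rw [hS]; push_cast; rfl
  have hS1 : 1 ≤ S := by
    rw [hSeq]
    calc (1 : ℚ) = ∑ j : Fin r, if j = ⟨0, hr⟩ then 1 else 0 := by simp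
    _ ≤ ∑ j, (|a j| : ℚ) := by
        apply Finset.sum_le_sum
        intro j _
        have h1 : (1:ℤ) ≤ |a j| := Int.one_le_abs (ha j)
        split <;> [exact_mod_cast h1; positivity]
  have hS0 : 0 < S := lt_of_lt_of_le one_pos hS1
  -- bound each term
  have hterm : ∀ m ∈ (Finset.Icc 1 n).filter (fun m => ∀ j, m ∣ β j),
      |(-1 : ℚ) ^ (∑ j, β j / m) * ((ArithmeticFunction.moebius m : ℤ) : ℚ) / (m : ℚ) *
        (((∑ j, β j / m) - 1).factorial : ℚ) / ((∏ j, (β j / m).factorial : ℕ) : ℚ) *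
        ∏ j, (a j : ℚ) ^ (β j / m)| ≤ S ^ n / n := by
    intro m hm
    rw [Finset.mem_filter, Finset.mem_Icc] at hm
    obtain ⟨⟨hm1, hmn⟩, hmd⟩ := hm
    obtain ⟨b, hbj⟩ : ∃ b : Fin r → ℕ, ∀ j, β j / m = b j := ⟨fun j => β j / m, fun _ => rfl⟩
    simp only [hbj]
    obtain ⟨k, hk⟩ : ∃ k, k = ∑ j, b j := ⟨_, rfl⟩
    rw [← hk]
    have hmk : m * k = n := by
      rw [hk, hn, Finset.mul_sum]
      exact Finset.sum_congr rfl fun j _ => by rw [← hbj j]; exact Nat.mul_div_cancel' (hmd j)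
    have hk0 : 0 < k := Nat.pos_of_ne_zero fun h => by rw [h, mul_zero] at hmk; omega
    have hkn : k ≤ n := by
      calc k ≤ m * k := Nat.le_mul_of_pos_left k (by omega)
        _ = n := hmk
    have hmQ : (0:ℚ) < m := by exact_mod_cast hm1
    have hkQ : (0:ℚ) < k := by exact_mod_cast hk0
    have hprod0 : (0:ℚ) < ((∏ j, (b j).factorial : ℕ) : ℚ) := by
      have h := Finset.prod_pos (fun j (_ : j ∈ Finset.univ) => Nat.factorial_pos (b j))
      exact_mod_cast h
    -- rewrite (k-1)!/∏b! as multinomial/k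
    have hfact : ((k - 1).factorial : ℚ) / ((∏ j, (b j).factorial : ℕ) : ℚ) =
        (Nat.multinomial Finset.univ b : ℚ) / k := by
      rw [div_eq_div_iff hprod0.ne' hkQ.ne']
      have h1 : (∏ j, (b j).factorial) * Nat.multinomial Finset.univ b = k.factorial := by
        rw [hk]; exact Nat.multinomial_spec Finset.univ b
      have h3 : (k - 1).factorial * k = Nat.multinomial Finset.univ b * ∏ j, (b j).factorial := by
        rw [mul_comm (Nat.multinomial _ _), h1, ← Nat.mul_factorial_pred hk0.ne']; ring
      exact_mod_cast h3
    have hmoeb : |((ArithmeticFunction.moebius m : ℤ) : ℚ)| ≤ 1 := by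
      have hμ := ArithmeticFunction.abs_moebius_le_one (n := m)
      exact_mod_cast hμ
    have hprodnn : (0:ℚ) ≤ ∏ j, (|a j| : ℚ) ^ b j :=
      Finset.prod_nonneg fun j _ => pow_nonneg (by positivity) _
    have heq : |(-1 : ℚ) ^ k * ((ArithmeticFunction.moebius m : ℤ) : ℚ) / (m : ℚ) *
        ((k - 1).factorial : ℚ) / ((∏ j, (b j).factorial : ℕ) : ℚ) *
        ∏ j, (a j : ℚ) ^ b j| =
        |((ArithmeticFunction.moebius m : ℤ) : ℚ)| / (m : ℚ) *
          (((k - 1).factorial : ℚ) / ((∏ j, (b j).factorial : ℕ) : ℚ)) *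
          ∏ j, (|a j| : ℚ) ^ b j := by
      rw [abs_mul, abs_div, abs_mul, abs_div, abs_mul, abs_pow, abs_neg, abs_one, one_pow,
        one_mul, abs_of_pos hmQ,
        abs_of_nonneg (show (0:ℚ) ≤ ((k - 1).factorial : ℚ) from Nat.cast_nonneg _),
        abs_of_nonneg hprod0.le]
      simp only [Finset.abs_prod, abs_pow, Int.cast_abs]
      ring
    calc |(-1 : ℚ) ^ k * ((ArithmeticFunction.moebius m : ℤ) : ℚ) / (m : ℚ) *
          ((k - 1).factorial : ℚ) / ((∏ j, (b j).factorial : ℕ) : ℚ) *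
          ∏ j, (a j : ℚ) ^ b j|
        = |((ArithmeticFunction.moebius m : ℤ) : ℚ)| / (m : ℚ) *
          (((k - 1).factorial : ℚ) / ((∏ j, (b j).factorial : ℕ) : ℚ)) *
          ∏ j, (|a j| : ℚ) ^ b j := heq
      _ ≤ (1 / m) * ((Nat.multinomial Finset.univ b : ℚ) / k) * ∏ j, (|a j| : ℚ) ^ b j := by
          rw [hfact]
          refine mul_le_mul_of_nonneg_right (mul_le_mul_of_nonneg_right ?_
            (div_nonneg (Nat.cast_nonneg _) hkQ.le)) hprodnn
          exact (div_le_div_iff_of_pos_right hmQ).mpr hmoeb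
      _ = ((Nat.multinomial Finset.univ b : ℚ) * ∏ j, (|a j| : ℚ) ^ b j) / (m * k) := by
          field_simp
          try ring
      _ ≤ S ^ k / (m * k) := by
          have hmk0 : (0:ℚ) < (m:ℚ) * k := by positivity
          refine (div_le_div_iff_of_pos_right hmk0).mpr ?_
          rw [hSeq, hk]
          exact multinomial_mul_prod_pow_le (fun j => (|a j| : ℚ)) (fun j => by positivity) b
      _ = S ^ k / n := by rw [← hmk]; push_cast; ring
      _ ≤ S ^ n / n := by
          have hnQ : (0:ℚ) < (n:ℚ) := by exact_mod_cast hn0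
          exact (div_le_div_iff_of_pos_right hnQ).mpr (pow_le_pow_right₀ hS1 hkn)
  calc |∑ m ∈ (Finset.Icc 1 n).filter (fun m => ∀ j, m ∣ β j),
        (-1 : ℚ) ^ (∑ j, β j / m) * ((ArithmeticFunction.moebius m : ℤ) : ℚ) / (m : ℚ) *
          (((∑ j, β j / m) - 1).factorial : ℚ) / ((∏ j, (β j / m).factorial : ℕ) : ℚ) *
          ∏ j, (a j : ℚ) ^ (β j / m)|
      ≤ ∑ m ∈ (Finset.Icc 1 n).filter (fun m => ∀ j, m ∣ β j),
        |(-1 : ℚ) ^ (∑ j, β j / m) * ((ArithmeticFunction.moebius m : ℤ) : ℚ) / (m : ℚ) *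
          (((∑ j, β j / m) - 1).factorial : ℚ) / ((∏ j, (β j / m).factorial : ℕ) : ℚ) *
          ∏ j, (a j : ℚ) ^ (β j / m)| := Finset.abs_sum_le_sum_abs _ _
    _ ≤ ∑ _m ∈ (Finset.Icc 1 n).filter (fun m => ∀ j, m ∣ β j), S ^ n / n :=
        Finset.sum_le_sum hterm
    _ = (((Finset.Icc 1 n).filter (fun m => ∀ j, m ∣ β j)).card : ℚ) * (S ^ n / n) := by
        rw [Finset.sum_const, nsmul_eq_mul]
    _ ≤ (n.divisors.card : ℚ) * (S ^ n / n) := by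
        have hcard : ((Finset.Icc 1 n).filter (fun m => ∀ j, m ∣ β j)).card ≤
            n.divisors.card := by
          apply Finset.card_le_card
          intro m hm
          rw [Finset.mem_filter, Finset.mem_Icc] at hm
          rw [Nat.mem_divisors]
          exact ⟨hn ▸ Finset.dvd_sum fun j _ => hm.2 j, hn0.ne'⟩
        have hpos : (0:ℚ) ≤ S ^ n / n := by positivity
        exact mul_le_mul_of_nonneg_right (by exact_mod_cast hcard) hpos
    _ = (n.divisors.card : ℚ) / n * S ^ n := by ring

/-- `|γ(β)| ≤ (τ(‖β‖)/‖β‖)·C^{−‖β‖}` where `C = 1/(|a₁|+⋯+|a_r|)`,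
`τ(k)` is the number of positive divisors of `k`; in particular
`|γ(β)| = O(C^{−‖β‖})` uniformly in `β`. -/
theorem stmt_6 (r : ℕ) (hr : 1 ≤ r) (a : Fin r → ℤ) (ha : ∀ j, a j ≠ 0)
    (β : Fin r → ℕ) (hβ : β ≠ 0) :
    |gammaCoef r a β| ≤
      ((∑ j, β j).divisors.card : ℚ) / ((∑ j, β j : ℕ) : ℚ) *
        ((∑ j, |a j| : ℤ) : ℚ) ^ (∑ j, β j) ∧
    ∃ K : ℚ, 0 < K ∧ ∀ β' : Fin r → ℕ, β' ≠ 0 →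
      |gammaCoef r a β'| ≤ K * ((∑ j, |a j| : ℤ) : ℚ) ^ (∑ j, β' j) := by
  refine ⟨key_bound r hr a ha β hβ, 1, one_pos, fun β' hβ' => ?_⟩
  refine (key_bound r hr a ha β' hβ').trans ?_
  have hn0 : 0 < ∑ j, β' j := by
    rcases Function.ne_iff.1 hβ' with ⟨j, hj⟩
    exact Finset.sum_pos' (fun _ _ => Nat.zero_le _) ⟨j, Finset.mem_univ j, Nat.pos_of_ne_zero hj⟩
  have hnQ : (0:ℚ) < ((∑ j, β' j : ℕ) : ℚ) := by exact_mod_cast hn0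
  have hcard : (∑ j, β' j).divisors.card ≤ ∑ j, β' j := by
    calc (∑ j, β' j).divisors.card ≤ (Finset.Icc 1 (∑ j, β' j)).card := by
          apply Finset.card_le_card
          intro d hd
          rw [Finset.mem_Icc]
          exact ⟨Nat.pos_of_mem_divisors hd, Nat.le_of_dvd hn0 (Nat.mem_divisors.1 hd).1⟩
      _ = ∑ j, β' j := by rw [Nat.card_Icc]; omega
  have hd1 : ((∑ j, β' j).divisors.card : ℚ) / ((∑ j, β' j : ℕ) : ℚ) ≤ 1 := by
    rw [div_le_one hnQ]
    exact_mod_cast hcard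
  have hSnn : (0:ℚ) ≤ ((∑ j, |a j| : ℤ) : ℚ) ^ (∑ j, β' j) := by
    apply pow_nonneg
    have : (0:ℤ) ≤ ∑ j, |a j| := Finset.sum_nonneg fun j _ => abs_nonneg _
    exact_mod_cast this
  calc ((∑ j, β' j).divisors.card : ℚ) / ((∑ j, β' j : ℕ) : ℚ) *
        ((∑ j, |a j| : ℤ) : ℚ) ^ (∑ j, β' j)
      ≤ 1 * ((∑ j, |a j| : ℤ) : ℚ) ^ (∑ j, β' j) := mul_le_mul_of_nonneg_right hd1 hSnn
    _ = 1 * ((∑ j, |a j| : ℤ) : ℚ) ^ (∑ j, β' j) := rfl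
end

section
/- For every b ∈ ℕʳ∖{0}: Σ_{(m,β): m ∈ ℕ≥1, β ∈ ℕʳ∖{0}, m·β = b} ‖β‖·γ(β) = (−1)^{‖b‖} · (‖b‖!/(b₁!⋯b_r!)) · a₁^{b₁}⋯a_r^{b_r}. -/
open Finset

lemma moebius_divisor_sum (n : ℕ) :
    ∑ d ∈ n.divisors, (ArithmeticFunction.moebius d : ℤ) = if n = 1 then 1 else 0 := by
  have h : ((ArithmeticFunction.moebius * ↑ArithmeticFunction.zeta : ArithmeticFunction ℤ)) n
      = (1 : ArithmeticFunction ℤ) n := by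
    rw [ArithmeticFunction.moebius_mul_coe_zeta]
  rwa [ArithmeticFunction.coe_mul_zeta_apply, ArithmeticFunction.one_apply] at h

/-- for every `b ∈ ℕʳ∖{0}`,
`Σ_{(m,β): m·β = b} ‖β‖·γ(β) = (−1)^{‖b‖}·(‖b‖!/(b₁!⋯b_r!))·a₁^{b₁}⋯a_r^{b_r}`;
the pairs `(m,β)` with `m ∈ ℕ≥1`, `β ∈ ℕʳ∖{0}` and `m·β = b` are exactly given by the
common divisors `m` of the entries of `b` (with `1 ≤ m ≤ ‖b‖`) and `β = b/m`. -/
theorem stmt_7 (r : ℕ) (hr : 1 ≤ r) (a : Fin r → ℤ)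
    (b : Fin r → ℕ) (hb : b ≠ 0) :
    ∑ m ∈ (Finset.Icc 1 (∑ j, b j)).filter (fun m => ∀ j, m ∣ b j),
        ((∑ j, b j / m : ℕ) : ℚ) * gammaCoef r a (fun j => b j / m)
      = (-1 : ℚ) ^ (∑ j, b j) * ((∑ j, b j).factorial : ℚ)
          / ((∏ j, (b j).factorial : ℕ) : ℚ) * ∏ j, (a j : ℚ) ^ (b j) := by
  classical
  obtain ⟨j0, hj0⟩ : ∃ j, b j ≠ 0 := by
    by_contra h; push_neg at h; exact hb (funext h)
  set S : ℕ := ∑ j, b j with hSdef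
  have hS1 : 1 ≤ S :=
    le_trans (Nat.one_le_iff_ne_zero.2 hj0)
      (Finset.single_le_sum (f := fun j => b j) (fun i _ => Nat.zero_le _)
        (Finset.mem_univ j0))
  set D : Finset ℕ := (Finset.Icc 1 S).filter (fun m => ∀ j, m ∣ b j) with hDdef
  set X : ℕ → ℕ := fun n => ∑ j, b j / n with hXdef
  set G : ℕ → ℚ := fun n =>
    (-1 : ℚ) ^ (X n) * ((X n - 1).factorial : ℚ) / ((∏ j, (b j / n).factorial : ℕ) : ℚ) *
      ∏ j, (a j : ℚ) ^ (b j / n) with hGdef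
  have hmulX : ∀ m : ℕ, (∀ j, m ∣ b j) → m * X m = S := by
    intro m hm
    simp only [hXdef, Finset.mul_sum, hSdef]
    exact Finset.sum_congr rfl fun j _ => Nat.mul_div_cancel' (hm j)
  have hXpos : ∀ m : ℕ, 1 ≤ m → (∀ j, m ∣ b j) → 1 ≤ X m := by
    intro m hm1 hm
    have h1 : 0 < b j0 / m :=
      Nat.div_pos (Nat.le_of_dvd (Nat.pos_of_ne_zero hj0) (hm j0)) hm1
    exact le_trans h1
      (Finset.single_le_sum (f := fun j => b j / m) (fun i _ => Nat.zero_le _)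
        (Finset.mem_univ j0))
  -- step 1: unfold gammaCoef, push the factor inside, collect into a sigma-sum
  have step1 :
      (∑ m ∈ D, ((X m : ℕ) : ℚ) * gammaCoef r a (fun j => b j / m))
        = ∑ p ∈ D.sigma (fun m =>
            (Finset.Icc 1 (∑ j, b j / m)).filter (fun m' => ∀ j, m' ∣ b j / m)),
            ((X p.1 : ℕ) : ℚ) *
              ((-1 : ℚ) ^ (∑ j, (b j / p.1) / p.2) *
                ((ArithmeticFunction.moebius p.2 : ℤ) : ℚ) / (p.2 : ℚ) *
                (((∑ j, (b j / p.1) / p.2) - 1).factorial : ℚ) /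
                  ((∏ j, ((b j / p.1) / p.2).factorial : ℕ) : ℚ) *
                ∏ j, (a j : ℚ) ^ ((b j / p.1) / p.2)) := by
    rw [Finset.sum_sigma]
    refine Finset.sum_congr rfl fun m hm => ?_
    rw [gammaCoef, Finset.mul_sum]
  -- step 2: reindex pairs (m, m') ↦ (n, d) = (m*m', m')
  have step2 :
      (∑ p ∈ D.sigma (fun m =>
            (Finset.Icc 1 (∑ j, b j / m)).filter (fun m' => ∀ j, m' ∣ b j / m)),
            ((X p.1 : ℕ) : ℚ) *
              ((-1 : ℚ) ^ (∑ j, (b j / p.1) / p.2) *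
                ((ArithmeticFunction.moebius p.2 : ℤ) : ℚ) / (p.2 : ℚ) *
                (((∑ j, (b j / p.1) / p.2) - 1).factorial : ℚ) /
                  ((∏ j, ((b j / p.1) / p.2).factorial : ℕ) : ℚ) *
                ∏ j, (a j : ℚ) ^ ((b j / p.1) / p.2)))
        = ∑ q ∈ D.sigma (fun n => n.divisors),
            ((X q.1 : ℕ) : ℚ) * ((ArithmeticFunction.moebius q.2 : ℤ) : ℚ) * G q.1 := by
    refine Finset.sum_nbij' (fun p => ⟨p.1 * p.2, p.2⟩) (fun q => ⟨q.1 / q.2, q.2⟩)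
      ?_ ?_ ?_ ?_ ?_
    · rintro ⟨m, m'⟩ hp
      simp only [hDdef, Finset.mem_sigma, Finset.mem_filter, Finset.mem_Icc] at hp
      obtain ⟨⟨⟨hm1, hmS⟩, hm⟩, ⟨hm'1, hm'le⟩, hm'⟩ := hp
      have hmm' : ∀ j, m * m' ∣ b j := fun j =>
        (Nat.dvd_div_iff_mul_dvd (hm j)).1 (hm' j)
      simp only [hDdef, Finset.mem_sigma, Finset.mem_filter, Finset.mem_Icc,
        Nat.mem_divisors]
      refine ⟨⟨⟨Nat.one_le_iff_ne_zero.2 (Nat.mul_ne_zero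
          (Nat.one_le_iff_ne_zero.1 hm1) (Nat.one_le_iff_ne_zero.1 hm'1)), ?_⟩, hmm'⟩,
        Dvd.intro_left m rfl, Nat.mul_ne_zero
          (Nat.one_le_iff_ne_zero.1 hm1) (Nat.one_le_iff_ne_zero.1 hm'1)⟩
      calc m * m' ≤ m * (∑ j, (b j / m)) := Nat.mul_le_mul_left m hm'le
        _ = S := hmulX m hm
    · rintro ⟨n, d⟩ hq
      simp only [hDdef, Finset.mem_sigma, Finset.mem_filter, Finset.mem_Icc,
        Nat.mem_divisors] at hq
      obtain ⟨⟨⟨hn1, hnS⟩, hn⟩, hdn, hn0⟩ := hq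
      have hd0 : d ≠ 0 := by
        rintro rfl; exact hn0 (Nat.eq_zero_of_zero_dvd hdn)
      have hnd : ∀ j, n / d ∣ b j := fun j => dvd_trans (Nat.div_dvd_of_dvd hdn) (hn j)
      have hnd1 : 1 ≤ n / d :=
        Nat.div_pos (Nat.le_of_dvd (Nat.pos_of_ne_zero hn0) hdn) (Nat.pos_of_ne_zero hd0)
      have hnd0 : n / d ≠ 0 := Nat.one_le_iff_ne_zero.1 hnd1
      have hkey : ∀ j, (b j / (n / d)) = d * (b j / n) := by
        intro j
        obtain ⟨c, hc⟩ := hn j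
        have h1 : b j / n = c := by
          rw [hc, Nat.mul_div_cancel_left _ (Nat.pos_of_ne_zero hn0)]
        have h2 : b j = (n / d) * (d * c) := by
          rw [hc]
          conv_lhs => rw [← Nat.div_mul_cancel hdn]
          ring
        rw [h1, h2, Nat.mul_div_cancel_left _ (Nat.pos_of_ne_zero hnd0)]
      simp only [hDdef, Finset.mem_sigma, Finset.mem_filter, Finset.mem_Icc]
      refine ⟨⟨⟨hnd1, le_trans (Nat.div_le_self n d) hnS⟩, hnd⟩, ⟨?_, ?_⟩, fun j => ?_⟩
      · exact Nat.one_le_iff_ne_zero.2 hd0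
      · calc d = d * 1 := (Nat.mul_one d).symm
          _ ≤ d * X n := Nat.mul_le_mul_left d (hXpos n hn1 hn)
          _ = ∑ j, b j / (n / d) := by
              simp only [hXdef, Finset.mul_sum]
              exact Finset.sum_congr rfl fun j _ => (hkey j).symm
      · rw [hkey j]; exact Dvd.intro _ rfl
    · rintro ⟨m, m'⟩ hp
      simp only [hDdef, Finset.mem_sigma, Finset.mem_filter, Finset.mem_Icc] at hp
      have hm'0 : 0 < m' := hp.2.1.1
      simp [Nat.mul_div_cancel _ hm'0]
    · rintro ⟨n, d⟩ hq
      simp only [Finset.mem_sigma, Nat.mem_divisors] at hq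
      simp [Nat.div_mul_cancel hq.2.1]
    · rintro ⟨m, m'⟩ hp
      simp only [hDdef, Finset.mem_sigma, Finset.mem_filter, Finset.mem_Icc] at hp
      obtain ⟨⟨⟨hm1, hmS⟩, hm⟩, ⟨hm'1, hm'le⟩, hm'⟩ := hp
      have hm'0 : (m' : ℚ) ≠ 0 := by
        exact_mod_cast Nat.one_le_iff_ne_zero.1 hm'1
      have hdd : ∀ j, (b j / m) / m' = b j / (m * m') := fun j => Nat.div_div_eq_div_mul _ _ _
      have hXm : X m = m' * X (m * m') := by
        simp only [hXdef, Finset.mul_sum]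
        refine Finset.sum_congr rfl fun j _ => ?_
        rw [← hdd j]
        exact (Nat.mul_div_cancel' (hm' j)).symm
      have hsum : (∑ j, (b j / m) / m') = X (m * m') :=
        Finset.sum_congr rfl fun j _ => hdd j
      have hprod1 : (∏ j, ((b j / m) / m').factorial) = ∏ j, (b j / (m * m')).factorial :=
        Finset.prod_congr rfl fun j _ => by rw [hdd j]
      have hprod2 : (∏ j, (a j : ℚ) ^ ((b j / m) / m')) = ∏ j, (a j : ℚ) ^ (b j / (m * m')) :=
        Finset.prod_congr rfl fun j _ => by rw [hdd j]
      simp only [hsum, hprod1, hprod2, hXm, hGdef]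
      push_cast
      field_simp
  rw [step1, step2, Finset.sum_sigma]
  have step3 : ∀ n ∈ D,
      (∑ d ∈ n.divisors, ((X n : ℕ) : ℚ) * ((ArithmeticFunction.moebius d : ℤ) : ℚ) * G n)
        = if n = 1 then ((X 1 : ℕ) : ℚ) * G 1 else 0 := by
    intro n hn
    have h : (∑ d ∈ n.divisors,
          ((X n : ℕ) : ℚ) * ((ArithmeticFunction.moebius d : ℤ) : ℚ) * G n)
        = ((X n : ℕ) : ℚ) * G n *
            (((∑ d ∈ n.divisors, (ArithmeticFunction.moebius d : ℤ)) : ℤ) : ℚ) := by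
      push_cast
      rw [Finset.mul_sum]
      exact Finset.sum_congr rfl fun d _ => by ring
    rw [h, moebius_divisor_sum]
    split_ifs with hcase
    · subst hcase; push_cast; ring
    · simp
  rw [Finset.sum_congr rfl step3, Finset.sum_ite_eq' D 1 (fun _ => ((X 1 : ℕ) : ℚ) * G 1)]
  have h1D : (1 : ℕ) ∈ D := by
    simp only [hDdef, Finset.mem_filter, Finset.mem_Icc]
    exact ⟨⟨le_rfl, hS1⟩, fun j => one_dvd _⟩
  rw [if_pos h1D]
  have hX1 : X 1 = S := by simp [hXdef, hSdef]
  have hfac : (S : ℚ) * ((S - 1).factorial : ℚ) = (S.factorial : ℚ) := by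
    exact_mod_cast congrArg (Nat.cast : ℕ → ℚ)
      (Nat.mul_factorial_pred (Nat.pos_iff_ne_zero.1 (Nat.lt_of_lt_of_le Nat.zero_lt_one hS1)))
  simp only [hGdef, hX1, Nat.div_one]
  rw [← hfac]
  ring
end

section
/- Let h(X) = 1 + Σ_{m=1}^r b_m X^m with b₁,…,b_r ∈ ℤ. The Euler product f(s) = ∏_{p prime} h(p^{−s}) converges absolutely for Re(s) > 1, and f extends meromorphically to the half-plane {s ∈ ℂ : Re(s) > 0}: there exists a function F, meromorphic on {Re(s) > 0}, with F(s) = f(s) whenever Re(s) > 1. -/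
open Finset Polynomial Filter Topology Complex

namespace Est12

lemma mul_divByMonic_of_dvd {p q : Polynomial ℤ} (hq : q.Monic) (h : q ∣ p) :
    q * (p /ₘ q) = p := by
  have h2 := Polynomial.modByMonic_add_div p q
  rwa [(Polynomial.modByMonic_eq_zero_iff_dvd hq).mpr h, zero_add] at h2

/-- `(1 - X^(m+1))^n = 1 - n * X^(m+1) + X^(m+2) * R` -/
lemma pow_one_sub_X_pow (m : ℕ) : ∀ n : ℕ, ∃ R : Polynomial ℤ,
    (1 - X ^ (m + 1)) ^ n = 1 - C (n : ℤ) * X ^ (m + 1) + X ^ (m + 2) * R := by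
  intro n
  induction n with
  | zero => exact ⟨0, by simp⟩
  | succ n ih =>
    obtain ⟨R, hR⟩ := ih
    refine ⟨C (n : ℤ) * X ^ m + R - X ^ (m + 1) * R, ?_⟩
    rw [pow_succ, hR]
    push_cast [Polynomial.C_add, Polynomial.C_1]
    ring

noncomputable def D (h : Polynomial ℤ) : ℕ → ((ℕ → ℕ) × (ℕ → ℕ) × Polynomial ℤ)
  | 0 => (fun _ => 0, fun _ => 0, (h - 1) /ₘ X)
  | (N+1) =>
    let t := D h N
    let c := t.2.2.coeff 0
    let e' := Function.update t.1 (N+1) c.toNat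
    let f' := Function.update t.2.1 (N+1) (-c).toNat
    (e', f',
      (h * ∏ k ∈ Icc 1 (N+1), (1 - X ^ k) ^ (e' k)
        - ∏ k ∈ Icc 1 (N+1), (1 - X ^ k) ^ (f' k)) /ₘ X ^ (N+2))

variable (h : Polynomial ℤ)

noncomputable def eE (N k : ℕ) : ℕ := (D h N).1 k
noncomputable def fE (N k : ℕ) : ℕ := (D h N).2.1 k
noncomputable def QE (N : ℕ) : Polynomial ℤ := (D h N).2.2

noncomputable def AP (N : ℕ) : Polynomial ℤ := ∏ k ∈ Icc 1 N, (1 - X ^ k) ^ (eE h N k)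
noncomputable def BP (N : ℕ) : Polynomial ℤ := ∏ k ∈ Icc 1 N, (1 - X ^ k) ^ (fE h N k)

lemma eE_stable' : ∀ (N M k : ℕ), k ≤ N →
    eE h (N + M) k = eE h N k ∧ fE h (N + M) k = fE h N k := by
  intro N M k hk
  induction M with
  | zero => exact ⟨rfl, rfl⟩
  | succ n ih =>
    have hkn : k ≠ N + n + 1 := by omega
    have hNM : N + (n + 1) = (N + n) + 1 := by omega
    rw [hNM]
    constructor
    · rw [← ih.1]; simp only [eE, D, Function.update_of_ne hkn]
    · rw [← ih.2]; simp only [fE, D, Function.update_of_ne hkn]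

lemma eE_stable {N N' k : ℕ} (hNN' : N ≤ N') (hk : k ≤ N) :
    eE h N' k = eE h N k ∧ fE h N' k = fE h N k := by
  obtain ⟨M, rfl⟩ := Nat.exists_eq_add_of_le hNN'
  exact eE_stable' h N M k hk


lemma eE_succ_top (N : ℕ) : eE h (N+1) (N+1) = ((QE h N).coeff 0).toNat := by
  simp [eE, D, QE]

lemma fE_succ_top (N : ℕ) : fE h (N+1) (N+1) = (-(QE h N).coeff 0).toNat := by
  simp [fE, D, QE]

lemma QE_succ (N : ℕ) : QE h (N+1) = (h * AP h (N+1) - BP h (N+1)) /ₘ X ^ (N+2) := rfl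

lemma BP_coeff_zero (N : ℕ) : (BP h N).coeff 0 = 1 := by
  rw [Polynomial.coeff_zero_eq_eval_zero, BP, Polynomial.eval_prod]
  rw [Finset.prod_eq_one]
  intro k hk
  have : k ≠ 0 := by have := (Finset.mem_Icc.mp hk).1; omega
  simp [this]

lemma AP_succ (N : ℕ) : AP h (N+1) = AP h N * (1 - X^(N+1))^(eE h (N+1) (N+1)) := by
  rw [AP, AP, Finset.prod_Icc_succ_top (by omega : 1 ≤ N + 1)]
  congr 1
  refine Finset.prod_congr rfl fun k hk => ?_
  have hk' : k ≤ N := (Finset.mem_Icc.mp hk).2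
  congr 1
  simp only [eE, D, Function.update_of_ne (by omega : k ≠ N + 1)]

lemma BP_succ (N : ℕ) : BP h (N+1) = BP h N * (1 - X^(N+1))^(fE h (N+1) (N+1)) := by
  rw [BP, BP, Finset.prod_Icc_succ_top (by omega : 1 ≤ N + 1)]
  congr 1
  refine Finset.prod_congr rfl fun k hk => ?_
  have hk' : k ≤ N := (Finset.mem_Icc.mp hk).2
  congr 1
  simp only [fE, D, Function.update_of_ne (by omega : k ≠ N + 1)]

theorem invariant (hh : h.coeff 0 = 1) :
    ∀ N, h * AP h N = BP h N + X ^ (N+1) * QE h N := by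
  intro N
  induction N with
  | zero =>
    have hdvd : X ∣ (h - 1) := by
      rw [Polynomial.X_dvd_iff]
      simp [hh]
    have := mul_divByMonic_of_dvd (Polynomial.monic_X) hdvd
    have hAP : AP h 0 = 1 := by simp [AP]
    have hBP : BP h 0 = 1 := by simp [BP]
    rw [hAP, hBP]
    show h * 1 = 1 + X ^ 1 * ((h - 1) /ₘ X)
    rw [pow_one, this]; ring
  | succ N ih =>
    set c : ℤ := (QE h N).coeff 0 with hc
    obtain ⟨Ra, hRa⟩ := pow_one_sub_X_pow N (eE h (N+1) (N+1))
    obtain ⟨Rb, hRb⟩ := pow_one_sub_X_pow N (fE h (N+1) (N+1))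
    have hab : ((eE h (N+1) (N+1) : ℤ)) = ((fE h (N+1) (N+1) : ℤ)) + c := by
      rw [eE_succ_top, fE_succ_top, ← hc]; omega
    have hCab : (C ((eE h (N+1) (N+1) : ℤ)) : Polynomial ℤ)
        = C ((fE h (N+1) (N+1) : ℤ)) + C c := by rw [← C_add, hab]
    obtain ⟨W, hW⟩ : (X : Polynomial ℤ) ∣ (QE h N - C c * BP h N) := by
      rw [Polynomial.X_dvd_iff]
      simp [BP_coeff_zero, ← hc]
    have key : h * AP h (N+1) - BP h (N+1)
        = X ^ (N+2) * (W + (BP h N * (Ra - Rb)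
            - C ((eE h (N+1) (N+1) : ℤ)) * QE h N * X ^ N + QE h N * X ^ (N+1) * Ra)) := by
      rw [AP_succ, BP_succ, ← mul_assoc, ih, hRa, hRb, hCab]
      have hXW : QE h N - C c * BP h N = X * W := hW
      linear_combination (X : Polynomial ℤ) ^ (N+1) * hXW
    rw [QE_succ, mul_divByMonic_of_dvd (Polynomial.monic_X_pow _) ⟨_, key⟩]
    ring


/-! ### Complex evaluations -/

noncomputable def QC (N : ℕ) (x : ℂ) : ℂ := aeval x (QE h N)
noncomputable def hC (x : ℂ) : ℂ := aeval x h
noncomputable def AC (N : ℕ) (x : ℂ) : ℂ := ∏ k ∈ Icc 1 N, (1 - x ^ k) ^ (eE h N k)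
noncomputable def BC (N : ℕ) (x : ℂ) : ℂ := ∏ k ∈ Icc 1 N, (1 - x ^ k) ^ (fE h N k)
noncomputable def EC (N : ℕ) (x : ℂ) : ℂ := 1 + x ^ (N+1) * QC h N x / BC h N x

lemma aeval_AP (N : ℕ) (x : ℂ) : aeval x (AP h N) = AC h N x := by
  simp [AP, AC, map_prod]

lemma aeval_BP (N : ℕ) (x : ℂ) : aeval x (BP h N) = BC h N x := by
  simp [BP, BC, map_prod]

lemma invariantC (hh : h.coeff 0 = 1) (N : ℕ) (x : ℂ) :
    hC h x * AC h N x = BC h N x + x ^ (N+1) * QC h N x := by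
  have := congrArg (aeval x) (invariant h hh N)
  simpa [map_add, map_mul, map_pow, aeval_AP, aeval_BP, hC, QC] using this

lemma one_sub_pow_ne {x : ℂ} (hx : ‖x‖ < 1) {k : ℕ} (hk : 1 ≤ k) : 1 - x ^ k ≠ 0 := by
  intro hcon
  have h1 : (1:ℂ) = x ^ k := by linear_combination hcon
  have : ‖x ^ k‖ < 1 := by
    rw [norm_pow]
    exact pow_lt_one₀ (norm_nonneg x) hx (by omega)
  rw [← h1] at this
  simp at this

lemma AC_ne {x : ℂ} (hx : ‖x‖ < 1) (N : ℕ) : AC h N x ≠ 0 := by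
  apply Finset.prod_ne_zero_iff.mpr
  intro k hk
  exact pow_ne_zero _ (one_sub_pow_ne (by exact hx) (Finset.mem_Icc.mp hk).1)

lemma BC_ne {x : ℂ} (hx : ‖x‖ < 1) (N : ℕ) : BC h N x ≠ 0 := by
  apply Finset.prod_ne_zero_iff.mpr
  intro k hk
  exact pow_ne_zero _ (one_sub_pow_ne (by exact hx) (Finset.mem_Icc.mp hk).1)

lemma EC_eq (hh : h.coeff 0 = 1) {x : ℂ} (hx : ‖x‖ < 1) (N : ℕ) :
    EC h N x = hC h x * AC h N x / BC h N x := by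
  rw [invariantC h hh, EC]
  field_simp [BC_ne h hx]

lemma EC_zero (hh : h.coeff 0 = 1) (x : ℂ) : EC h 0 x = hC h x := by
  have hBC : BC h 0 x = 1 := by simp [BC]
  have hAC : AC h 0 x = 1 := by simp [AC]
  have hinv := invariantC h hh 0 x
  rw [hBC, hAC, mul_one] at hinv
  rw [EC, hBC, div_one, pow_one, hinv]; ring


lemma AC_cross {N N' : ℕ} (hNN' : N ≤ N') (x : ℂ) :
    AC h N' x = AC h N x * ∏ k ∈ Icc (N+1) N', (1 - x ^ k) ^ (eE h N' k) := by
  rw [AC, AC, show Icc 1 N' = Ioc 0 N' from (Finset.Icc_add_one_left_eq_Ioc 0 N').symm ▸ rfl]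
  rw [show Icc 1 N = Ioc 0 N from (Finset.Icc_add_one_left_eq_Ioc 0 N).symm ▸ rfl]
  rw [show Icc (N+1) N' = Ioc N N' from (Finset.Icc_add_one_left_eq_Ioc N N').symm ▸ rfl]
  rw [← Finset.prod_Ioc_consecutive _ (Nat.zero_le N) hNN']
  congr 1
  refine Finset.prod_congr rfl fun k hk => ?_
  have hk' : k ≤ N := (Finset.mem_Ioc.mp hk).2
  rw [(eE_stable h hNN' hk').1]

lemma BC_cross {N N' : ℕ} (hNN' : N ≤ N') (x : ℂ) :
    BC h N' x = BC h N x * ∏ k ∈ Icc (N+1) N', (1 - x ^ k) ^ (fE h N' k) := by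
  rw [BC, BC, show Icc 1 N' = Ioc 0 N' from (Finset.Icc_add_one_left_eq_Ioc 0 N').symm ▸ rfl]
  rw [show Icc 1 N = Ioc 0 N from (Finset.Icc_add_one_left_eq_Ioc 0 N).symm ▸ rfl]
  rw [show Icc (N+1) N' = Ioc N N' from (Finset.Icc_add_one_left_eq_Ioc N N').symm ▸ rfl]
  rw [← Finset.prod_Ioc_consecutive _ (Nat.zero_le N) hNN']
  congr 1
  refine Finset.prod_congr rfl fun k hk => ?_
  have hk' : k ≤ N := (Finset.mem_Ioc.mp hk).2
  rw [(eE_stable h hNN' hk').2]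

/-- Pointwise comparison of `EC` at two stages. -/
lemma EC_cross (hh : h.coeff 0 = 1) {N N' : ℕ} (hNN' : N ≤ N') {x : ℂ} (hx : ‖x‖ < 1) :
    EC h N x
      = (∏ k ∈ Icc (N+1) N', (1 - x ^ k) ^ ((fE h N' k : ℤ) - (eE h N' k : ℤ))) * EC h N' x := by
  have hne : ∀ k ∈ Icc (N+1) N', (1 - x ^ k) ≠ 0 := fun k hk =>
    one_sub_pow_ne hx (by have := (Finset.mem_Icc.mp hk).1; omega)
  have hsplit : ∀ k ∈ Icc (N+1) N', (1 - x ^ k) ^ ((fE h N' k : ℤ) - (eE h N' k : ℤ))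
      = (1 - x ^ k) ^ (fE h N' k) * ((1 - x ^ k) ^ (eE h N' k))⁻¹ := by
    intro k hk
    rw [zpow_sub₀ (hne k hk), zpow_natCast, zpow_natCast, div_eq_mul_inv]
  rw [Finset.prod_congr rfl hsplit, Finset.prod_mul_distrib]
  set Pe := ∏ k ∈ Icc (N+1) N', (1 - x ^ k) ^ (eE h N' k) with hPe
  set Pf := ∏ k ∈ Icc (N+1) N', (1 - x ^ k) ^ (fE h N' k) with hPf
  have hPe0 : Pe ≠ 0 := Finset.prod_ne_zero_iff.mpr fun k hk => pow_ne_zero _ (hne k hk)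
  have hPf0 : Pf ≠ 0 := Finset.prod_ne_zero_iff.mpr fun k hk => pow_ne_zero _ (hne k hk)
  rw [Finset.prod_inv_distrib]
  rw [EC_eq h hh hx, EC_eq h hh hx, AC_cross h hNN', BC_cross h hNN', ← hPe, ← hPf]
  field_simp [BC_ne h hx]

/-- uniform bound for the tail factor. -/
lemma EC_bound (N : ℕ) : ∃ C : ℝ, 0 ≤ C ∧
    ∀ x : ℂ, ‖x‖ ≤ 1/2 → ‖EC h N x - 1‖ ≤ C * ‖x‖ ^ (N+1) := by
  have hcont : ContinuousOn (fun x : ℂ => QC h N x / BC h N x) (Metric.closedBall 0 (1/2)) := by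
    apply ContinuousOn.div
    · exact (Polynomial.continuous_aeval (QE h N)).continuousOn
    · apply Continuous.continuousOn
      apply continuous_finset_prod
      intro k _
      exact ((continuous_const.sub (continuous_pow k)).pow _)
    · intro x hx
      simp only [Metric.mem_closedBall, Complex.dist_eq, sub_zero] at hx
      exact BC_ne h (lt_of_le_of_lt (by simpa using hx) (by norm_num)) N
  obtain ⟨C, hC⟩ := (isCompact_closedBall (0:ℂ) (1/2)).exists_bound_of_continuousOn hcont
  refine ⟨max C 0, le_max_right _ _, fun x hx => ?_⟩
  have hxball : x ∈ Metric.closedBall (0:ℂ) (1/2) := by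
    simp only [Metric.mem_closedBall, Complex.dist_eq, sub_zero]; simpa using hx
  have h1 : EC h N x - 1 = x ^ (N+1) * (QC h N x / BC h N x) := by
    rw [EC]; ring
  rw [h1, norm_mul, norm_pow, mul_comm]
  gcongr
  exact le_trans (hC x hxball) (le_max_left _ _)

/-- differentiability of `EC` on the unit ball. -/
lemma EC_diff (N : ℕ) : DifferentiableOn ℂ (EC h N) (Metric.ball 0 1) := by
  have hQ : Differentiable ℂ (fun x : ℂ => QC h N x) := by
    have : (fun x : ℂ => QC h N x)
        = fun x : ℂ => Polynomial.eval x ((QE h N).map (algebraMap ℤ ℂ)) := by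
      funext x
      rw [QC, Polynomial.aeval_def, Polynomial.eval_map]
    rw [this]
    exact Polynomial.differentiable _
  have hB : Differentiable ℂ (fun x : ℂ => BC h N x) := by
    apply Differentiable.fun_finsetProd
    intro k _
    exact ((differentiable_const (1:ℂ)).sub (differentiable_pow k)).pow _
  intro x hx
  have hx' : ‖x‖ < 1 := by simpa [Complex.dist_eq] using hx
  apply DifferentiableWithinAt.add (differentiableWithinAt_const 1)
  apply DifferentiableWithinAt.div
  · exact (((differentiable_pow (N+1)).mul hQ).differentiableAt).differentiableWithinAt
  · exact hB.differentiableAt.differentiableWithinAt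
  · exact BC_ne h hx' N


/-! ### Prime-side generalities -/

lemma norm_xp (p : Nat.Primes) (s : ℂ) : ‖((p:ℕ):ℂ) ^ (-s)‖ = ((p:ℕ):ℝ) ^ (-s.re) := by
  rw [← Complex.ofReal_natCast,
    Complex.norm_cpow_eq_rpow_re_of_pos (by exact_mod_cast p.2.pos)]
  simp

lemma xp_pow (p : Nat.Primes) (s : ℂ) (k : ℕ) :
    (((p:ℕ):ℂ) ^ (-s)) ^ k = ((p:ℕ):ℂ) ^ (-((k:ℂ) * s)) := by
  rw [show -((k:ℂ) * s) = (-s) * (k:ℂ) by ring, Complex.cpow_mul_nat]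

lemma finite_bad {σ c : ℝ} (hσ : 0 < σ) (hc : 0 < c) :
    {p : Nat.Primes | ¬ ((p:ℕ):ℝ) ^ (-σ) < c}.Finite := by
  have T0 : Tendsto (fun p : Nat.Primes => ((p:ℕ))) cofinite cofinite :=
    Nat.Primes.coe_nat_injective.tendsto_cofinite
  have T1 : Tendsto (fun p : Nat.Primes => ((p:ℕ):ℝ)) cofinite atTop := by
    refine tendsto_natCast_atTop_atTop.comp ?_
    rwa [← Nat.cofinite_eq_atTop]
  have T2 : Tendsto (fun p : Nat.Primes => ((p:ℕ):ℝ) ^ (-σ)) cofinite (𝓝 0) :=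
    (tendsto_rpow_neg_atTop hσ).comp T1
  have := T2.eventually_lt_const hc
  rwa [Filter.eventually_cofinite] at this

lemma summable_prime_rpow {t : ℝ} (ht : 1 < t) :
    Summable (fun p : Nat.Primes => ((p:ℕ):ℝ) ^ (-t)) :=
  Nat.Primes.summable_rpow.mpr (by linarith)

lemma hasProd_zpow {ι : Type*} {f : ι → ℂ} {a : ℂ} (hf : HasProd f a) (ha : a ≠ 0) (g : ℤ) :
    HasProd (fun i => f i ^ g) (a ^ g) := by
  have hcont : ContinuousAt (fun z : ℂ => z ^ g) a := continuousAt_zpow₀ a g (Or.inl ha)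
  have h2 : Tendsto ((fun z : ℂ => z ^ g) ∘ (fun F : Finset ι => ∏ i ∈ F, f i)) atTop
      (𝓝 (a ^ g)) := hcont.tendsto.comp hf
  have h3 : ∀ F : Finset ι, ((fun z : ℂ => z ^ g) ∘ (fun F : Finset ι => ∏ i ∈ F, f i)) F
      = ∏ i ∈ F, f i ^ g := fun F => (Finset.prod_zpow f F g).symm
  exact Filter.Tendsto.congr h3 h2

lemma euler_zpow {s : ℂ} (hs : 1 < s.re) (g : ℤ) :
    HasProd (fun p : Nat.Primes => (1 - ((p:ℕ):ℂ) ^ (-s)) ^ g) ((riemannZeta s)⁻¹ ^ g) := by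
  have h0 := riemannZeta_eulerProduct_hasProd hs
  have hz := riemannZeta_ne_zero_of_one_lt_re hs
  have h1 := hasProd_zpow h0 hz (-g)
  have e1 : (fun p : Nat.Primes => ((1 - ((p:ℕ):ℂ) ^ (-s))⁻¹) ^ (-g))
      = (fun p : Nat.Primes => (1 - ((p:ℕ):ℂ) ^ (-s)) ^ g) := by
    funext p
    rw [inv_zpow, ← zpow_neg, neg_neg]
  have e2 : (riemannZeta s) ^ (-g) = (riemannZeta s)⁻¹ ^ g := by
    rw [inv_zpow, ← zpow_neg]
  rw [← e1, ← e2]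
  exact h1

lemma hasProd_finset_prod {ι κ : Type*} (K : Finset κ) (f : κ → ι → ℂ) (a : κ → ℂ)
    (hf : ∀ k ∈ K, HasProd (f k) (a k)) :
    HasProd (fun i => ∏ k ∈ K, f k i) (∏ k ∈ K, a k) := by
  classical
  induction K using Finset.induction_on with
  | empty => simpa using hasProd_one
  | insert k K hnotmem ih =>
    have hm := (hf k (Finset.mem_insert_self k K)).mul
      (ih (fun k' hk' => hf k' (Finset.mem_insert_of_mem hk')))
    have e : (fun i => ∏ k' ∈ insert k K, f k' i)
        = (f k * fun i => ∏ k' ∈ K, f k' i) := by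
      funext i
      rw [Finset.prod_insert hnotmem]
      rfl
    rw [Finset.prod_insert hnotmem, e]
    exact hm


lemma ne_zero_of_close {z : ℂ} (hz : ‖z - 1‖ ≤ 1/2) : z ≠ 0 := by
  intro h
  rw [h] at hz
  norm_num at hz

lemma EC_est {N : ℕ} {δ : ℝ} (hδ : 0 < δ) {C : ℝ} (hC0 : 0 ≤ C)
    (hCb : ∀ x : ℂ, ‖x‖ ≤ 1/2 → ‖EC h N x - 1‖ ≤ C * ‖x‖ ^ (N+1))
    {p : Nat.Primes} (hp : ((p:ℕ):ℝ) ^ (-δ) < min (1/2) (1/(2*(C+1))))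
    {s : ℂ} (hs : δ ≤ s.re) :
    ‖EC h N (((p:ℕ):ℂ) ^ (-s)) - 1‖ ≤ C * (((p:ℕ):ℝ) ^ (-δ)) ^ (N+1)
    ∧ ‖EC h N (((p:ℕ):ℂ) ^ (-s)) - 1‖ ≤ 1/2 := by
  have h2p : (1:ℝ) ≤ ((p:ℕ):ℝ) := by exact_mod_cast p.2.one_lt.le
  have hxle : ‖((p:ℕ):ℂ) ^ (-s)‖ ≤ ((p:ℕ):ℝ) ^ (-δ) := by
    rw [norm_xp]
    exact Real.rpow_le_rpow_of_exponent_le h2p (by linarith)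
  have hple : ((p:ℕ):ℝ) ^ (-δ) ≤ 1/2 := le_of_lt (lt_of_lt_of_le hp (min_le_left _ _))
  have hx12 : ‖((p:ℕ):ℂ) ^ (-s)‖ ≤ 1/2 := hxle.trans hple
  have h1 := hCb _ hx12
  have h2 : ‖((p:ℕ):ℂ) ^ (-s)‖ ^ (N+1) ≤ (((p:ℕ):ℝ) ^ (-δ)) ^ (N+1) := by
    gcongr
  have hbd1 : ‖EC h N (((p:ℕ):ℂ) ^ (-s)) - 1‖ ≤ C * (((p:ℕ):ℝ) ^ (-δ)) ^ (N+1) :=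
    h1.trans (by nlinarith [norm_nonneg (EC h N (((p:ℕ):ℂ) ^ (-s)) - 1)])
  refine ⟨hbd1, hbd1.trans ?_⟩
  have ht0 : (0:ℝ) ≤ ((p:ℕ):ℝ) ^ (-δ) := Real.rpow_nonneg (by positivity) _
  have ht1 : (((p:ℕ):ℝ) ^ (-δ)) ^ (N+1) ≤ ((p:ℕ):ℝ) ^ (-δ) :=
    pow_le_of_le_one ht0 (hple.trans (by norm_num)) (by omega)
  have h3 : C * (((p:ℕ):ℝ) ^ (-δ)) ^ (N+1) ≤ C * (1/(2*(C+1))) := by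
    apply mul_le_mul_of_nonneg_left _ hC0
    exact ht1.trans (le_of_lt (lt_of_lt_of_le hp (min_le_right _ _)))
  refine h3.trans ?_
  rw [mul_one_div, div_le_iff₀ (by positivity)]
  nlinarith

lemma one_lt_mul_re {N : ℕ} {s : ℂ} (hs : 1/(N+1:ℝ) < s.re) : 1 < s.re * (N+1) := by
  rw [div_lt_iff₀ (by positivity)] at hs
  linarith

lemma summable_norm_EC {N : ℕ} {s : ℂ} (hs : 1/(N+1:ℝ) < s.re) :
    Summable (fun p : Nat.Primes => ‖EC h N (((p:ℕ):ℂ) ^ (-s)) - 1‖) := by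
  obtain ⟨C, hC0, hCb⟩ := EC_bound h N
  have hσ0 : 0 < s.re := lt_of_le_of_lt (by positivity : (0:ℝ) ≤ 1/(N+1:ℝ)) hs
  have hmin : 0 < min (1/2 : ℝ) (1/(2*(C+1))) := by
    refine lt_min (by norm_num) (by positivity)
  have hfin := finite_bad hσ0 hmin
  rw [← Finset.summable_compl_iff hfin.toFinset]
  have hsum : Summable (fun p : {x : Nat.Primes // x ∉ hfin.toFinset} =>
      C * (((p.1:ℕ):ℝ) ^ (-s.re)) ^ (N+1)) := by
    have hbase : Summable (fun p : Nat.Primes => C * ((p:ℕ):ℝ) ^ (-(s.re * (N+1)))) :=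
      (summable_prime_rpow (one_lt_mul_re hs)).mul_left C
    apply Summable.congr (hbase.subtype _)
    intro p
    show C * ((p.1:ℕ):ℝ) ^ (-(s.re * (N+1))) = C * (((p.1:ℕ):ℝ) ^ (-s.re)) ^ (N+1)
    rw [← Real.rpow_natCast (((p.1:ℕ):ℝ) ^ (-s.re)) (N+1),
      ← Real.rpow_mul (by positivity : (0:ℝ) ≤ ((p.1:ℕ):ℝ))]
    congr 1
    push_cast
    ring
  apply Summable.of_nonneg_of_le (fun _ => norm_nonneg _) _ hsum
  intro p
  have hp : ((p.1:ℕ):ℝ) ^ (-s.re) < min (1/2) (1/(2*(C+1))) := by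
    have := p.2
    simp only [Set.Finite.mem_toFinset, Set.mem_setOf_eq, not_not] at this
    exact this
  exact (EC_est h hσ0 hC0 hCb hp le_rfl).1

lemma multipliable_EC {N : ℕ} {s : ℂ} (hs : 1/(N+1:ℝ) < s.re) :
    Multipliable (fun p : Nat.Primes => EC h N (((p:ℕ):ℂ) ^ (-s))) := by
  obtain ⟨C, hC0, hCb⟩ := EC_bound h N
  have hσ0 : 0 < s.re := lt_of_le_of_lt (by positivity : (0:ℝ) ≤ 1/(N+1:ℝ)) hs
  have hmin : 0 < min (1/2 : ℝ) (1/(2*(C+1))) := by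
    refine lt_min (by norm_num) (by positivity)
  have hfin := finite_bad hσ0 hmin
  set S : Set Nat.Primes := ↑hfin.toFinset with hS
  have hmem : ∀ p : ↑Sᶜ, ((p.1:ℕ):ℝ) ^ (-s.re) < min (1/2) (1/(2*(C+1))) := by
    intro p
    have h2 := p.2
    simp only [hS, Set.mem_compl_iff, Finset.mem_coe, Set.Finite.mem_toFinset,
      Set.mem_setOf_eq, not_not] at h2
    exact h2
  have hhalf : ∀ p : ↑Sᶜ, ‖EC h N (((p.1:ℕ):ℂ) ^ (-s)) - 1‖ ≤ 1/2 := fun p =>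
    (EC_est h hσ0 hC0 hCb (hmem p) le_rfl).2
  have htail : Multipliable ((fun p : Nat.Primes => EC h N (((p:ℕ):ℂ) ^ (-s))) ∘ (↑) :
      ↑Sᶜ → ℂ) := by
    apply Complex.multipliable_of_summable_log
    apply Summable.of_norm
    have hsubsum : Summable (fun p : ↑Sᶜ =>
        (3/2 : ℝ) * ‖EC h N (((p.1:ℕ):ℂ) ^ (-s)) - 1‖) :=
      ((summable_norm_EC h hs).subtype _).mul_left _
    apply Summable.of_nonneg_of_le (fun _ => norm_nonneg _) _ hsubsum
    intro p
    have := Complex.norm_log_one_add_half_le_self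
      (z := EC h N (((p.1:ℕ):ℂ) ^ (-s)) - 1) (by simpa using hhalf p)
    simpa using this
  have hhead : HasProd ((fun p : Nat.Primes => EC h N (((p:ℕ):ℂ) ^ (-s))) ∘ (↑) : ↑S → ℂ)
      (∏ p : ↑S, EC h N (((p.1:ℕ):ℂ) ^ (-s))) := hasProd_fintype _
  exact (hhead.mul_compl htail.hasProd).multipliable


lemma re_mul_nat (k : ℕ) (s : ℂ) : ((k:ℂ) * s).re = k * s.re := by
  simp [Complex.mul_re]

lemma hs_mono {N N' : ℕ} (hNN' : N ≤ N') {s : ℂ} (hs : 1/(N+1:ℝ) < s.re) :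
    1/(N'+1:ℝ) < s.re := by
  refine lt_of_le_of_lt ?_ hs
  apply one_div_le_one_div_of_le (by positivity)
  have : (N:ℝ) ≤ (N':ℝ) := by exact_mod_cast hNN'
  linarith

lemma tprod_EC_cross (hh : h.coeff 0 = 1) {N N' : ℕ} (hNN' : N ≤ N') {s : ℂ}
    (hs : 1/(N+1:ℝ) < s.re) :
    ∏' p : Nat.Primes, EC h N (((p:ℕ):ℂ) ^ (-s))
      = (∏ k ∈ Icc (N+1) N',
          (riemannZeta ((k:ℂ) * s))⁻¹ ^ ((fE h N' k : ℤ) - (eE h N' k : ℤ)))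
        * ∏' p : Nat.Primes, EC h N' (((p:ℕ):ℂ) ^ (-s)) := by
  have hσ0 : 0 < s.re := lt_of_le_of_lt (by positivity : (0:ℝ) ≤ 1/(N+1:ℝ)) hs
  have hs' := hs_mono hNN' hs
  have hfactor : ∀ k ∈ Icc (N+1) N',
      HasProd (fun p : Nat.Primes =>
          (1 - (((p:ℕ):ℂ) ^ (-s)) ^ k) ^ ((fE h N' k : ℤ) - (eE h N' k : ℤ)))
        ((riemannZeta ((k:ℂ) * s))⁻¹ ^ ((fE h N' k : ℤ) - (eE h N' k : ℤ))) := by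
    intro k hk
    have hk1 : N + 1 ≤ k := (Finset.mem_Icc.mp hk).1
    have hre : 1 < ((k:ℂ) * s).re := by
      rw [re_mul_nat]
      have h1 : ((N:ℝ)+1) * s.re ≤ (k:ℝ) * s.re := by
        gcongr
        exact_mod_cast hk1
      have h2 : 1 < ((N:ℝ)+1) * s.re := by
        rw [div_lt_iff₀ (by positivity)] at hs
        linarith
      linarith
    have := euler_zpow hre ((fE h N' k : ℤ) - (eE h N' k : ℤ))
    have heq : (fun p : Nat.Primes => (1 - ((p:ℕ):ℂ) ^ (-((k:ℂ) * s)))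
          ^ ((fE h N' k : ℤ) - (eE h N' k : ℤ)))
        = (fun p : Nat.Primes => (1 - (((p:ℕ):ℂ) ^ (-s)) ^ k)
          ^ ((fE h N' k : ℤ) - (eE h N' k : ℤ))) := by
      funext p
      rw [xp_pow]
    rwa [heq] at this
  have hmain := (hasProd_finset_prod _ _ _ hfactor).mul (multipliable_EC h hs').hasProd
  have hpt : (fun p : Nat.Primes =>
      (∏ k ∈ Icc (N+1) N',
        (1 - (((p:ℕ):ℂ) ^ (-s)) ^ k) ^ ((fE h N' k : ℤ) - (eE h N' k : ℤ)))
        * EC h N' (((p:ℕ):ℂ) ^ (-s)))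
      = (fun p : Nat.Primes => EC h N (((p:ℕ):ℂ) ^ (-s))) := by
    funext p
    have hx : ‖((p:ℕ):ℂ) ^ (-s)‖ < 1 := by
      rw [norm_xp]
      apply Real.rpow_lt_one_of_one_lt_of_neg
      · exact_mod_cast p.2.one_lt
      · linarith
    exact (EC_cross h hh hNN' hx).symm
  rw [hpt] at hmain
  exact hmain.tprod_eq


noncomputable def Fn (N : ℕ) (s : ℂ) : ℂ :=
  (∏ k ∈ Icc 1 N, (riemannZeta ((k:ℂ) * s))⁻¹ ^ ((fE h N k : ℤ) - (eE h N k : ℤ)))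
    * ∏' p : Nat.Primes, EC h N (((p:ℕ):ℂ) ^ (-s))

lemma Fn_cross (hh : h.coeff 0 = 1) {N N' : ℕ} (hNN' : N ≤ N') {s : ℂ}
    (hs : 1/(N+1:ℝ) < s.re) : Fn h N s = Fn h N' s := by
  rw [Fn, Fn, tprod_EC_cross h hh hNN' hs, ← mul_assoc]
  congr 1
  have h1 : ∏ k ∈ Icc 1 N, (riemannZeta ((k:ℂ) * s))⁻¹ ^ ((fE h N k : ℤ) - (eE h N k : ℤ))
      = ∏ k ∈ Icc 1 N, (riemannZeta ((k:ℂ) * s))⁻¹ ^ ((fE h N' k : ℤ) - (eE h N' k : ℤ)) := by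
    refine Finset.prod_congr rfl fun k hk => ?_
    have hk' : k ≤ N := (Finset.mem_Icc.mp hk).2
    rw [(eE_stable h hNN' hk').1, (eE_stable h hNN' hk').2]
  rw [h1, show Icc 1 N = Ioc 0 N from (Finset.Icc_add_one_left_eq_Ioc 0 N).symm ▸ rfl,
    show Icc (N+1) N' = Ioc N N' from (Finset.Icc_add_one_left_eq_Ioc N N').symm ▸ rfl,
    show Icc 1 N' = Ioc 0 N' from (Finset.Icc_add_one_left_eq_Ioc 0 N').symm ▸ rfl]
  exact Finset.prod_Ioc_consecutive _ (Nat.zero_le N) hNN'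

lemma diff_xp (p : Nat.Primes) : Differentiable ℂ (fun s : ℂ => ((p:ℕ):ℂ) ^ (-s)) := by
  apply Differentiable.const_cpow (differentiable_id.neg)
  left
  exact_mod_cast p.2.ne_zero

lemma xp_lt_one {p : Nat.Primes} {s : ℂ} (hs : 0 < s.re) : ‖((p:ℕ):ℂ) ^ (-s)‖ < 1 := by
  rw [norm_xp]
  apply Real.rpow_lt_one_of_one_lt_of_neg
  · exact_mod_cast p.2.one_lt
  · linarith

lemma analyticAt_tprod_EC (N : ℕ) {s₀ : ℂ} (hs₀ : 1/(N+1:ℝ) < s₀.re) :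
    AnalyticAt ℂ (fun s : ℂ => ∏' p : Nat.Primes, EC h N (((p:ℕ):ℂ) ^ (-s))) s₀ := by
  obtain ⟨C, hC0, hCb⟩ := EC_bound h N
  set δ := (1/(N+1:ℝ) + s₀.re)/2 with hδdef
  have hδ1 : 1/(N+1:ℝ) < δ := by rw [hδdef]; linarith
  have hδ2 : δ < s₀.re := by rw [hδdef]; linarith
  have hδ0 : 0 < δ := lt_of_le_of_lt (by positivity : (0:ℝ) ≤ 1/(N+1:ℝ)) hδ1
  set U := {s : ℂ | δ < s.re} with hUdef
  have hUopen : IsOpen U := isOpen_lt continuous_const Complex.continuous_re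
  have hs₀U : s₀ ∈ U := hδ2
  have hUre : ∀ s ∈ U, 1/(N+1:ℝ) < s.re := fun s hs => lt_trans hδ1 hs
  have hmin : 0 < min (1/2 : ℝ) (1/(2*(C+1))) := lt_min (by norm_num) (by positivity)
  have hfin := finite_bad hδ0 hmin
  set S : Set Nat.Primes := ↑hfin.toFinset with hS
  have hmem : ∀ p : ↑Sᶜ, ((p.1:ℕ):ℝ) ^ (-δ) < min (1/2) (1/(2*(C+1))) := by
    intro p
    have h2 := p.2
    simp only [hS, Set.mem_compl_iff, Finset.mem_coe, Set.Finite.mem_toFinset,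
      Set.mem_setOf_eq, not_not] at h2
    exact h2
  have hhalf : ∀ (p : ↑Sᶜ) (s : ℂ), s ∈ U → ‖EC h N (((p.1:ℕ):ℂ) ^ (-s)) - 1‖ ≤ 1/2 :=
    fun p s hs => (EC_est h hδ0 hC0 hCb (hmem p) (le_of_lt hs)).2
  have hbd : ∀ (p : ↑Sᶜ) (s : ℂ), s ∈ U →
      ‖EC h N (((p.1:ℕ):ℂ) ^ (-s)) - 1‖ ≤ C * (((p.1:ℕ):ℝ) ^ (-δ)) ^ (N+1) :=
    fun p s hs => (EC_est h hδ0 hC0 hCb (hmem p) (le_of_lt hs)).1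
  -- summable bound
  have husum : Summable (fun p : ↑Sᶜ => (3/2 : ℝ) * (C * (((p.1:ℕ):ℝ) ^ (-δ)) ^ (N+1))) := by
    have hbase : Summable (fun p : Nat.Primes => ((p:ℕ):ℝ) ^ (-(δ * (N+1)))) :=
      summable_prime_rpow (by rw [div_lt_iff₀ (by positivity)] at hδ1; linarith)
    apply Summable.congr (((hbase.subtype _).mul_left C).mul_left (3/2 : ℝ))
    intro p
    show (3/2:ℝ) * (C * ((p.1:ℕ):ℝ) ^ (-(δ * (N+1))))
        = (3/2:ℝ) * (C * (((p.1:ℕ):ℝ) ^ (-δ)) ^ (N+1))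
    have he : (-(δ * ((N:ℝ)+1))) = (-δ) * (((N+1:ℕ)):ℝ) := by push_cast; ring
    rw [he, Real.rpow_mul (by positivity : (0:ℝ) ≤ ((p.1:ℕ):ℝ)), Real.rpow_natCast]
  -- log-norm bound
  have hlogbd : ∀ (p : ↑Sᶜ) (s : ℂ), s ∈ U →
      ‖Complex.log (EC h N (((p.1:ℕ):ℂ) ^ (-s)))‖
        ≤ (3/2 : ℝ) * (C * (((p.1:ℕ):ℝ) ^ (-δ)) ^ (N+1)) := by
    intro p s hs
    have h1 := Complex.norm_log_one_add_half_le_self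
      (z := EC h N (((p.1:ℕ):ℂ) ^ (-s)) - 1) (by simpa using hhalf p s hs)
    simp only [add_sub_cancel] at h1
    refine h1.trans ?_
    have := hbd p s hs
    nlinarith [norm_nonneg (EC h N (((p.1:ℕ):ℂ) ^ (-s)) - 1)]
  -- each log term is differentiable on U
  have hterm : ∀ p : ↑Sᶜ, DifferentiableOn ℂ
      (fun s : ℂ => Complex.log (EC h N (((p.1:ℕ):ℂ) ^ (-s)))) U := by
    intro p
    intro s hs
    have hx : ‖((p.1:ℕ):ℂ) ^ (-s)‖ < 1 := xp_lt_one (lt_trans hδ0 hs)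
    have hEd : DifferentiableAt ℂ (fun s : ℂ => EC h N (((p.1:ℕ):ℂ) ^ (-s))) s := by
      have h1 : DifferentiableAt ℂ (EC h N) (((p.1:ℕ):ℂ) ^ (-s)) := by
        have := (EC_diff h N) _ (by simpa [Metric.mem_ball, Complex.dist_eq] using hx)
        exact this.differentiableAt (Metric.isOpen_ball.mem_nhds (by
          simpa [Metric.mem_ball, Complex.dist_eq] using hx))
      exact DifferentiableAt.comp (g := EC h N) s h1 ((diff_xp p.1).differentiableAt)
    have hslit : EC h N (((p.1:ℕ):ℂ) ^ (-s)) ∈ Complex.slitPlane := by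
      have := hhalf p s hs
      left
      have h2 : |(EC h N (((p.1:ℕ):ℂ) ^ (-s)) - 1).re| ≤ 1/2 :=
        le_trans (Complex.abs_re_le_norm _) (by simpa using this)
      have h3 : (EC h N (((p.1:ℕ):ℂ) ^ (-s))).re - 1 = (EC h N (((p.1:ℕ):ℂ) ^ (-s)) - 1).re := by
        simp
      have h4 := abs_le.mp h2
      simp only [← h3] at h4
      linarith [h4.1]
    exact ((Complex.differentiableAt_log hslit).comp s hEd).differentiableWithinAt
  -- the tsum is differentiable on U
  have htsum_diff : DifferentiableOn ℂ
      (fun s : ℂ => ∑' p : ↑Sᶜ, Complex.log (EC h N (((p.1:ℕ):ℂ) ^ (-s)))) U := by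
    apply TendstoLocallyUniformlyOn.differentiableOn
      (tendstoUniformlyOn_tsum husum (fun p s hs => hlogbd p s hs)).tendstoLocallyUniformlyOn
      ?_ hUopen
    filter_upwards with F
    exact DifferentiableOn.fun_sum fun p _ => hterm p
  -- head factors
  have hhead_diff : DifferentiableOn ℂ
      (fun s : ℂ => ∏ p : ↑S, EC h N (((p.1:ℕ):ℂ) ^ (-s))) U := by
    apply DifferentiableOn.fun_finsetProd
    intro p _
    intro s hs
    have hx : ‖((p.1:ℕ):ℂ) ^ (-s)‖ < 1 := xp_lt_one (lt_trans hδ0 hs)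
    have h1 : DifferentiableAt ℂ (EC h N) (((p.1:ℕ):ℂ) ^ (-s)) := by
      have := (EC_diff h N) _ (by simpa [Metric.mem_ball, Complex.dist_eq] using hx)
      exact this.differentiableAt (Metric.isOpen_ball.mem_nhds (by
        simpa [Metric.mem_ball, Complex.dist_eq] using hx))
    exact (DifferentiableAt.comp (g := EC h N) s h1 ((diff_xp p.1).differentiableAt)).differentiableWithinAt
  -- the local model g
  set g : ℂ → ℂ := fun s => (∏ p : ↑S, EC h N (((p.1:ℕ):ℂ) ^ (-s)))
      * Complex.exp (∑' p : ↑Sᶜ, Complex.log (EC h N (((p.1:ℕ):ℂ) ^ (-s)))) with hgdef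
  have hgdiff : DifferentiableOn ℂ g U := hhead_diff.mul htsum_diff.cexp
  -- equality on U
  have heq : Set.EqOn (fun s : ℂ => ∏' p : Nat.Primes, EC h N (((p:ℕ):ℂ) ^ (-s))) g U := by
    intro s hs
    have hsre := hUre s hs
    have hlog_summable : Summable (fun p : ↑Sᶜ =>
        Complex.log (EC h N (((p.1:ℕ):ℂ) ^ (-s)))) := by
      apply Summable.of_norm
      exact Summable.of_nonneg_of_le (fun _ => norm_nonneg _)
        (fun p => hlogbd p s hs) husum
    have htail_hasprod : HasProd
        ((fun p : Nat.Primes => EC h N (((p:ℕ):ℂ) ^ (-s))) ∘ (↑) : ↑Sᶜ → ℂ)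
        (∏' p : ↑Sᶜ, EC h N (((p.1:ℕ):ℂ) ^ (-s))) :=
      (Complex.multipliable_of_summable_log hlog_summable).hasProd
    have hcexp : Complex.exp (∑' p : ↑Sᶜ, Complex.log (EC h N (((p.1:ℕ):ℂ) ^ (-s))))
        = ∏' p : ↑Sᶜ, EC h N (((p.1:ℕ):ℂ) ^ (-s)) := by
      have := Complex.cexp_tsum_eq_tprod
        (f := fun (p : ↑Sᶜ) => EC h N (((p.1:ℕ):ℂ) ^ (-s)))
        (fun p => ne_zero_of_close (hhalf p s hs))
        hlog_summable
      exact this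
    have hhead_hasprod : HasProd
        ((fun p : Nat.Primes => EC h N (((p:ℕ):ℂ) ^ (-s))) ∘ (↑) : ↑S → ℂ)
        (∏ p : ↑S, EC h N (((p.1:ℕ):ℂ) ^ (-s))) := hasProd_fintype _
    show ∏' p : Nat.Primes, EC h N (((p:ℕ):ℂ) ^ (-s))
        = (∏ p : ↑S, EC h N (((p.1:ℕ):ℂ) ^ (-s))) * Complex.exp
          (∑' p : ↑Sᶜ, Complex.log (EC h N (((p.1:ℕ):ℂ) ^ (-s))))
    rw [hcexp, ← (Multipliable.tprod_mul_tprod_compl hhead_hasprod.multipliable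
      htail_hasprod.multipliable :
        (∏' x : ↑S, EC h N (((x.1:ℕ):ℂ) ^ (-s))) * ∏' x : ↑Sᶜ, EC h N (((x.1:ℕ):ℂ) ^ (-s))
          = ∏' p : Nat.Primes, EC h N (((p:ℕ):ℂ) ^ (-s)))]
    congr 1
    exact tprod_fintype _
  exact (hgdiff.congr heq).analyticAt (hUopen.mem_nhds hs₀U)


/-! ### Meromorphy of ζ(ks) -/

noncomputable def Zreg : ℂ → ℂ := fun z => riemannZeta z - (z - 1)⁻¹ * (Complex.Gammaℝ z)⁻¹

lemma differentiable_Zreg : Differentiable ℂ Zreg := by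
  intro z
  by_cases hz : z = 1
  · subst hz
    have h0 := HurwitzZeta.differentiableAt_hurwitzZetaEven_sub_one_div (0 : UnitAddCircle)
    have heq : (fun s : ℂ => HurwitzZeta.hurwitzZetaEven 0 s - 1 / (s - 1) / Complex.Gammaℝ s)
        = Zreg := by
      funext s
      rw [HurwitzZeta.hurwitzZetaEven_zero, Zreg]
      ring
    rwa [heq] at h0
  · apply DifferentiableAt.sub (differentiableAt_riemannZeta hz)
    apply DifferentiableAt.mul
    · exact (differentiableAt_id.sub (differentiableAt_const 1)).inv (sub_ne_zero.mpr hz)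
    · exact differentiable_Gammaℝ_inv.differentiableAt

lemma mero_zeta_mul (k : ℕ) (s₀ : ℂ) :
    MeromorphicAt (fun s : ℂ => riemannZeta ((k:ℂ) * s)) s₀ := by
  have hlin : AnalyticAt ℂ (fun s : ℂ => (k:ℂ) * s) s₀ := by
    exact (analyticAt_const.mul analyticAt_id)
  have h1 : AnalyticAt ℂ (fun s : ℂ => Zreg ((k:ℂ) * s)) s₀ :=
    (differentiable_Zreg.analyticAt _).comp hlin
  have h2 : MeromorphicAt (fun s : ℂ => ((k:ℂ) * s - 1)⁻¹) s₀ := by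
    have ha : AnalyticAt ℂ (fun s : ℂ => (k:ℂ) * s - 1) s₀ := hlin.sub analyticAt_const
    exact ha.meromorphicAt.inv
  have h3 : AnalyticAt ℂ (fun s : ℂ => (Complex.Gammaℝ ((k:ℂ) * s))⁻¹) s₀ :=
    (differentiable_Gammaℝ_inv.analyticAt _).comp hlin
  have hsum : MeromorphicAt (fun s : ℂ =>
      Zreg ((k:ℂ) * s) + ((k:ℂ) * s - 1)⁻¹ * (Complex.Gammaℝ ((k:ℂ) * s))⁻¹) s₀ :=
    h1.meromorphicAt.add (h2.mul h3.meromorphicAt)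
  have heq : (fun s : ℂ =>
      Zreg ((k:ℂ) * s) + ((k:ℂ) * s - 1)⁻¹ * (Complex.Gammaℝ ((k:ℂ) * s))⁻¹)
      = (fun s : ℂ => riemannZeta ((k:ℂ) * s)) := by
    funext s
    rw [Zreg]
    ring
  rwa [heq] at hsum

lemma mero_finset_prod {κ : Type*} (K : Finset κ) (f : κ → ℂ → ℂ) (x : ℂ)
    (hf : ∀ k ∈ K, MeromorphicAt (f k) x) :
    MeromorphicAt (fun s => ∏ k ∈ K, f k s) x := by
  classical
  induction K using Finset.induction_on with
  | empty => simpa using (MeromorphicAt.const 1 x)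
  | insert k K hnotmem ih =>
    have e : (fun s => ∏ k' ∈ insert k K, f k' s)
        = (fun s => f k s * ∏ k' ∈ K, f k' s) := by
      funext s
      rw [Finset.prod_insert hnotmem]
    rw [e]
    exact (hf k (Finset.mem_insert_self k K)).mul
      (ih (fun k' hk' => hf k' (Finset.mem_insert_of_mem hk')))

lemma mero_Fn (N : ℕ) {s₀ : ℂ} (hs₀ : 1/(N+1:ℝ) < s₀.re) :
    MeromorphicAt (Fn h N) s₀ := by
  have hz : ∀ k ∈ Icc 1 N, MeromorphicAt
      (fun s : ℂ => (riemannZeta ((k:ℂ) * s))⁻¹ ^ ((fE h N k : ℤ) - (eE h N k : ℤ))) s₀ := by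
    intro k _
    exact ((mero_zeta_mul k s₀).inv).zpow _
  exact (mero_finset_prod _ _ _ hz).mul (analyticAt_tprod_EC h N hs₀).meromorphicAt


/-! ### The global meromorphic extension -/

noncomputable def FF (s : ℂ) : ℂ :=
  if 0 < s.re then Fn h (⌈1/s.re⌉₊) s else 0

lemma ceil_re_bound {s : ℂ} (hs : 0 < s.re) : 1/((⌈1/s.re⌉₊ : ℝ) + 1) < s.re := by
  have h1 : 1/s.re ≤ (⌈1/s.re⌉₊ : ℝ) := Nat.le_ceil _
  rw [div_lt_iff₀ (by positivity)]
  have : 1/s.re * s.re = 1 := by field_simp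
  nlinarith

lemma FF_eq_Fn (hh : h.coeff 0 = 1) {M : ℕ} {s : ℂ} (hs : 0 < s.re)
    (hM : (⌈1/s.re⌉₊ : ℕ) ≤ M) : FF h s = Fn h M s := by
  rw [FF, if_pos hs]
  exact Fn_cross h hh hM (ceil_re_bound hs)

lemma mero_FF (hh : h.coeff 0 = 1) : MeromorphicOn (FF h) {s : ℂ | 0 < s.re} := by
  intro s₀ hs₀
  have hσ0 : 0 < s₀.re := hs₀
  set M : ℕ := ⌈2/s₀.re⌉₊ with hM
  have hs₀M : 1/((M:ℝ)+1) < s₀.re := by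
    have h1 : 2/s₀.re ≤ (M:ℝ) := Nat.le_ceil _
    rw [div_lt_iff₀ (by positivity)]
    have h2 : 2/s₀.re * s₀.re = 2 := by field_simp
    nlinarith
  have hmero : MeromorphicAt (Fn h M) s₀ := mero_Fn h M hs₀M
  apply hmero.congr
  have hball : ∀ s ∈ Metric.ball s₀ (s₀.re/2), Fn h M s = FF h s := by
    intro s hsball
    have hre : s₀.re/2 < s.re := by
      have h1 : ‖s - s₀‖ < s₀.re/2 := by simpa [Complex.dist_eq] using hsball
      have h2 : |(s - s₀).re| ≤ ‖s - s₀‖ := Complex.abs_re_le_norm _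
      have h3 : (s - s₀).re = s.re - s₀.re := by simp
      rw [h3] at h2
      have h4 := abs_lt.mp (lt_of_le_of_lt h2 h1)
      linarith [h4.1]
    have hs : 0 < s.re := lt_trans (by positivity) hre
    have hle : (⌈1/s.re⌉₊ : ℕ) ≤ M := by
      apply Nat.ceil_le_ceil
      rw [div_le_div_iff₀ (by positivity) (by positivity)]
      linarith
    exact (FF_eq_Fn h hh hs hle).symm
  have hnhds : ∀ᶠ s in 𝓝 s₀, Fn h M s = FF h s := by
    filter_upwards [Metric.ball_mem_nhds s₀ (show (0:ℝ) < s₀.re/2 by positivity)] using hball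
  exact hnhds.filter_mono nhdsWithin_le_nhds

lemma FF_eq_of_one_lt (hh : h.coeff 0 = 1) {s : ℂ} (hs : 1 < s.re) :
    FF h s = ∏' p : Nat.Primes, hC h (((p:ℕ):ℂ) ^ (-s)) := by
  have hσ0 : 0 < s.re := lt_trans one_pos hs
  have h0 : Fn h 0 s = FF h s := by
    rw [FF, if_pos hσ0]
    exact Fn_cross h hh (Nat.zero_le _) (by simpa using hs)
  rw [← h0, Fn]
  simp only [Finset.Icc_eq_empty_of_lt (by omega : (1:ℕ) > 0), Finset.prod_empty, one_mul]
  exact tprod_congr fun p => EC_zero h hh _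

end Est12

open Est12 in
/-- Estermann, part (i): for `h(X) = 1 + Σ_{m=1}^r b_m X^m ∈ ℤ[X]`, the
Euler product `f(s) = ∏_p h(p^{−s})` converges absolutely for `Re(s) > 1` and extends
meromorphically to the half-plane `{Re(s) > 0}`. -/
theorem stmt_12 (r : ℕ) (hr : 1 ≤ r) (b : Fin r → ℤ) :
    (∀ s : ℂ, 1 < s.re →
      Summable (fun p : Nat.Primes =>
        ‖∑ m, (b m : ℂ) * (((p : ℕ) : ℂ) ^ (-s)) ^ ((m : ℕ) + 1)‖)) ∧
    ∃ F : ℂ → ℂ, MeromorphicOn F {s : ℂ | 0 < s.re} ∧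
      ∀ s : ℂ, 1 < s.re →
        F s = ∏' p : Nat.Primes,
          (1 + ∑ m, (b m : ℂ) * (((p : ℕ) : ℂ) ^ (-s)) ^ ((m : ℕ) + 1)) := by
  classical
  set hp : Polynomial ℤ := 1 + ∑ m : Fin r, Polynomial.C (b m) * Polynomial.X ^ ((m:ℕ)+1)
    with hhp
  have hh : hp.coeff 0 = 1 := by
    rw [Polynomial.coeff_zero_eq_eval_zero, hhp]
    simp [Polynomial.eval_finset_sum]
  have hCeval : ∀ x : ℂ, hC hp x = 1 + ∑ m, (b m : ℂ) * x ^ ((m:ℕ)+1) := by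
    intro x
    rw [hC, hhp]
    simp [map_sum]
  constructor
  · intro s hs
    have h1 := summable_norm_EC hp (N := 0) (s := s) (by simpa using hs)
    exact h1.congr fun p => by
      congr 1
      rw [EC_zero hp hh, hCeval]
      ring
  · refine ⟨FF hp, mero_FF hp hh, ?_⟩
    intro s hs
    rw [FF_eq_of_one_lt hp hh hs]
    exact tprod_congr fun p => by rw [hCeval]
end

section
/- Let P ∈ ℤ[X] be a polynomial with P(0) = 1 and deg P ≥ 1. If P is not cyclotomic — that is, if P is not equal, as a rational function, to a finite product ∏_{λ∈I}(1 − X^λ)^{γ(λ)} with I ⊆ ℕ≥1 finite and γ(λ) ∈ ℤ — then P has a complex root of modulus strictly less than 1. -/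
open Finset Polynomial

noncomputable section CycloAux

/-- The ring hom `ℤ[X] → ℚ(X)`. -/
def iotaK : Polynomial ℤ →+* RatFunc ℚ :=
  (algebraMap (Polynomial ℚ) (RatFunc ℚ)).comp (Polynomial.mapRingHom (Int.castRingHom ℚ))

lemma iotaK_inj : Function.Injective iotaK := by
  have h1 : Function.Injective (algebraMap (Polynomial ℚ) (RatFunc ℚ)) :=
    IsFractionRing.injective (Polynomial ℚ) (RatFunc ℚ)
  have h2 : Function.Injective (Polynomial.mapRingHom (Int.castRingHom ℚ)) :=
    Polynomial.map_injective (Int.castRingHom ℚ) Int.cast_injective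
  exact h1.comp h2

/-- The generator `1 - X^n` in `ℚ(X)`. -/
def genF (n : ℕ) : RatFunc ℚ := iotaK (1 - Polynomial.X ^ n)

lemma one_sub_X_pow_ne_zero {n : ℕ} (hn : n ≠ 0) :
    (1 - Polynomial.X ^ n : Polynomial ℤ) ≠ 0 := by
  intro h
  have := congrArg (fun p => Polynomial.coeff p 0) h
  simp [Polynomial.coeff_X_pow, Ne.symm hn] at this

lemma genF_ne_zero {n : ℕ} (hn : n ≠ 0) : genF n ≠ 0 :=
  fun hz => one_sub_X_pow_ne_zero hn (iotaK_inj (show iotaK _ = iotaK 0 by rw [map_zero]; exact hz))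

/-- Membership in the multiplicative group generated by the `1 - X^λ`, `λ ≥ 1`. -/
def InG (x : RatFunc ℚ) : Prop :=
  ∃ (I : Finset ℕ) (γ : ℕ → ℤ), (∀ l ∈ I, l ≠ 0) ∧ x = ∏ l ∈ I, genF l ^ (γ l)

lemma InG_one : InG 1 := ⟨∅, fun _ => 0, by simp, by simp⟩

lemma InG_gen {n : ℕ} (hn : n ≠ 0) : InG (genF n) :=
  ⟨{n}, fun _ => 1, by simp [hn], by simp⟩

lemma InG.mul {x y : RatFunc ℚ} (hx : InG x) (hy : InG y) : InG (x * y) := by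
  obtain ⟨I, γ, hI, rfl⟩ := hx
  obtain ⟨J, δ, hJ, rfl⟩ := hy
  classical
  refine ⟨I ∪ J, (fun l => (if l ∈ I then γ l else 0) + (if l ∈ J then δ l else 0)),
    fun l hl => ?_, ?_⟩
  · rcases Finset.mem_union.1 hl with h | h
    exacts [hI l h, hJ l h]
  · have hne : ∀ l ∈ I ∪ J, genF l ≠ 0 := fun l hl => genF_ne_zero (by
      rcases Finset.mem_union.1 hl with h | h
      exacts [hI l h, hJ l h])
    rw [Finset.prod_congr rfl (fun l hl => zpow_add₀ (hne l hl) _ _), Finset.prod_mul_distrib]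
    congr 1
    · rw [← Finset.prod_subset Finset.subset_union_left (fun l _ hl => by simp [hl])]
      exact Finset.prod_congr rfl fun l hl => by simp [hl]
    · rw [← Finset.prod_subset Finset.subset_union_right (fun l _ hl => by simp [hl])]
      exact Finset.prod_congr rfl fun l hl => by simp [hl]

lemma InG.inv {x : RatFunc ℚ} (hx : InG x) : InG x⁻¹ := by
  obtain ⟨I, γ, hI, rfl⟩ := hx
  refine ⟨I, fun l => -(γ l), hI, ?_⟩
  rw [← Finset.prod_inv_distrib]
  exact Finset.prod_congr rfl fun l hl => by rw [zpow_neg]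

lemma InG_prod {s : Finset ℕ} {g : ℕ → RatFunc ℚ} (h : ∀ i ∈ s, InG (g i)) :
    InG (∏ i ∈ s, g i) := by
  classical
  induction s using Finset.induction_on with
  | empty => simpa using InG_one
  | insert _ _ hns ih =>
    rw [Finset.prod_insert hns]
    exact (h _ (Finset.mem_insert_self _ _)).mul
      (ih fun i hi => h i (Finset.mem_insert_of_mem hi))

/-- Sign-corrected cyclotomic polynomials. -/
def hpoly (n : ℕ) : Polynomial ℤ :=
  if n = 1 then 1 - Polynomial.X else Polynomial.cyclotomic n ℤ

lemma hpoly_ne_zero {n : ℕ} (hn : n ≠ 0) : hpoly n ≠ 0 := by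
  unfold hpoly
  split_ifs with h
  · intro h
    have := congrArg (fun p => Polynomial.coeff p 1) h
    simp [Polynomial.coeff_one] at this
  · exact Polynomial.cyclotomic_ne_zero n ℤ

lemma prod_hpoly (n : ℕ) (hn : n ≠ 0) :
    ∏ d ∈ n.divisors, hpoly d = 1 - Polynomial.X ^ n := by
  classical
  have h1 : (1 : ℕ) ∈ n.divisors := Nat.one_mem_divisors.2 hn
  have key : ∏ d ∈ n.divisors, hpoly d
      = (∏ d ∈ n.divisors, (if d = 1 then (-1 : Polynomial ℤ) else 1)) *
        ∏ d ∈ n.divisors, Polynomial.cyclotomic d ℤ := by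
    rw [← Finset.prod_mul_distrib]
    refine Finset.prod_congr rfl fun d _ => ?_
    unfold hpoly
    split_ifs with h
    · subst h; rw [Polynomial.cyclotomic_one]; ring
    · rw [one_mul]
  have hsign : (∏ d ∈ n.divisors, (if d = 1 then (-1 : Polynomial ℤ) else 1)) = -1 := by
    rw [Finset.prod_ite_eq' n.divisors 1 (fun _ => (-1 : Polynomial ℤ))]
    exact if_pos h1
  rw [key, hsign, Polynomial.prod_cyclotomic_eq_X_pow_sub_one (Nat.pos_of_ne_zero hn)]
  ring

lemma InG_hpoly (n : ℕ) (hn : n ≠ 0) : InG (iotaK (hpoly n)) := by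
  induction n using Nat.strong_induction_on with
  | _ n ih =>
  classical
  have hmem : n ∈ n.divisors := Nat.mem_divisors_self n hn
  have hall : ∏ d ∈ n.divisors, iotaK (hpoly d) = genF n := by
    rw [← map_prod, prod_hpoly n hn]; rfl
  have hprod : iotaK (hpoly n) * ∏ d ∈ n.divisors.erase n, iotaK (hpoly d) = genF n := by
    exact (Finset.mul_prod_erase _ _ hmem).trans hall
  have hrest : InG (∏ d ∈ n.divisors.erase n, iotaK (hpoly d)) := by
    refine InG_prod fun d hd => ?_
    have hd' := Finset.mem_erase.1 hd
    have hdvd : d ∣ n := (Nat.mem_divisors.1 hd'.2).1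
    have hdne : d ≠ 0 := by rintro rfl; exact hn (zero_dvd_iff.mp hdvd)
    exact ih d (lt_of_le_of_ne (Nat.le_of_dvd (Nat.pos_of_ne_zero hn) hdvd) hd'.1) hdne
  have hne : (∏ d ∈ n.divisors.erase n, iotaK (hpoly d)) ≠ 0 := by
    refine Finset.prod_ne_zero_iff.2 fun d hd => ?_
    have hd' := Finset.mem_erase.1 hd
    have hdvd : d ∣ n := (Nat.mem_divisors.1 hd'.2).1
    have hdne : d ≠ 0 := by rintro rfl; exact hn (zero_dvd_iff.mp hdvd)
    exact fun hz => hpoly_ne_zero hdne (iotaK_inj (by simpa using hz))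
  have : iotaK (hpoly n) = genF n * (∏ d ∈ n.divisors.erase n, iotaK (hpoly d))⁻¹ := by
    field_simp
    linear_combination hprod
  rw [this]
  exact (InG_gen hn).mul hrest.inv

end CycloAux

/-- A one-variable integer polynomial (with constant term `1`) is cyclotomic in the sense
of Estermann if, as a rational function, it equals a finite product
`∏_{λ∈I}(1 − X^λ)^{γ(λ)}` with `I ⊆ ℕ≥1` finite and `γ(λ) ∈ ℤ`; equivalently, clearing
the negative exponents, if
`P·∏_{γ(λ)<0}(1−X^λ)^{−γ(λ)} = ∏_{γ(λ)≥0}(1−X^λ)^{γ(λ)}` as polynomials. -/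
def IsCycloOne (P : Polynomial ℤ) : Prop :=
  ∃ (I : Finset ℕ) (γ : ℕ → ℤ), (∀ lam ∈ I, lam ≠ 0) ∧
    P * ∏ lam ∈ I.filter (fun lam => γ lam < 0),
          ((1 : Polynomial ℤ) - Polynomial.X ^ lam) ^ (-(γ lam)).toNat
      = ∏ lam ∈ I.filter (fun lam => 0 ≤ γ lam),
          ((1 : Polynomial ℤ) - Polynomial.X ^ lam) ^ (γ lam).toNat

lemma isCycloOne_of_InG {P : Polynomial ℤ} (h : InG (iotaK P)) : IsCycloOne P := by
  classical
  obtain ⟨I, γ, hI, hEq⟩ := h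
  refine ⟨I, γ, hI, iotaK_inj ?_⟩
  have hne : ∀ l ∈ I, genF l ≠ 0 := fun l hl => genF_ne_zero (hI l hl)
  rw [map_mul, map_prod, map_prod, hEq]
  have h1 : ∀ l ∈ I.filter (fun l => γ l < 0),
      iotaK (((1 : Polynomial ℤ) - Polynomial.X ^ l) ^ (-(γ l)).toNat) = genF l ^ (-(γ l)) := by
    intro l hl
    obtain ⟨hlI, hlneg⟩ := Finset.mem_filter.1 hl
    rw [map_pow, ← zpow_natCast, Int.toNat_of_nonneg (by omega)]
    rfl
  have h2 : ∀ l ∈ I.filter (fun l => 0 ≤ γ l),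
      iotaK (((1 : Polynomial ℤ) - Polynomial.X ^ l) ^ (γ l).toNat) = genF l ^ (γ l) := by
    intro l hl
    obtain ⟨hlI, hlpos⟩ := Finset.mem_filter.1 hl
    rw [map_pow, ← zpow_natCast, Int.toNat_of_nonneg hlpos]
    rfl
  rw [Finset.prod_congr rfl h1, Finset.prod_congr rfl h2]
  have hfilt : I.filter (fun l => ¬ γ l < 0) = I.filter (fun l => 0 ≤ γ l) := by
    simp [not_lt]
  rw [← Finset.prod_filter_mul_prod_filter_not I (fun l => γ l < 0) (fun l => genF l ^ γ l),
    hfilt, mul_right_comm, ← Finset.prod_mul_distrib]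
  have hone : ∏ l ∈ I.filter (fun l => γ l < 0), (genF l ^ γ l * genF l ^ (-(γ l))) = 1 := by
    refine Finset.prod_eq_one fun l hl => ?_
    have h := hne l (Finset.mem_filter.1 hl).1
    rw [zpow_neg, mul_inv_cancel₀ (zpow_ne_zero _ h)]
  rw [hone, one_mul]


section Analytic

open Complex

lemma aeval_root_iff {Q : Polynomial ℤ} (z : ℂ) :
    (Q.map (Int.castRingHom ℂ)).IsRoot z ↔ Polynomial.aeval z Q = 0 := by
  rw [Polynomial.IsRoot, Polynomial.eval_map, Polynomial.aeval_def]
  rfl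

lemma mult_one_le_prod (s : Multiset ℝ) (h : ∀ x ∈ s, (1:ℝ) ≤ x) : 1 ≤ s.prod := by
  induction s using Multiset.induction_on with
  | empty => simp
  | cons a s ih =>
    rw [Multiset.prod_cons]
    have ha := h a (Multiset.mem_cons_self a s)
    have hs := ih (fun x hx => h x (Multiset.mem_cons_of_mem hx))
    nlinarith

lemma mult_single_le_prod {s : Multiset ℝ} (h : ∀ x ∈ s, (1:ℝ) ≤ x) {x} (hx : x ∈ s) :
    x ≤ s.prod := by
  have hc := Multiset.cons_erase hx
  rw [← hc, Multiset.prod_cons]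
  have h1 := mult_one_le_prod (s.erase x) (fun y hy => h y (Multiset.mem_of_mem_erase hy))
  have hx1 := h x hx
  nlinarith

lemma roots_norm_one {P : Polynomial ℤ} (h0 : P.coeff 0 = 1)
    (hbig : ∀ z : ℂ, Polynomial.aeval z P = 0 → 1 ≤ ‖z‖) :
    (∀ z : ℂ, Polynomial.aeval z P = 0 → ‖z‖ = 1) ∧
      (P.leadingCoeff = 1 ∨ P.leadingCoeff = -1) := by
  have hPne : P ≠ 0 := fun h => by simp [h] at h0
  set Pc := P.map (Int.castRingHom ℂ) with hPc
  have hPcne : Pc ≠ 0 := fun h => hPne (Polynomial.map_injective _ Int.cast_injective (by simpa using h))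
  have hsplit : Pc = Polynomial.C Pc.leadingCoeff *
      (Pc.roots.map fun a => Polynomial.X - Polynomial.C a).prod :=
    (IsAlgClosed.splits Pc).eq_prod_roots
  have heval : (1 : ℂ) = Pc.leadingCoeff * (Pc.roots.map fun a => -a).prod := by
    have h1 : Pc.eval 0 = 1 := by
      rw [Polynomial.eval_map, Polynomial.eval₂_at_zero, h0]; simp
    calc (1:ℂ) = Pc.eval 0 := h1.symm
    _ = Pc.leadingCoeff * (Pc.roots.map fun a => -a).prod := by
        conv_lhs => rw [hsplit]
        rw [Polynomial.eval_mul, Polynomial.eval_C, Polynomial.eval_multiset_prod,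
          Multiset.map_map]
        congr 1
        exact congrArg Multiset.prod (Multiset.map_congr rfl fun a _ => by simp)
  have hnorm1 : (1 : ℝ) = ‖Pc.leadingCoeff‖ * (Pc.roots.map fun a => ‖a‖).prod := by
    have := congrArg (normHom : ℂ →*₀ ℝ) heval
    rw [map_one, map_mul, map_multiset_prod, Multiset.map_map] at this
    rw [this, normHom_apply]
    congr 2
    · ext a; simp
  have hroots_ge : ∀ r ∈ (Pc.roots.map fun a => ‖a‖), (1:ℝ) ≤ r := by
    intro r hr
    obtain ⟨a, ha, rfl⟩ := Multiset.mem_map.1 hr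
    exact hbig a ((aeval_root_iff a).1 (Polynomial.isRoot_of_mem_roots ha))
  have hlcnorm : (1 : ℝ) ≤ ‖Pc.leadingCoeff‖ := by
    have hlc : Pc.leadingCoeff = ((P.leadingCoeff : ℤ) : ℂ) := by
      rw [hPc, Polynomial.leadingCoeff_map_of_injective Int.cast_injective P]
      rfl
    rw [hlc]
    have h1 : (1:ℤ) ≤ |P.leadingCoeff| := Int.one_le_abs (by
      simpa [Polynomial.leadingCoeff_eq_zero] using hPne)
    calc (1:ℝ) ≤ |((P.leadingCoeff : ℝ))| := by exact_mod_cast h1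
    _ = ‖((P.leadingCoeff : ℤ) : ℂ)‖ := by
        rw [Complex.norm_intCast]
  have hprod_ge : (1:ℝ) ≤ (Pc.roots.map fun a => ‖a‖).prod :=
    mult_one_le_prod _ hroots_ge
  have hlc_eq : ‖Pc.leadingCoeff‖ = 1 := by nlinarith
  have hprod_eq : (Pc.roots.map fun a => ‖a‖).prod = 1 := by nlinarith
  constructor
  · intro z hz
    have hzmem : z ∈ Pc.roots := by
      rw [Polynomial.mem_roots hPcne]
      exact (aeval_root_iff z).2 hz
    have hle : ‖z‖ ≤ (Pc.roots.map fun a => ‖a‖).prod :=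
      mult_single_le_prod hroots_ge (Multiset.mem_map_of_mem _ hzmem)
    have hge := hbig z hz
    rw [hprod_eq] at hle
    linarith
  · have hlc : Pc.leadingCoeff = ((P.leadingCoeff : ℤ) : ℂ) := by
      rw [hPc, Polynomial.leadingCoeff_map_of_injective Int.cast_injective P]
      rfl
    rw [hlc, Complex.norm_intCast] at hlc_eq
    have : |P.leadingCoeff| = 1 := by exact_mod_cast hlc_eq
    rcases abs_eq (by norm_num : (0:ℤ) ≤ 1) |>.1 this with h | h
    · exact Or.inl h
    · exact Or.inr h

end Analytic

section Kronecker

open IntermediateField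

lemma root_pow_eq_one {P : Polynomial ℤ} (hm : P.Monic)
    (hnorm : ∀ w : ℂ, Polynomial.aeval w P = 0 → ‖w‖ = 1)
    {z : ℂ} (hz : Polynomial.aeval z P = 0) : ∃ k : ℕ, k ≠ 0 ∧ z ^ k = 1 := by
  have hzint : IsIntegral ℤ z := ⟨P, hm, by rwa [← Polynomial.aeval_def]⟩
  have hzq : IsIntegral ℚ z := hzint.tower_top
  let K : IntermediateField ℚ ℂ := ℚ⟮z⟯
  haveI : FiniteDimensional ℚ K := IntermediateField.adjoin.finiteDimensional hzq
  haveI : NumberField K := ⟨⟩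
  set x : K := ⟨z, IntermediateField.mem_adjoin_simple_self ℚ z⟩ with hx_def
  have halg : algebraMap K ℂ x = z := rfl
  have hinj : Function.Injective (algebraMap K ℂ) := (algebraMap K ℂ).injective
  have haevalx : Polynomial.aeval x P = 0 := by
    apply hinj
    rw [map_zero]
    have h2 := Polynomial.aeval_algHom_apply (algebraMap ↥K ℂ).toIntAlgHom x P
    exact h2.symm.trans hz
  have hxint : IsIntegral ℤ x :=
    (isIntegral_algebraMap_iff hinj).1 (by rwa [halg])
  have hx : ∀ φ : K →+* ℂ, ‖φ x‖ = 1 := by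
    intro φ
    apply hnorm
    have h3 := Polynomial.aeval_algHom_apply φ.toIntAlgHom x P
    exact h3.trans (by rw [haevalx]; exact map_zero _)
  obtain ⟨n, hn, hxn⟩ := NumberField.Embeddings.pow_eq_one_of_norm_eq_one K ℂ hxint hx
  refine ⟨n, hn.ne', ?_⟩
  rw [← halg, ← map_pow, hxn, map_one]

end Kronecker

section MainInduction

lemma InG_of_roots_of_unity : ∀ N : ℕ, ∀ Q : Polynomial ℤ, Q.natDegree ≤ N → Q.coeff 0 = 1 →
    (∀ z : ℂ, Polynomial.aeval z Q = 0 → ∃ k : ℕ, k ≠ 0 ∧ z ^ k = 1) → InG (iotaK Q) := by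
  intro N
  induction N with
  | zero =>
    intro Q hdeg h0 _
    have h : Q = 1 := by
      rw [Polynomial.eq_C_of_natDegree_eq_zero (Nat.le_zero.1 hdeg), h0]
      simp
    rw [h, map_one]
    exact InG_one
  | succ N ih =>
    intro Q hdeg h0 hroots
    by_cases hQ0 : Q.natDegree = 0
    · have h : Q = 1 := by
        rw [Polynomial.eq_C_of_natDegree_eq_zero hQ0, h0]; simp
      rw [h, map_one]
      exact InG_one
    · have hQne : Q ≠ 0 := fun h => by simp [h] at h0
      have hdegc : (Q.map (Int.castRingHom ℂ)).natDegree = Q.natDegree :=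
        Polynomial.natDegree_map_eq_of_injective Int.cast_injective Q
      have hdpos : 0 < (Q.map (Int.castRingHom ℂ)).degree :=
        Polynomial.natDegree_pos_iff_degree_pos.1
          (by rw [hdegc]; exact Nat.pos_of_ne_zero hQ0)
      obtain ⟨z, hzroot⟩ := Complex.exists_root hdpos
      have hz : Polynomial.aeval z Q = 0 := (aeval_root_iff z).1 hzroot
      obtain ⟨k, hk, hzk⟩ := hroots z hz
      have hfin : IsOfFinOrder z :=
        isOfFinOrder_iff_pow_eq_one.2 ⟨k, Nat.pos_of_ne_zero hk, hzk⟩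
      set d := orderOf z with hd_def
      have hd : d ≠ 0 := (orderOf_pos_iff.2 hfin).ne'
      have hprim : IsPrimitiveRoot z d := IsPrimitiveRoot.orderOf z
      have hmin : Polynomial.cyclotomic d ℚ = minpoly ℚ z :=
        Polynomial.cyclotomic_eq_minpoly_rat hprim (Nat.pos_of_ne_zero hd)
      have hdvdQ : Polynomial.cyclotomic d ℤ ∣ Q := by
        have h1 : minpoly ℚ z ∣ Q.map (Int.castRingHom ℚ) := by
          apply minpoly.dvd ℚ z
          rw [show Int.castRingHom ℚ = algebraMap ℤ ℚ from rfl,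
            Polynomial.aeval_map_algebraMap]
          exact hz
        rw [← hmin, ← Polynomial.map_cyclotomic_int d ℚ] at h1
        exact (Polynomial.map_dvd_map (Int.castRingHom ℚ) Int.cast_injective
          (Polynomial.cyclotomic.monic d ℤ)).1 h1
      obtain ⟨R, hR⟩ := hdvdQ
      rcases eq_or_ne d 1 with hd1 | hd1
      · -- d = 1 : Q = (1 - X) * (-R)
        rw [hd1, Polynomial.cyclotomic_one] at hR
        have hR' : Q = (1 - Polynomial.X) * (-R) := by rw [hR]; ring
        have hcoeff : (-R).coeff 0 = 1 := by
          have := h0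
          rw [hR', Polynomial.mul_coeff_zero] at this
          simpa using this
        have hRne : (-R) ≠ 0 := fun h => by simp [h] at hcoeff
        have h1Xne : (1 - Polynomial.X : Polynomial ℤ) ≠ 0 := by
          simpa using one_sub_X_pow_ne_zero (n := 1) one_ne_zero
        have hdegR : (-R).natDegree ≤ N := by
          have h1 : Q.natDegree = (1 - Polynomial.X : Polynomial ℤ).natDegree + (-R).natDegree := by
            rw [hR']; exact Polynomial.natDegree_mul h1Xne hRne
          have h2 : (1 - Polynomial.X : Polynomial ℤ).natDegree = 1 := by
            compute_degree!
          omega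
        have hrootsR : ∀ w : ℂ, Polynomial.aeval w (-R) = 0 → ∃ k : ℕ, k ≠ 0 ∧ w ^ k = 1 := by
          intro w hw
          apply hroots
          rw [hR', map_mul, hw, mul_zero]
        have hInGR := ih (-R) hdegR hcoeff hrootsR
        have hsplit : iotaK Q = genF 1 * iotaK (-R) := by
          rw [hR', map_mul]
          congr 2
          rw [pow_one]
        rw [hsplit]
        exact (InG_gen one_ne_zero).mul hInGR
      · have h2d : 2 ≤ d := by omega
        have hcoeff : R.coeff 0 = 1 := by
          have h := h0
          rw [hR, Polynomial.mul_coeff_zero,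
            Polynomial.cyclotomic_coeff_zero ℤ (by omega : 1 < d), one_mul] at h
          exact h
        have hRne : R ≠ 0 := fun h => by simp [h] at hcoeff
        have hcycne : Polynomial.cyclotomic d ℤ ≠ 0 := Polynomial.cyclotomic_ne_zero d ℤ
        have hdegR : R.natDegree ≤ N := by
          have h1 : Q.natDegree = (Polynomial.cyclotomic d ℤ).natDegree + R.natDegree := by
            rw [hR]; exact Polynomial.natDegree_mul hcycne hRne
          have h2 : (Polynomial.cyclotomic d ℤ).natDegree = d.totient :=
            Polynomial.natDegree_cyclotomic d ℤ
          have h3 : 0 < d.totient := Nat.totient_pos.2 (Nat.pos_of_ne_zero hd)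
          omega
        have hrootsR : ∀ w : ℂ, Polynomial.aeval w R = 0 → ∃ k : ℕ, k ≠ 0 ∧ w ^ k = 1 := by
          intro w hw
          apply hroots
          rw [hR, map_mul, hw, mul_zero]
        have hInGR := ih R hdegR hcoeff hrootsR
        have hcyc : InG (iotaK (Polynomial.cyclotomic d ℤ)) := by
          have h := InG_hpoly d hd
          rwa [hpoly, if_neg hd1] at h
        rw [hR, map_mul]
        exact hcyc.mul hInGR

end MainInduction


/-- a non-cyclotomic polynomial `P ∈ ℤ[X]` with `P(0) = 1` and
`deg P ≥ 1` has a complex root of modulus strictly less than `1`. -/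
theorem stmt_15 (P : Polynomial ℤ) (h0 : P.coeff 0 = 1) (hdeg : 1 ≤ P.natDegree)
    (hnc : ¬ IsCycloOne P) :
    ∃ z : ℂ, Polynomial.aeval z P = 0 ∧ ‖z‖ < 1 := by
  by_contra hno
  push_neg at hno
  obtain ⟨hnorm, hlc⟩ := roots_norm_one h0 hno
  have hroots : ∀ z : ℂ, Polynomial.aeval z P = 0 → ∃ k : ℕ, k ≠ 0 ∧ z ^ k = 1 := by
    intro z hz
    rcases hlc with h | h
    · exact root_pow_eq_one h hnorm hz
    · have hm : (-P).Monic := by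
        unfold Polynomial.Monic
        rw [Polynomial.leadingCoeff_neg, h, neg_neg]
      have hnorm' : ∀ w : ℂ, Polynomial.aeval w (-P) = 0 → ‖w‖ = 1 := by
        intro w hw
        apply hnorm
        rw [map_neg, neg_eq_zero] at hw
        exact hw
      exact root_pow_eq_one hm hnorm' (by rw [map_neg, hz, neg_zero])
  exact hnc (isCycloOne_of_InG (InG_of_roots_of_unity P.natDegree P le_rfl h0 hroots))
end
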